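/- arXiv:1412.1911 — 8 statements merged into one kernel-verified Lean document; each statement's English description precedes it below -/
import Mathlib

section
/- Suppose ∇g(y^k) − ∇g(y^{k−1}) = W(y^k − y^{k−1}) for a self-adjoint positive semidefinite operator W on Y with Σ̂_g − W ⪰ 0, that (1/2)Σ̂_g + T ⪰ 0, and that the two subgradient optimality inequalities hold: for all y ∈ Y, q(y) ≥ q(y^{k+1}) + ⟨y^{k+1} − y, ∇g(y^k) + B z̃^{k+1} + (Σ̂_g + T)(y^{k+1} − y^k)⟩ and q(y) ≥ q(y^k) + ⟨y^k − y, ∇g(y^{k−1}) + B z̃^k + (Σ̂_g + T)(y^k − y^{k−1})⟩. Then 2⟨y^k − y^{k+1}, B z̃^{k+1} − B z̃^k⟩ ≥ ‖y^{k+1} − y^k‖²_{Σ̂_g+T} − ‖y^k − y^{k−1}‖²_{Σ̂_g+T}. -/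
open scoped RealInnerProductSpace

set_option maxHeartbeats 1000000 in
theorem stmt3 {Y Z : Type*}
    [NormedAddCommGroup Y] [InnerProductSpace ℝ Y] [FiniteDimensional ℝ Y]
    [NormedAddCommGroup Z] [InnerProductSpace ℝ Z] [FiniteDimensional ℝ Z]
    (B : Z →ₗ[ℝ] Y)
    (q : Y → EReal) (hq_proper : ∃ y, q y ≠ ⊤) (hq_nebot : ∀ y, q y ≠ ⊥)
    (hq_convex : ∀ (y y' : Y) (t : ℝ), 0 ≤ t → t ≤ 1 →
      q (t • y + (1 - t) • y') ≤ ((t : ℝ) : EReal) * q y + (((1 - t : ℝ)) : EReal) * q y')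
    (g : Y → ℝ) (g' : Y → Y) (hg : ∀ y, HasGradientAt g (g' y) y)
    (hgc : ConvexOn ℝ Set.univ g)
    (Sgh T W : Y →ₗ[ℝ] Y)
    (hSgh_sym : ∀ u v : Y, ⟪Sgh u, v⟫ = ⟪u, Sgh v⟫) (hSgh_psd : ∀ u : Y, 0 ≤ ⟪u, Sgh u⟫)
    (hT_sym : ∀ u v : Y, ⟪T u, v⟫ = ⟪u, T v⟫)
    (hW_sym : ∀ u v : Y, ⟪W u, v⟫ = ⟪u, W v⟫) (hW_psd : ∀ u : Y, 0 ≤ ⟪u, W u⟫)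
    (hWle : ∀ u : Y, 0 ≤ ⟪u, Sgh u - W u⟫)
    (hhalf : ∀ u : Y, 0 ≤ ⟪u, (1/2 : ℝ) • Sgh u + T u⟫)
    (ym1 y0 y1 : Y) (zt0 zt1 : Z)
    (hdm1 : q ym1 ≠ ⊤) (hd0 : q y0 ≠ ⊤) (hd1 : q y1 ≠ ⊤)
    (hmv : g' y0 - g' ym1 = W (y0 - ym1))
    (hopt1 : ∀ y : Y,
      q y1 + ((⟪y1 - y, g' y0 + B zt1 + (Sgh (y1 - y0) + T (y1 - y0))⟫ : ℝ) : EReal) ≤ q y)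
    (hopt0 : ∀ y : Y,
      q y0 + ((⟪y0 - y, g' ym1 + B zt0 + (Sgh (y0 - ym1) + T (y0 - ym1))⟫ : ℝ) : EReal) ≤ q y) :
    ⟪y1 - y0, Sgh (y1 - y0) + T (y1 - y0)⟫ - ⟪y0 - ym1, Sgh (y0 - ym1) + T (y0 - ym1)⟫
      ≤ 2 * ⟪y0 - y1, B zt1 - B zt0⟫ := by
  have hq1 : q y1 = ((q y1).toReal : EReal) := (EReal.coe_toReal hd1 (hq_nebot y1)).symm
  have hq0 : q y0 = ((q y0).toReal : EReal) := (EReal.coe_toReal hd0 (hq_nebot y0)).symm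
  set r1 := (q y1).toReal
  set r0 := (q y0).toReal
  have H1 := hopt1 y0
  have H0 := hopt0 y1
  rw [hq1, hq0, ← EReal.coe_add, EReal.coe_le_coe_iff] at H1
  rw [hq0, hq1, ← EReal.coe_add, EReal.coe_le_coe_iff] at H0
  set a := y1 - y0 with ha
  set b := y0 - ym1 with hb
  have hneg : y0 - y1 = -a := by rw [ha, neg_sub]
  rw [hneg] at H0
  have hsum : ⟪a, g' y0 + B zt1 + (Sgh a + T a)⟫
      + ⟪-a, g' ym1 + B zt0 + (Sgh b + T b)⟫ ≤ 0 := by linarith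
  have hmv' : g' y0 = g' ym1 + W b := by
    rw [← hmv]; abel
  rw [hmv'] at hsum
  rw [hneg]
  -- symmetry facts
  have sS : ⟪b, Sgh a⟫ = ⟪a, Sgh b⟫ := by rw [real_inner_comm, hSgh_sym]
  have sT : ⟪b, T a⟫ = ⟪a, T b⟫ := by rw [real_inner_comm, hT_sym]
  have sW : ⟪b, W a⟫ = ⟪a, W b⟫ := by rw [real_inner_comm, hW_sym]
  have h1 := hW_psd (a + b)
  have h2 := hWle (a - b)
  have h3 := hhalf (a - b)
  simp only [map_add, map_sub, inner_add_left, inner_add_right, inner_sub_left,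
    inner_sub_right, inner_neg_left, inner_smul_right] at h1 h2 h3 hsum ⊢
  linarith
end

section
/- Assume (1/2)Σ̂_g + T ⪰ 0 and assume the mean-value hypothesis. Then for every k ≥ 1: (1−τ)σ‖r^{k+1}‖² + σ‖A*x^{k+1} + B*y^k − c‖² ≥ max(1−τ, 1−τ⁻¹)σ(‖r^{k+1}‖² − ‖r^k‖²) + (ξ_{k+1} − ξ_k) + min(τ, 1+τ−τ²)σ(τ⁻¹‖r^{k+1}‖² + ‖B*(y^{k+1} − y^k)‖²). -/
open scoped RealInnerProductSpace

lemma arith_lemma4 (σ τ R1 R0 U S2 ξ1 ξ0 ir1 ir0 : ℝ) (hσ : 0 < σ) (hτ : 0 < τ)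
    (hstar : σ*ir1 + (τ-1)*σ*ir0 ≤ (1/2)*ξ0 - (1/2)*ξ1)
    (hS : S2 = R1 - 2*ir1 + U)
    (hc1 : 2*ir0 ≤ U + R0)
    (hc2 : 0 ≤ τ^2*U + 2*(τ*ir0) + R0) :
    max (1-τ) (1-τ⁻¹) * σ * (R1 - R0) + (ξ1 - ξ0)
      + min τ (1+τ-τ^2) * σ * (τ⁻¹*R1 + U) ≤ (1-τ)*σ*R1 + σ*S2 := by
  have htt : τ * τ⁻¹ = 1 := mul_inv_cancel₀ (ne_of_gt hτ)
  rcases le_total τ 1 with h1 | h1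
  · have hinv : τ ≤ τ⁻¹ := by nlinarith [inv_pos.2 hτ]
    have hmax : max (1-τ) (1-τ⁻¹) = 1-τ := max_eq_left (by linarith)
    have hmin : min τ (1+τ-τ^2) = τ := min_eq_left (by nlinarith)
    rw [hmax, hmin]
    have e1 : τ * σ * (τ⁻¹*R1 + U) = σ*R1 + τ*σ*U := by field_simp
    rw [e1]
    have key : (1-τ)*σ*(2*ir0) ≤ (1-τ)*σ*(U+R0) :=
      mul_le_mul_of_nonneg_left hc1 (mul_nonneg (by linarith) hσ.le)
    nlinarith [hstar, key]
  · have hinv : τ⁻¹ ≤ τ := by nlinarith [inv_pos.2 hτ]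
    have hmax : max (1-τ) (1-τ⁻¹) = 1-τ⁻¹ := max_eq_right (by linarith)
    have hmin : min τ (1+τ-τ^2) = 1+τ-τ^2 := min_eq_right (by nlinarith)
    rw [hmax, hmin]
    have e1 : (1+τ-τ^2) * σ * (τ⁻¹*R1 + U) = (τ⁻¹ + 1 - τ)*σ*R1 + (1+τ-τ^2)*σ*U := by
      field_simp
    rw [e1]
    have hfac : 0 ≤ τ*U + 2*ir0 + τ⁻¹*R0 := by
      have h := mul_nonneg (inv_nonneg.2 hτ.le) hc2
      have e : τ⁻¹ * (τ^2*U + 2*(τ*ir0) + R0) = τ*U + 2*ir0 + τ⁻¹*R0 := by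
        field_simp
      linarith [e ▸ h]
    have key2 : 0 ≤ (τ-1)*σ*(τ*U + 2*ir0 + τ⁻¹*R0) :=
      mul_nonneg (mul_nonneg (by linarith) hσ.le) hfac
    have heq : (τ-1)*σ*(τ⁻¹*R0) = σ*R0 - τ⁻¹*σ*R0 := by field_simp
    nlinarith [hstar, key2, heq]


set_option maxHeartbeats 1000000 in
theorem stmt4
    {X Y Z : Type*}
    [NormedAddCommGroup X] [InnerProductSpace ℝ X] [FiniteDimensional ℝ X]
    [NormedAddCommGroup Y] [InnerProductSpace ℝ Y] [FiniteDimensional ℝ Y]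
    [NormedAddCommGroup Z] [InnerProductSpace ℝ Z] [FiniteDimensional ℝ Z]
    (A : Z →ₗ[ℝ] X) (Astar : X →ₗ[ℝ] Z)
    (B : Z →ₗ[ℝ] Y) (Bstar : Y →ₗ[ℝ] Z)
    (hA : ∀ (z : Z) (x : X), ⟪A z, x⟫ = ⟪z, Astar x⟫)
    (hB : ∀ (z : Z) (y : Y), ⟪B z, y⟫ = ⟪z, Bstar y⟫)
    (c : Z) (σ τ : ℝ) (hσ : 0 < σ) (hτ : 0 < τ)
    (p : X → EReal) (q : Y → EReal)
    (hp_proper : ∃ x, p x ≠ ⊤) (hp_nebot : ∀ x, p x ≠ ⊥)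
    (hq_proper : ∃ y, q y ≠ ⊤) (hq_nebot : ∀ y, q y ≠ ⊥)
    (hp_convex : ∀ (x x' : X) (t : ℝ), 0 ≤ t → t ≤ 1 →
      p (t • x + (1 - t) • x') ≤ ((t : ℝ) : EReal) * p x + (((1 - t : ℝ)) : EReal) * p x')
    (hq_convex : ∀ (y y' : Y) (t : ℝ), 0 ≤ t → t ≤ 1 →
      q (t • y + (1 - t) • y') ≤ ((t : ℝ) : EReal) * q y + (((1 - t : ℝ)) : EReal) * q y')
    (f : X → ℝ) (g : Y → ℝ) (f' : X → X) (g' : Y → Y)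
    (hf : ∀ x, HasGradientAt f (f' x) x) (hg : ∀ y, HasGradientAt g (g' y) y)
    (hfc : ConvexOn ℝ Set.univ f) (hgc : ConvexOn ℝ Set.univ g)
    (Sf Sfh S : X →ₗ[ℝ] X) (Sg Sgh T : Y →ₗ[ℝ] Y)
    (hSf_sym : ∀ u v : X, ⟪Sf u, v⟫ = ⟪u, Sf v⟫) (hSf_psd : ∀ u : X, 0 ≤ ⟪u, Sf u⟫)
    (hSfh_sym : ∀ u v : X, ⟪Sfh u, v⟫ = ⟪u, Sfh v⟫) (hSfh_psd : ∀ u : X, 0 ≤ ⟪u, Sfh u⟫)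
    (hSfh_ge : ∀ u : X, ⟪u, Sf u⟫ ≤ ⟪u, Sfh u⟫)
    (hS_sym : ∀ u v : X, ⟪S u, v⟫ = ⟪u, S v⟫)
    (hSg_sym : ∀ u v : Y, ⟪Sg u, v⟫ = ⟪u, Sg v⟫) (hSg_psd : ∀ u : Y, 0 ≤ ⟪u, Sg u⟫)
    (hSgh_sym : ∀ u v : Y, ⟪Sgh u, v⟫ = ⟪u, Sgh v⟫) (hSgh_psd : ∀ u : Y, 0 ≤ ⟪u, Sgh u⟫)
    (hSgh_ge : ∀ u : Y, ⟪u, Sg u⟫ ≤ ⟪u, Sgh u⟫)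
    (hT_sym : ∀ u v : Y, ⟪T u, v⟫ = ⟪u, T v⟫)
    (hf_low : ∀ x x' : X, f x' + ⟪x - x', f' x'⟫ + (1/2) * ⟪x - x', Sf (x - x')⟫ ≤ f x)
    (hf_up : ∀ x x' : X, f x ≤ f x' + ⟪x - x', f' x'⟫ + (1/2) * ⟪x - x', Sfh (x - x')⟫)
    (hg_low : ∀ y y' : Y, g y' + ⟪y - y', g' y'⟫ + (1/2) * ⟪y - y', Sg (y - y')⟫ ≤ g y)
    (hg_up : ∀ y y' : Y, g y ≤ g y' + ⟪y - y', g' y'⟫ + (1/2) * ⟪y - y', Sgh (y - y')⟫)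
    (xk : ℕ → X) (yk : ℕ → Y) (zk : ℕ → Z)
    (hxdom : ∀ k, p (xk k) ≠ ⊤) (hydom : ∀ k, q (yk k) ≠ ⊤)
    (hiter_x : ∀ (k : ℕ) (x : X),
      p (xk (k + 1)) + ((⟪xk (k + 1) - x, f' (xk k)
        + A (zk k + σ • (Astar (xk (k + 1)) + Bstar (yk k) - c))
        + (Sfh (xk (k + 1) - xk k) + S (xk (k + 1) - xk k))⟫ : ℝ) : EReal) ≤ p x)
    (hiter_y : ∀ (k : ℕ) (y : Y),
      q (yk (k + 1)) + ((⟪yk (k + 1) - y, g' (yk k)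
        + B (zk k + σ • (Astar (xk (k + 1)) + Bstar (yk (k + 1)) - c))
        + (Sgh (yk (k + 1) - yk k) + T (yk (k + 1) - yk k))⟫ : ℝ) : EReal) ≤ q y)
    (hiter_z : ∀ k : ℕ, zk (k + 1) = zk k + (τ * σ) • (Astar (xk (k + 1)) + Bstar (yk (k + 1)) - c))

    (hhalf : ∀ u : Y, 0 ≤ ⟪u, (1/2 : ℝ) • Sgh u + T u⟫)

    (hMV : ∀ k : ℕ, 1 ≤ k → ∃ W : Y →ₗ[ℝ] Y,
      (∀ u v : Y, ⟪W u, v⟫ = ⟪u, W v⟫) ∧ (∀ u : Y, 0 ≤ ⟪u, W u⟫) ∧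
      (∀ u : Y, 0 ≤ ⟪u, Sgh u - W u⟫) ∧
      g' (yk k) - g' (yk (k - 1)) = W (yk k - yk (k - 1)))
 :
    ∀ k : ℕ, 1 ≤ k →
      max (1 - τ) (1 - τ⁻¹) * σ * (‖Astar (xk (k + 1)) + Bstar (yk (k + 1)) - c‖ ^ 2 - ‖Astar (xk k) + Bstar (yk k) - c‖ ^ 2)
        + (⟪yk (k + 1) - yk k, Sgh (yk (k + 1) - yk k) + T (yk (k + 1) - yk k)⟫ - ⟪yk k - yk (k - 1), Sgh (yk k - yk (k - 1)) + T (yk k - yk (k - 1))⟫)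
        + min τ (1 + τ - τ ^ 2) * σ *
            (τ⁻¹ * ‖Astar (xk (k + 1)) + Bstar (yk (k + 1)) - c‖ ^ 2 + ‖Bstar (yk (k + 1) - yk k)‖ ^ 2)
      ≤ (1 - τ) * σ * ‖Astar (xk (k + 1)) + Bstar (yk (k + 1)) - c‖ ^ 2
        + σ * ‖Astar (xk (k + 1)) + Bstar (yk k) - c‖ ^ 2 := by
  intro k hk
  obtain ⟨m, rfl⟩ : ∃ m, k = m + 1 := ⟨k - 1, (Nat.succ_pred_eq_of_pos hk).symm⟩
  simp only [Nat.add_sub_cancel]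
  obtain ⟨W, hW_sym, hW_psd, hSW, hg'eq⟩ := hMV (m + 1) (Nat.le_add_left 1 m)
  simp only [Nat.add_sub_cancel] at hg'eq
  -- names
  set Δ1 : Y := yk (m + 1 + 1) - yk (m + 1) with hΔ1def
  set Δ0 : Y := yk (m + 1) - yk m with hΔ0def
  set r1 : Z := Astar (xk (m + 1 + 1)) + Bstar (yk (m + 1 + 1)) - c with hr1def
  set r0 : Z := Astar (xk (m + 1)) + Bstar (yk (m + 1)) - c with hr0def
  set s : Z := Astar (xk (m + 1 + 1)) + Bstar (yk (m + 1)) - c with hsdef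
  set u : Z := Bstar Δ1 with hudef
  -- Step A : real inequality from the two EReal inequalities
  have h1e := hiter_y (m + 1) (yk (m + 1))
  have h2e := hiter_y m (yk (m + 1 + 1))
  obtain ⟨a, ha⟩ : ∃ a : ℝ, q (yk (m + 1 + 1)) = (a : EReal) :=
    ⟨(q (yk (m + 1 + 1))).toReal, (EReal.coe_toReal (hydom _) (hq_nebot _)).symm⟩
  obtain ⟨b, hb⟩ : ∃ b : ℝ, q (yk (m + 1)) = (b : EReal) :=
    ⟨(q (yk (m + 1))).toReal, (EReal.coe_toReal (hydom _) (hq_nebot _)).symm⟩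
  rw [ha, hb] at h1e h2e
  rw [← EReal.coe_add, EReal.coe_le_coe_iff] at h1e h2e
  have hsum : (⟪Δ1, g' (yk (m + 1))
        + B (zk (m + 1) + σ • r1)
        + (Sgh Δ1 + T Δ1)⟫ : ℝ)
      + ⟪yk (m + 1) - yk (m + 1 + 1), g' (yk m)
        + B (zk m + σ • r0)
        + (Sgh Δ0 + T Δ0)⟫ ≤ 0 := by linarith
  -- Step B : rewrite as star inequality
  have hneg : yk (m + 1) - yk (m + 1 + 1) = -Δ1 := by rw [hΔ1def]; abel
  rw [hneg, inner_neg_left] at hsum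
  have hB' : ∀ z : Z, (⟪Δ1, B z⟫ : ℝ) = ⟪z, u⟫ := fun z => by
    rw [real_inner_comm]; exact hB z Δ1
  have hw : (zk (m + 1) + σ • r1) - (zk m + σ • r0) = σ • r1 + ((τ - 1) * σ) • r0 := by
    rw [hiter_z m, ← hr0def]
    module
  have hBsplit : (⟪Δ1, B (zk (m + 1) + σ • r1)⟫ : ℝ) - ⟪Δ1, B (zk m + σ • r0)⟫
      = σ * ⟪r1, u⟫ + (τ - 1) * σ * ⟪r0, u⟫ := by
    rw [hB', hB', ← inner_sub_left, hw, inner_add_left, real_inner_smul_left,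
      real_inner_smul_left]
  have hgsplit : g' (yk (m + 1)) - g' (yk m) = W Δ0 := hg'eq
  have hstar : σ * ⟪r1, u⟫ + (τ - 1) * σ * ⟪r0, u⟫
      ≤ (1/2) * ⟪Δ0, Sgh Δ0 + T Δ0⟫ - (1/2) * ⟪Δ1, Sgh Δ1 + T Δ1⟫ := by
    -- expand hsum
    have hexp : (⟪Δ1, g' (yk (m + 1))⟫ : ℝ) - ⟪Δ1, g' (yk m)⟫ = ⟪Δ1, W Δ0⟫ := by
      rw [← inner_sub_right, hgsplit]
    have hkey : (⟪Δ1, Sgh Δ0 + T Δ0⟫ : ℝ) - ⟪Δ1, W Δ0⟫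
        ≤ (1/2) * ⟪Δ1, Sgh Δ1 + T Δ1⟫ + (1/2) * ⟪Δ0, Sgh Δ0 + T Δ0⟫ := by
      have hh := hhalf (Δ1 - Δ0)
      have hw2 := hW_psd (Δ1 + Δ0)
      have hw3 := hSW (Δ1 - Δ0)
      have e1 : (⟪Δ0, Sgh Δ1⟫ : ℝ) = ⟪Δ1, Sgh Δ0⟫ := by
        rw [real_inner_comm, hSgh_sym]
      have e2 : (⟪Δ0, T Δ1⟫ : ℝ) = ⟪Δ1, T Δ0⟫ := by
        rw [real_inner_comm, hT_sym]
      have e3 : (⟪Δ0, W Δ1⟫ : ℝ) = ⟪Δ1, W Δ0⟫ := by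
        rw [real_inner_comm, hW_sym]
      simp only [map_sub, map_add, inner_sub_left, inner_sub_right, inner_add_left,
        inner_add_right, real_inner_smul_right] at hh hw2 hw3 ⊢
      linarith
    simp only [inner_add_right] at hsum hkey ⊢
    linarith [hBsplit, hexp, hkey, hsum]
  -- Step C : norm identities
  have hsu : r1 - u = s := by
    rw [hr1def, hudef, hΔ1def, hsdef, map_sub]; abel
  have hS2 : ‖s‖ ^ 2 = ‖r1‖ ^ 2 - 2 * ⟪r1, u⟫ + ‖u‖ ^ 2 := by
    rw [← hsu]; exact norm_sub_sq_real r1 u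
  have hc1 : 2 * ⟪r0, u⟫ ≤ ‖u‖ ^ 2 + ‖r0‖ ^ 2 := by
    have h := norm_sub_sq_real u r0
    have := real_inner_comm u r0
    nlinarith [sq_nonneg (‖u - r0‖)]
  have hc2 : (0:ℝ) ≤ τ ^ 2 * ‖u‖ ^ 2 + 2 * (τ * ⟪r0, u⟫) + ‖r0‖ ^ 2 := by
    have h := norm_add_sq_real (τ • u) r0
    have e1 : ‖τ • u‖ ^ 2 = τ ^ 2 * ‖u‖ ^ 2 := by
      rw [norm_smul, Real.norm_eq_abs, abs_of_pos hτ, mul_pow]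
    have e2 : (⟪τ • u, r0⟫ : ℝ) = τ * ⟪r0, u⟫ := by
      rw [real_inner_smul_left, real_inner_comm]
    nlinarith [sq_nonneg (‖τ • u + r0‖)]
  exact arith_lemma4 σ τ (‖r1‖^2) (‖r0‖^2) (‖u‖^2) (‖s‖^2)
    (⟪Δ1, Sgh Δ1 + T Δ1⟫) (⟪Δ0, Sgh Δ0 + T Δ0⟫) (⟪r1, u⟫) (⟪r0, u⟫)
    hσ hτ hstar hS2 hc1 hc2
end

section
/- For every k ≥ 0 and every (x, y, z) ∈ X × Y × Z: (p(x^{k+1}) + q(y^{k+1})) − (p(x) + q(y)) + ⟨x^{k+1} − x, ∇f(x) + A z⟩ + ⟨y^{k+1} − y, ∇g(y) + B z⟩ + ⟨z̃^{k+1} − z, −(A*x + B*y − c)⟩ + (1/2)(φ_{k+1}(x, y, z) − φ_k(x, y, z)) ≤ −(1/2)(s_{k+1} + (1−τ)σ‖r^{k+1}‖² + σ‖A*x^{k+1} + B*y^k − c‖²), where when p(x) = +∞ or q(y) = +∞ the inequality is understood in the extended reals (it holds trivially). -/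
open scoped RealInnerProductSpace

section Helpers

lemma zlem5 {Z : Type*} [NormedAddCommGroup Z] [InnerProductSpace ℝ Z]
    (σ τ : ℝ) (hσ : σ ≠ 0) (hτ : τ ≠ 0) (u1 u v1 v0 v c zk z : Z) :
    ⟪z, u1 - u⟫ - ⟪zk + σ • (u1 + v0 - c), u1 - u⟫
      + ⟪z, v1 - v⟫ - ⟪zk + σ • (u1 + v1 - c), v1 - v⟫
      + ⟪(zk + σ • (u1 + v1 - c)) - z, -(u + v - c)⟫
      + (1/2) * (((τ*σ)⁻¹ * ‖zk + (τ*σ) • (u1 + v1 - c) - z‖^2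
            - (τ*σ)⁻¹ * ‖zk - z‖^2)
          + (σ * ‖u + v1 - c‖^2 - σ * ‖u + v0 - c‖^2))
    = -(1/2) * ((1-τ) * σ * ‖u1 + v1 - c‖^2) - (1/2) * (σ * ‖u1 + v0 - c‖^2) := by
  simp only [← real_inner_self_eq_norm_sq]
  simp only [inner_add_left, inner_add_right, inner_sub_left, inner_sub_right,
    real_inner_smul_left, real_inner_smul_right, inner_neg_left, inner_neg_right]
  simp only [real_inner_comm]
  field_simp
  ring

lemma qdiff5 {X : Type*} [NormedAddCommGroup X] [InnerProductSpace ℝ X]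
    (G : X →ₗ[ℝ] X) (hG : ∀ u v : X, ⟪G u, v⟫ = ⟪u, G v⟫) (x1 x0 x : X) :
    ⟪x1 - x, G (x1 - x)⟫ - ⟪x0 - x, G (x0 - x)⟫
      = 2 * ⟪x1 - x, G (x1 - x0)⟫ - ⟪x1 - x0, G (x1 - x0)⟫ := by
  have hs : ∀ a b : X, ⟪a, G b⟫ = ⟪b, G a⟫ := fun a b => by rw [← hG, real_inner_comm]
  simp only [map_sub, inner_sub_left, inner_sub_right]
  linarith [hs x1 x0, hs x1 x, hs x0 x]

lemma qsum5 {X : Type*} [NormedAddCommGroup X] [InnerProductSpace ℝ X]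
    (G : X →ₗ[ℝ] X) (hG : ∀ u v : X, ⟪G u, v⟫ = ⟪u, G v⟫) (x1 x0 x : X) :
    ⟪(x1 - x) + (x0 - x), G ((x1 - x) + (x0 - x))⟫ + ⟪x1 - x0, G (x1 - x0)⟫
      = 2 * ⟪x1 - x, G (x1 - x)⟫ + 2 * ⟪x0 - x, G (x0 - x)⟫ := by
  have hs : ∀ a b : X, ⟪a, G b⟫ = ⟪b, G a⟫ := fun a b => by rw [← hG, real_inner_comm]
  simp only [map_sub, map_add, inner_sub_left, inner_sub_right, inner_add_left, inner_add_right]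
  linarith [hs x1 x0, hs x1 x, hs x0 x]

lemma qneg5 {X : Type*} [NormedAddCommGroup X] [InnerProductSpace ℝ X]
    (G : X →ₗ[ℝ] X) (x1 x0 : X) :
    ⟪x0 - x1, G (x0 - x1)⟫ = ⟪x1 - x0, G (x1 - x0)⟫ := by
  have h : x0 - x1 = -(x1 - x0) := by abel
  rw [h, map_neg, inner_neg_neg]

lemma lsplit5 {X : Type*} [NormedAddCommGroup X] [InnerProductSpace ℝ X]
    (w : X) (x1 x0 x : X) :
    ⟪x1 - x, w⟫ = ⟪x1 - x0, w⟫ - ⟪x - x0, w⟫ := by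
  rw [← inner_sub_left]; congr 1; abel

end Helpers

set_option maxHeartbeats 1000000 in
theorem stmt5
    {X Y Z : Type*}
    [NormedAddCommGroup X] [InnerProductSpace ℝ X] [FiniteDimensional ℝ X]
    [NormedAddCommGroup Y] [InnerProductSpace ℝ Y] [FiniteDimensional ℝ Y]
    [NormedAddCommGroup Z] [InnerProductSpace ℝ Z] [FiniteDimensional ℝ Z]
    (A : Z →ₗ[ℝ] X) (Astar : X →ₗ[ℝ] Z)
    (B : Z →ₗ[ℝ] Y) (Bstar : Y →ₗ[ℝ] Z)
    (hA : ∀ (z : Z) (x : X), ⟪A z, x⟫ = ⟪z, Astar x⟫)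
    (hB : ∀ (z : Z) (y : Y), ⟪B z, y⟫ = ⟪z, Bstar y⟫)
    (c : Z) (σ τ : ℝ) (hσ : 0 < σ) (hτ : 0 < τ)
    (p : X → EReal) (q : Y → EReal)
    (hp_proper : ∃ x, p x ≠ ⊤) (hp_nebot : ∀ x, p x ≠ ⊥)
    (hq_proper : ∃ y, q y ≠ ⊤) (hq_nebot : ∀ y, q y ≠ ⊥)
    (hp_convex : ∀ (x x' : X) (t : ℝ), 0 ≤ t → t ≤ 1 →
      p (t • x + (1 - t) • x') ≤ ((t : ℝ) : EReal) * p x + (((1 - t : ℝ)) : EReal) * p x')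
    (hq_convex : ∀ (y y' : Y) (t : ℝ), 0 ≤ t → t ≤ 1 →
      q (t • y + (1 - t) • y') ≤ ((t : ℝ) : EReal) * q y + (((1 - t : ℝ)) : EReal) * q y')
    (f : X → ℝ) (g : Y → ℝ) (f' : X → X) (g' : Y → Y)
    (hf : ∀ x, HasGradientAt f (f' x) x) (hg : ∀ y, HasGradientAt g (g' y) y)
    (hfc : ConvexOn ℝ Set.univ f) (hgc : ConvexOn ℝ Set.univ g)
    (Sf Sfh S : X →ₗ[ℝ] X) (Sg Sgh T : Y →ₗ[ℝ] Y)
    (hSf_sym : ∀ u v : X, ⟪Sf u, v⟫ = ⟪u, Sf v⟫) (hSf_psd : ∀ u : X, 0 ≤ ⟪u, Sf u⟫)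
    (hSfh_sym : ∀ u v : X, ⟪Sfh u, v⟫ = ⟪u, Sfh v⟫) (hSfh_psd : ∀ u : X, 0 ≤ ⟪u, Sfh u⟫)
    (hSfh_ge : ∀ u : X, ⟪u, Sf u⟫ ≤ ⟪u, Sfh u⟫)
    (hS_sym : ∀ u v : X, ⟪S u, v⟫ = ⟪u, S v⟫)
    (hSg_sym : ∀ u v : Y, ⟪Sg u, v⟫ = ⟪u, Sg v⟫) (hSg_psd : ∀ u : Y, 0 ≤ ⟪u, Sg u⟫)
    (hSgh_sym : ∀ u v : Y, ⟪Sgh u, v⟫ = ⟪u, Sgh v⟫) (hSgh_psd : ∀ u : Y, 0 ≤ ⟪u, Sgh u⟫)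
    (hSgh_ge : ∀ u : Y, ⟪u, Sg u⟫ ≤ ⟪u, Sgh u⟫)
    (hT_sym : ∀ u v : Y, ⟪T u, v⟫ = ⟪u, T v⟫)
    (hf_low : ∀ x x' : X, f x' + ⟪x - x', f' x'⟫ + (1/2) * ⟪x - x', Sf (x - x')⟫ ≤ f x)
    (hf_up : ∀ x x' : X, f x ≤ f x' + ⟪x - x', f' x'⟫ + (1/2) * ⟪x - x', Sfh (x - x')⟫)
    (hg_low : ∀ y y' : Y, g y' + ⟪y - y', g' y'⟫ + (1/2) * ⟪y - y', Sg (y - y')⟫ ≤ g y)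
    (hg_up : ∀ y y' : Y, g y ≤ g y' + ⟪y - y', g' y'⟫ + (1/2) * ⟪y - y', Sgh (y - y')⟫)
    (xk : ℕ → X) (yk : ℕ → Y) (zk : ℕ → Z)
    (hxdom : ∀ k, p (xk k) ≠ ⊤) (hydom : ∀ k, q (yk k) ≠ ⊤)
    (hiter_x : ∀ (k : ℕ) (x : X),
      p (xk (k + 1)) + ((⟪xk (k + 1) - x, f' (xk k)
        + A (zk k + σ • (Astar (xk (k + 1)) + Bstar (yk k) - c))
        + (Sfh (xk (k + 1) - xk k) + S (xk (k + 1) - xk k))⟫ : ℝ) : EReal) ≤ p x)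
    (hiter_y : ∀ (k : ℕ) (y : Y),
      q (yk (k + 1)) + ((⟪yk (k + 1) - y, g' (yk k)
        + B (zk k + σ • (Astar (xk (k + 1)) + Bstar (yk (k + 1)) - c))
        + (Sgh (yk (k + 1) - yk k) + T (yk (k + 1) - yk k))⟫ : ℝ) : EReal) ≤ q y)
    (hiter_z : ∀ k : ℕ, zk (k + 1) = zk k + (τ * σ) • (Astar (xk (k + 1)) + Bstar (yk (k + 1)) - c))
 :
    ∀ (k : ℕ) (x : X) (y : Y) (z : Z),
      (p (xk (k + 1)) + q (yk (k + 1))) - (p x + q y)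
        + ((⟪xk (k + 1) - x, f' x + A z⟫ + ⟪yk (k + 1) - y, g' y + B z⟫
            + ⟪(zk k + σ • (Astar (xk (k + 1)) + Bstar (yk (k + 1)) - c)) - z, -(Astar x + Bstar y - c)⟫
            + (1/2) * (((τ * σ)⁻¹ * ‖zk (k + 1) - z‖ ^ 2 + ⟪xk (k + 1) - x, Sfh (xk (k + 1) - x) + S (xk (k + 1) - x)⟫ + ⟪yk (k + 1) - y, Sgh (yk (k + 1) - y) + T (yk (k + 1) - y)⟫ + σ * ‖Astar x + Bstar (yk (k + 1)) - c‖ ^ 2) - ((τ * σ)⁻¹ * ‖zk k - z‖ ^ 2 + ⟪xk k - x, Sfh (xk k - x) + S (xk k - x)⟫ + ⟪yk k - y, Sgh (yk k - y) + T (yk k - y)⟫ + σ * ‖Astar x + Bstar (yk k) - c‖ ^ 2)) : ℝ) : EReal)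
      ≤ ((-(1/2) * ((⟪(xk (k + 1) - xk k), (1/2 : ℝ) • Sf (xk (k + 1) - xk k) + S (xk (k + 1) - xk k)⟫ + ⟪(yk (k + 1) - yk k), (1/2 : ℝ) • Sg (yk (k + 1) - yk k) + T (yk (k + 1) - yk k)⟫) + (1 - τ) * σ * ‖Astar (xk (k + 1)) + Bstar (yk (k + 1)) - c‖ ^ 2
            + σ * ‖Astar (xk (k + 1)) + Bstar (yk k) - c‖ ^ 2) : ℝ) : EReal) := by
  intro k x y z
  by_cases hpx : p x = ⊤
  · have h1 : p x + q y = ⊤ := by rw [hpx]; exact EReal.top_add_of_ne_bot (hq_nebot y)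
    rw [h1, EReal.sub_top, EReal.bot_add]
    exact bot_le
  by_cases hqy : q y = ⊤
  · have h1 : p x + q y = ⊤ := by rw [hqy]; exact EReal.add_top_of_ne_bot (hp_nebot x)
    rw [h1, EReal.sub_top, EReal.bot_add]
    exact bot_le
  -- everything is finite
  obtain ⟨P, epx⟩ : ∃ r : ℝ, p x = (r : EReal) := ⟨(p x).toReal, (EReal.coe_toReal hpx (hp_nebot x)).symm⟩
  obtain ⟨Q, eqy⟩ : ∃ r : ℝ, q y = (r : EReal) := ⟨(q y).toReal, (EReal.coe_toReal hqy (hq_nebot y)).symm⟩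
  obtain ⟨P1, epx1⟩ : ∃ r : ℝ, p (xk (k+1)) = (r : EReal) :=
    ⟨(p (xk (k+1))).toReal, (EReal.coe_toReal (hxdom (k+1)) (hp_nebot _)).symm⟩
  obtain ⟨Q1, eqy1⟩ : ∃ r : ℝ, q (yk (k+1)) = (r : EReal) :=
    ⟨(q (yk (k+1))).toReal, (EReal.coe_toReal (hydom (k+1)) (hq_nebot _)).symm⟩
  have hxR : P1 + ⟪xk (k + 1) - x, f' (xk k)
        + A (zk k + σ • (Astar (xk (k + 1)) + Bstar (yk k) - c))
        + (Sfh (xk (k + 1) - xk k) + S (xk (k + 1) - xk k))⟫ ≤ P := by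
    have := hiter_x k x
    rw [epx1, epx] at this
    exact_mod_cast this
  have hyR : Q1 + ⟪yk (k + 1) - y, g' (yk k)
        + B (zk k + σ • (Astar (xk (k + 1)) + Bstar (yk (k + 1)) - c))
        + (Sgh (yk (k + 1) - yk k) + T (yk (k + 1) - yk k))⟫ ≤ Q := by
    have := hiter_y k y
    rw [eqy1, eqy] at this
    exact_mod_cast this
  rw [epx, eqy, epx1, eqy1, hiter_z k]
  norm_cast
  -- now a purely real inequality
  have EA1 : ⟪xk (k+1) - x, f' x + A z⟫
      = ⟪xk (k+1) - x, f' x⟫ + ⟪z, Astar (xk (k+1)) - Astar x⟫ := by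
    rw [inner_add_right, real_inner_comm (A z) (xk (k+1) - x), hA, map_sub]
  have EB1 : ⟪yk (k+1) - y, g' y + B z⟫
      = ⟪yk (k+1) - y, g' y⟫ + ⟪z, Bstar (yk (k+1)) - Bstar y⟫ := by
    rw [inner_add_right, real_inner_comm (B z) (yk (k+1) - y), hB, map_sub]
  have EA2 : ⟪xk (k + 1) - x, f' (xk k)
        + A (zk k + σ • (Astar (xk (k + 1)) + Bstar (yk k) - c))
        + (Sfh (xk (k + 1) - xk k) + S (xk (k + 1) - xk k))⟫
      = ⟪xk (k+1) - x, f' (xk k)⟫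
        + ⟪zk k + σ • (Astar (xk (k + 1)) + Bstar (yk k) - c),
            Astar (xk (k+1)) - Astar x⟫
        + ⟪xk (k+1) - x, Sfh (xk (k + 1) - xk k)⟫
        + ⟪xk (k+1) - x, S (xk (k + 1) - xk k)⟫ := by
    simp only [inner_add_right]
    rw [real_inner_comm (A (zk k + σ • (Astar (xk (k + 1)) + Bstar (yk k) - c)))
      (xk (k+1) - x), hA, map_sub]
    ring
  have EB2 : ⟪yk (k + 1) - y, g' (yk k)
        + B (zk k + σ • (Astar (xk (k + 1)) + Bstar (yk (k + 1)) - c))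
        + (Sgh (yk (k + 1) - yk k) + T (yk (k + 1) - yk k))⟫
      = ⟪yk (k+1) - y, g' (yk k)⟫
        + ⟪zk k + σ • (Astar (xk (k + 1)) + Bstar (yk (k + 1)) - c),
            Bstar (yk (k+1)) - Bstar y⟫
        + ⟪yk (k+1) - y, Sgh (yk (k + 1) - yk k)⟫
        + ⟪yk (k+1) - y, T (yk (k + 1) - yk k)⟫ := by
    simp only [inner_add_right]
    rw [real_inner_comm (B (zk k + σ • (Astar (xk (k + 1)) + Bstar (yk (k + 1)) - c)))
      (yk (k+1) - y), hB, map_sub]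
    ring
  have EZ := zlem5 σ τ (ne_of_gt hσ) (ne_of_gt hτ) (Astar (xk (k+1))) (Astar x)
    (Bstar (yk (k+1))) (Bstar (yk k)) (Bstar y) c (zk k) z
  have E5a : ⟪xk (k+1) - x, Sfh (xk (k+1) - x) + S (xk (k+1) - x)⟫
      = ⟪xk (k+1) - x, Sfh (xk (k+1) - x)⟫ + ⟪xk (k+1) - x, S (xk (k+1) - x)⟫ :=
    inner_add_right _ _ _
  have E5b : ⟪xk k - x, Sfh (xk k - x) + S (xk k - x)⟫
      = ⟪xk k - x, Sfh (xk k - x)⟫ + ⟪xk k - x, S (xk k - x)⟫ := inner_add_right _ _ _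
  have E5c : ⟪yk (k+1) - y, Sgh (yk (k+1) - y) + T (yk (k+1) - y)⟫
      = ⟪yk (k+1) - y, Sgh (yk (k+1) - y)⟫ + ⟪yk (k+1) - y, T (yk (k+1) - y)⟫ :=
    inner_add_right _ _ _
  have E5d : ⟪yk k - y, Sgh (yk k - y) + T (yk k - y)⟫
      = ⟪yk k - y, Sgh (yk k - y)⟫ + ⟪yk k - y, T (yk k - y)⟫ := inner_add_right _ _ _
  have E9a : ⟪xk (k+1) - xk k, (1/2 : ℝ) • Sf (xk (k+1) - xk k) + S (xk (k+1) - xk k)⟫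
      = (1/2) * ⟪xk (k+1) - xk k, Sf (xk (k+1) - xk k)⟫
        + ⟪xk (k+1) - xk k, S (xk (k+1) - xk k)⟫ := by
    rw [inner_add_right, real_inner_smul_right]
  have E9b : ⟪yk (k+1) - yk k, (1/2 : ℝ) • Sg (yk (k+1) - yk k) + T (yk (k+1) - yk k)⟫
      = (1/2) * ⟪yk (k+1) - yk k, Sg (yk (k+1) - yk k)⟫
        + ⟪yk (k+1) - yk k, T (yk (k+1) - yk k)⟫ := by
    rw [inner_add_right, real_inner_smul_right]
  have D1 := qdiff5 Sfh hSfh_sym (xk (k+1)) (xk k) x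
  have D2 := qdiff5 S hS_sym (xk (k+1)) (xk k) x
  have D3 := qdiff5 Sgh hSgh_sym (yk (k+1)) (yk k) y
  have D4 := qdiff5 T hT_sym (yk (k+1)) (yk k) y
  have U1 := qsum5 Sf hSf_sym (xk (k+1)) (xk k) x
  have U2 := qsum5 Sg hSg_sym (yk (k+1)) (yk k) y
  have PS1 := hSf_psd ((xk (k+1) - x) + (xk k - x))
  have PS2 := hSg_psd ((yk (k+1) - y) + (yk k - y))
  have Fa := hf_low x (xk k)
  have Fb := hf_up (xk (k+1)) (xk k)
  have Fc := hf_low (xk (k+1)) x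
  have Ga := hg_low y (yk k)
  have Gb := hg_up (yk (k+1)) (yk k)
  have Gc := hg_low (yk (k+1)) y
  have LF := lsplit5 (f' (xk k)) (xk (k+1)) (xk k) x
  have LG := lsplit5 (g' (yk k)) (yk (k+1)) (yk k) y
  have NF := qneg5 Sf (xk k) x
  have NG := qneg5 Sg (yk k) y
  linarith [hxR, hyR, EA1, EB1, EA2, EB2, EZ, E5a, E5b, E5c, E5d, E9a, E9b,
    D1, D2, D3, D4, U1, U2, PS1, PS2, Fa, Fb, Fc, Ga, Gb, Gc, LF, LG, NF, NG]
end

section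
/- Assume (1/2)Σ̂_g + T ⪰ 0 and the mean-value hypothesis. Then for every α ∈ (0, 1], every k ≥ 1 and every (x, y, z) ∈ X × Y × Z: (p(x^{k+1}) + q(y^{k+1})) − (p(x) + q(y)) + ⟨x^{k+1} − x, ∇f(x) + A z⟩ + ⟨y^{k+1} − y, ∇g(y) + B z⟩ + ⟨z̃^{k+1} − z, −(A*x + B*y − c)⟩ + (1/2){[φ_{k+1}(x,y,z) + (1 − α min(τ, τ⁻¹))σ‖r^{k+1}‖² + αξ_{k+1}] − [φ_k(x,y,z) + (1 − α min(τ, τ⁻¹))σ‖r^k‖² + αξ_k]} ≤ −(1/2){t_{k+1} + (−τ + α min(1+τ, 1+τ⁻¹))σ‖r^{k+1}‖²}, where when p(x) = +∞ or q(y) = +∞ the inequality is understood in the extended reals (it holds trivially). -/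
open scoped RealInnerProductSpace

set_option maxHeartbeats 1000000 in
theorem stmt6
    {X Y Z : Type*}
    [NormedAddCommGroup X] [InnerProductSpace ℝ X] [FiniteDimensional ℝ X]
    [NormedAddCommGroup Y] [InnerProductSpace ℝ Y] [FiniteDimensional ℝ Y]
    [NormedAddCommGroup Z] [InnerProductSpace ℝ Z] [FiniteDimensional ℝ Z]
    (A : Z →ₗ[ℝ] X) (Astar : X →ₗ[ℝ] Z)
    (B : Z →ₗ[ℝ] Y) (Bstar : Y →ₗ[ℝ] Z)
    (hA : ∀ (z : Z) (x : X), ⟪A z, x⟫ = ⟪z, Astar x⟫)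
    (hB : ∀ (z : Z) (y : Y), ⟪B z, y⟫ = ⟪z, Bstar y⟫)
    (c : Z) (σ τ : ℝ) (hσ : 0 < σ) (hτ : 0 < τ)
    (p : X → EReal) (q : Y → EReal)
    (hp_proper : ∃ x, p x ≠ ⊤) (hp_nebot : ∀ x, p x ≠ ⊥)
    (hq_proper : ∃ y, q y ≠ ⊤) (hq_nebot : ∀ y, q y ≠ ⊥)
    (hp_convex : ∀ (x x' : X) (t : ℝ), 0 ≤ t → t ≤ 1 →
      p (t • x + (1 - t) • x') ≤ ((t : ℝ) : EReal) * p x + (((1 - t : ℝ)) : EReal) * p x')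
    (hq_convex : ∀ (y y' : Y) (t : ℝ), 0 ≤ t → t ≤ 1 →
      q (t • y + (1 - t) • y') ≤ ((t : ℝ) : EReal) * q y + (((1 - t : ℝ)) : EReal) * q y')
    (f : X → ℝ) (g : Y → ℝ) (f' : X → X) (g' : Y → Y)
    (hf : ∀ x, HasGradientAt f (f' x) x) (hg : ∀ y, HasGradientAt g (g' y) y)
    (hfc : ConvexOn ℝ Set.univ f) (hgc : ConvexOn ℝ Set.univ g)
    (Sf Sfh S : X →ₗ[ℝ] X) (Sg Sgh T : Y →ₗ[ℝ] Y)
    (hSf_sym : ∀ u v : X, ⟪Sf u, v⟫ = ⟪u, Sf v⟫) (hSf_psd : ∀ u : X, 0 ≤ ⟪u, Sf u⟫)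
    (hSfh_sym : ∀ u v : X, ⟪Sfh u, v⟫ = ⟪u, Sfh v⟫) (hSfh_psd : ∀ u : X, 0 ≤ ⟪u, Sfh u⟫)
    (hSfh_ge : ∀ u : X, ⟪u, Sf u⟫ ≤ ⟪u, Sfh u⟫)
    (hS_sym : ∀ u v : X, ⟪S u, v⟫ = ⟪u, S v⟫)
    (hSg_sym : ∀ u v : Y, ⟪Sg u, v⟫ = ⟪u, Sg v⟫) (hSg_psd : ∀ u : Y, 0 ≤ ⟪u, Sg u⟫)
    (hSgh_sym : ∀ u v : Y, ⟪Sgh u, v⟫ = ⟪u, Sgh v⟫) (hSgh_psd : ∀ u : Y, 0 ≤ ⟪u, Sgh u⟫)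
    (hSgh_ge : ∀ u : Y, ⟪u, Sg u⟫ ≤ ⟪u, Sgh u⟫)
    (hT_sym : ∀ u v : Y, ⟪T u, v⟫ = ⟪u, T v⟫)
    (hf_low : ∀ x x' : X, f x' + ⟪x - x', f' x'⟫ + (1/2) * ⟪x - x', Sf (x - x')⟫ ≤ f x)
    (hf_up : ∀ x x' : X, f x ≤ f x' + ⟪x - x', f' x'⟫ + (1/2) * ⟪x - x', Sfh (x - x')⟫)
    (hg_low : ∀ y y' : Y, g y' + ⟪y - y', g' y'⟫ + (1/2) * ⟪y - y', Sg (y - y')⟫ ≤ g y)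
    (hg_up : ∀ y y' : Y, g y ≤ g y' + ⟪y - y', g' y'⟫ + (1/2) * ⟪y - y', Sgh (y - y')⟫)
    (xk : ℕ → X) (yk : ℕ → Y) (zk : ℕ → Z)
    (hxdom : ∀ k, p (xk k) ≠ ⊤) (hydom : ∀ k, q (yk k) ≠ ⊤)
    (hiter_x : ∀ (k : ℕ) (x : X),
      p (xk (k + 1)) + ((⟪xk (k + 1) - x, f' (xk k)
        + A (zk k + σ • (Astar (xk (k + 1)) + Bstar (yk k) - c))
        + (Sfh (xk (k + 1) - xk k) + S (xk (k + 1) - xk k))⟫ : ℝ) : EReal) ≤ p x)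
    (hiter_y : ∀ (k : ℕ) (y : Y),
      q (yk (k + 1)) + ((⟪yk (k + 1) - y, g' (yk k)
        + B (zk k + σ • (Astar (xk (k + 1)) + Bstar (yk (k + 1)) - c))
        + (Sgh (yk (k + 1) - yk k) + T (yk (k + 1) - yk k))⟫ : ℝ) : EReal) ≤ q y)
    (hiter_z : ∀ k : ℕ, zk (k + 1) = zk k + (τ * σ) • (Astar (xk (k + 1)) + Bstar (yk (k + 1)) - c))

    (hhalf : ∀ u : Y, 0 ≤ ⟪u, (1/2 : ℝ) • Sgh u + T u⟫)

    (hMV : ∀ k : ℕ, 1 ≤ k → ∃ W : Y →ₗ[ℝ] Y,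
      (∀ u v : Y, ⟪W u, v⟫ = ⟪u, W v⟫) ∧ (∀ u : Y, 0 ≤ ⟪u, W u⟫) ∧
      (∀ u : Y, 0 ≤ ⟪u, Sgh u - W u⟫) ∧
      g' (yk k) - g' (yk (k - 1)) = W (yk k - yk (k - 1)))
 :
    ∀ α : ℝ, 0 < α → α ≤ 1 → ∀ k : ℕ, 1 ≤ k → ∀ (x : X) (y : Y) (z : Z),
      (p (xk (k + 1)) + q (yk (k + 1))) - (p x + q y)
        + ((⟪xk (k + 1) - x, f' x + A z⟫ + ⟪yk (k + 1) - y, g' y + B z⟫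
            + ⟪(zk k + σ • (Astar (xk (k + 1)) + Bstar (yk (k + 1)) - c)) - z, -(Astar x + Bstar y - c)⟫
            + (1/2) * ((((τ * σ)⁻¹ * ‖zk (k + 1) - z‖ ^ 2 + ⟪xk (k + 1) - x, Sfh (xk (k + 1) - x) + S (xk (k + 1) - x)⟫ + ⟪yk (k + 1) - y, Sgh (yk (k + 1) - y) + T (yk (k + 1) - y)⟫ + σ * ‖Astar x + Bstar (yk (k + 1)) - c‖ ^ 2) + (1 - α * min τ τ⁻¹) * σ * ‖Astar (xk (k + 1)) + Bstar (yk (k + 1)) - c‖ ^ 2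
                  + α * ⟪yk (k + 1) - yk k, Sgh (yk (k + 1) - yk k) + T (yk (k + 1) - yk k)⟫)
                - (((τ * σ)⁻¹ * ‖zk k - z‖ ^ 2 + ⟪xk k - x, Sfh (xk k - x) + S (xk k - x)⟫ + ⟪yk k - y, Sgh (yk k - y) + T (yk k - y)⟫ + σ * ‖Astar x + Bstar (yk k) - c‖ ^ 2) + (1 - α * min τ τ⁻¹) * σ * ‖Astar (xk k) + Bstar (yk k) - c‖ ^ 2
                  + α * ⟪yk k - yk (k - 1), Sgh (yk k - yk (k - 1)) + T (yk k - yk (k - 1))⟫)) : ℝ) : EReal)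
      ≤ ((-(1/2) * ((⟪(xk (k + 1) - xk k), (1/2 : ℝ) • Sf (xk (k + 1) - xk k) + S (xk (k + 1) - xk k) + ((1/2) * (1 - α) * σ) • A (Astar (xk (k + 1) - xk k))⟫ + ⟪(yk (k + 1) - yk k), (1/2 : ℝ) • Sg (yk (k + 1) - yk k) + T (yk (k + 1) - yk k) + (min τ (1 + τ - τ ^ 2) * α * σ) • B (Bstar (yk (k + 1) - yk k))⟫)
            + (-τ + α * min (1 + τ) (1 + τ⁻¹)) * σ * ‖Astar (xk (k + 1)) + Bstar (yk (k + 1)) - c‖ ^ 2) : ℝ) : EReal) := by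
  intro α hα hα1 k hk x y z
  obtain ⟨Wop, hWsym, hWpsd, hWle, hWeq⟩ := hMV k hk
  obtain ⟨j, rfl⟩ : ∃ j, k = j + 1 := ⟨k - 1, (Nat.succ_pred_eq_of_pos hk).symm⟩
  simp only [Nat.add_sub_cancel] at hWeq ⊢
  have hPp : p (xk (j + 1 + 1)) = ((p (xk (j + 1 + 1))).toReal : EReal) :=
    (EReal.coe_toReal (hxdom _) (hp_nebot _)).symm
  have hQp : q (yk (j + 1 + 1)) = ((q (yk (j + 1 + 1))).toReal : EReal) :=
    (EReal.coe_toReal (hydom _) (hq_nebot _)).symm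
  have hQ0 : q (yk (j + 1)) = ((q (yk (j + 1))).toReal : EReal) :=
    (EReal.coe_toReal (hydom _) (hq_nebot _)).symm
  by_cases hx : p x = ⊤
  · rw [hx, EReal.top_add_of_ne_bot (hq_nebot y), hPp, hQp, ← EReal.coe_add,
      EReal.sub_top, EReal.bot_add]
    exact bot_le
  by_cases hy : q y = ⊤
  · rw [hy, EReal.add_top_of_ne_bot (hp_nebot x), hPp, hQp, ← EReal.coe_add,
      EReal.sub_top, EReal.bot_add]
    exact bot_le

  -- both p x and q y are finite: pass to a real inequality
  have hPx : p x = ((p x).toReal : EReal) := (EReal.coe_toReal hx (hp_nebot _)).symm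
  have hQy : q y = ((q y).toReal : EReal) := (EReal.coe_toReal hy (hq_nebot _)).symm
  -- real versions of the iterate inequalities
  have H1 := hiter_x (j + 1) x
  rw [hPp, hPx, ← EReal.coe_add, EReal.coe_le_coe_iff] at H1
  have H2 := hiter_y (j + 1) y
  rw [hQp, hQy, ← EReal.coe_add, EReal.coe_le_coe_iff] at H2
  have HC1 := hiter_y (j + 1) (yk (j + 1))
  rw [hQp, hQ0, ← EReal.coe_add, EReal.coe_le_coe_iff] at HC1
  have HC2 := hiter_y j (yk (j + 1 + 1))
  rw [hQ0, hQp, ← EReal.coe_add, EReal.coe_le_coe_iff] at HC2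
  -- reduce the goal to a real inequality
  rw [hPp, hQp, hPx, hQy, ← EReal.coe_add, ← EReal.coe_add, ← EReal.coe_sub,
    ← EReal.coe_add, EReal.coe_le_coe_iff]
  -- convexity / majorization instances
  have hA1 := hf_low (xk (j + 1 + 1)) x
  have hA2 := hf_up (xk (j + 1 + 1)) (xk (j + 1))
  have hA3 := hf_low x (xk (j + 1))
  have hB1 := hg_low (yk (j + 1 + 1)) y
  have hB2 := hg_up (yk (j + 1 + 1)) (yk (j + 1))
  have hB3 := hg_low y (yk (j + 1))
  -- combined q-monotonicity inequality, premultiplied by α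
  have hC := mul_le_mul_of_nonneg_left (add_le_add HC1 HC2) hα.le
  -- positive semidefinite slack terms
  have hP1 := hSf_psd (xk (j + 1 + 1) + xk (j + 1) - (2:ℝ) • x)
  have hP2 := hSg_psd (yk (j + 1 + 1) + yk (j + 1) - (2:ℝ) • y)
  have hP3 := mul_nonneg (mul_nonneg (show (0:ℝ) ≤ 1 - α by linarith) hσ.le)
    (real_inner_self_nonneg
      (x := (Astar (xk (j + 1 + 1)) + Bstar (yk (j + 1)) - c)
        + (Astar (xk (j + 1)) + Bstar (yk (j + 1)) - c)))
  have hM1 := mul_nonneg hα.le (hWle (yk (j + 1 + 1) + yk j - (2:ℝ) • yk (j + 1)))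
  have hM2 := mul_nonneg hα.le (hhalf (yk (j + 1 + 1) + yk j - (2:ℝ) • yk (j + 1)))
  have hM3 := mul_nonneg hα.le (hWpsd (yk (j + 1 + 1) - yk j))
  -- z-update based expansion of the (τσ)⁻¹ ‖z^{k+1} - z‖² term
  have hτσ : (0:ℝ) < τ * σ := mul_pos hτ hσ
  have hzdiff : (τ * σ)⁻¹ * ‖zk (j + 1 + 1) - z‖ ^ 2
      = (τ * σ)⁻¹ * ‖zk (j + 1) - z‖ ^ 2
        + 2 * ⟪zk (j + 1) - z, Astar (xk (j + 1 + 1)) + Bstar (yk (j + 1 + 1)) - c⟫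
        + τ * σ * ‖Astar (xk (j + 1 + 1)) + Bstar (yk (j + 1 + 1)) - c‖ ^ 2 := by
    rw [hiter_z (j + 1)]
    have hexp : ‖zk (j + 1) + (τ * σ) • (Astar (xk (j + 1 + 1)) + Bstar (yk (j + 1 + 1)) - c) - z‖ ^ 2
        = ‖zk (j + 1) - z‖ ^ 2
          + (τ * σ) * (2 * ⟪zk (j + 1) - z, Astar (xk (j + 1 + 1)) + Bstar (yk (j + 1 + 1)) - c⟫)
          + (τ * σ) ^ 2 * ‖Astar (xk (j + 1 + 1)) + Bstar (yk (j + 1 + 1)) - c‖ ^ 2 := by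
      rw [← real_inner_self_eq_norm_sq, ← real_inner_self_eq_norm_sq,
        ← real_inner_self_eq_norm_sq]
      simp only [inner_add_left, inner_add_right, inner_sub_left, inner_sub_right,
        real_inner_smul_left, real_inner_smul_right, real_inner_comm]
      ring
    rw [hexp]
    field_simp
  -- helper rewriting lemmas
  have hA' : ∀ (x' : X) (w : Z), ⟪x', A w⟫ = ⟪Astar x', w⟫ := fun x' w => by
    rw [real_inner_comm, hA, real_inner_comm]
  have hB' : ∀ (y' : Y) (w : Z), ⟪y', B w⟫ = ⟪Bstar y', w⟫ := fun y' w => by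
    rw [real_inner_comm, hB, real_inner_comm]
  have hnX : ∀ w : X, ‖w‖ ^ 2 = ⟪w, w⟫ := fun w => (real_inner_self_eq_norm_sq w).symm
  have hnY : ∀ w : Y, ‖w‖ ^ 2 = ⟪w, w⟫ := fun w => (real_inner_self_eq_norm_sq w).symm
  have hnZ : ∀ w : Z, ‖w‖ ^ 2 = ⟪w, w⟫ := fun w => (real_inner_self_eq_norm_sq w).symm
  have hsymSf : ∀ p' q' : X, ⟪p', Sf q'⟫ = ⟪q', Sf p'⟫ := fun p' q' =>
    (real_inner_comm _ _).trans (hSf_sym _ _)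
  have hsymSfh : ∀ p' q' : X, ⟪p', Sfh q'⟫ = ⟪q', Sfh p'⟫ := fun p' q' =>
    (real_inner_comm _ _).trans (hSfh_sym _ _)
  have hsymS : ∀ p' q' : X, ⟪p', S q'⟫ = ⟪q', S p'⟫ := fun p' q' =>
    (real_inner_comm _ _).trans (hS_sym _ _)
  have hsymSg : ∀ p' q' : Y, ⟪p', Sg q'⟫ = ⟪q', Sg p'⟫ := fun p' q' =>
    (real_inner_comm _ _).trans (hSg_sym _ _)
  have hsymSgh : ∀ p' q' : Y, ⟪p', Sgh q'⟫ = ⟪q', Sgh p'⟫ := fun p' q' =>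
    (real_inner_comm _ _).trans (hSgh_sym _ _)
  have hsymT : ∀ p' q' : Y, ⟪p', T q'⟫ = ⟪q', T p'⟫ := fun p' q' =>
    (real_inner_comm _ _).trans (hT_sym _ _)
  have hsymW : ∀ p' q' : Y, ⟪p', Wop q'⟫ = ⟪q', Wop p'⟫ := fun p' q' =>
    (real_inner_comm _ _).trans (hWsym _ _)
  have hWeq' : g' (yk j) = g' (yk (j + 1)) - Wop (yk (j + 1) - yk j) := by
    rw [← hWeq]; abel
  rcases le_total τ 1 with hτ1 | hτ1
  · -- case τ ≤ 1
    have hτi : τ ≤ τ⁻¹ := by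
      nlinarith [inv_pos.mpr hτ, mul_inv_cancel₀ hτ.ne']
    have hm1 : min τ τ⁻¹ = τ := min_eq_left hτi
    have hm2 : min τ (1 + τ - τ ^ 2) = τ := min_eq_left (by nlinarith)
    have hm3 : min (1 + τ) (1 + τ⁻¹) = 1 + τ := min_eq_left (by linarith)
    rw [hm1, hm2, hm3, hzdiff]
    have hcs := mul_nonneg (mul_nonneg hα.le
        (mul_nonneg (show (0:ℝ) ≤ 1 - τ by linarith) hσ.le))
      (real_inner_self_nonneg
        (x := (Bstar (yk (j + 1 + 1)) - Bstar (yk (j + 1)))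
          - (Astar (xk (j + 1)) + Bstar (yk (j + 1)) - c)))
    simp only [hiter_z j, hWeq', hnX, hnY, hnZ, map_add, map_sub, map_smul,
      inner_add_left, inner_add_right, inner_sub_left, inner_sub_right,
      inner_neg_left, inner_neg_right, real_inner_smul_left, real_inner_smul_right,
      hA', hB'] at H1 H2 hC hA1 hA2 hA3 hB1 hB2 hB3 hP1 hP2 hP3 hM1 hM2 hM3 hcs ⊢
    simp only [hsymSf, hsymSfh, hsymS, hsymSg, hsymSgh, hsymT, hsymW]
      at H1 H2 hC hA1 hA2 hA3 hB1 hB2 hB3 hP1 hP2 hP3 hM1 hM2 hM3 hcs ⊢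
    simp only [real_inner_comm]
      at H1 H2 hC hA1 hA2 hA3 hB1 hB2 hB3 hP1 hP2 hP3 hM1 hM2 hM3 hcs ⊢
    linarith [H1, H2, hC, hA1, hA2, hA3, hB1, hB2, hB3, hP1, hP2, hP3, hM1, hM2, hM3, hcs]
  · -- case 1 ≤ τ
    have hτi : τ⁻¹ ≤ τ := by
      nlinarith [inv_pos.mpr hτ, mul_inv_cancel₀ hτ.ne']
    have hm1 : min τ τ⁻¹ = τ⁻¹ := min_eq_right hτi
    have hm2 : min τ (1 + τ - τ ^ 2) = 1 + τ - τ ^ 2 := min_eq_right (by nlinarith)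
    have hm3 : min (1 + τ) (1 + τ⁻¹) = 1 + τ⁻¹ := min_eq_right (by linarith)
    rw [hm1, hm2, hm3, hzdiff]
    have hcs : (0:ℝ) ≤ α * σ *
        ((τ - 1) * ⟪Astar (xk (j + 1)) + Bstar (yk (j + 1)) - c,
            Bstar (yk (j + 1 + 1)) - Bstar (yk (j + 1))⟫
          + (τ ^ 2 - τ) / 2 * ⟪Bstar (yk (j + 1 + 1)) - Bstar (yk (j + 1)),
              Bstar (yk (j + 1 + 1)) - Bstar (yk (j + 1))⟫
          + (1 - τ⁻¹) / 2 * ⟪Astar (xk (j + 1)) + Bstar (yk (j + 1)) - c,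
              Astar (xk (j + 1)) + Bstar (yk (j + 1)) - c⟫) := by
      have hkey : (τ - 1) * ⟪Astar (xk (j + 1)) + Bstar (yk (j + 1)) - c,
            Bstar (yk (j + 1 + 1)) - Bstar (yk (j + 1))⟫
          + (τ ^ 2 - τ) / 2 * ⟪Bstar (yk (j + 1 + 1)) - Bstar (yk (j + 1)),
              Bstar (yk (j + 1 + 1)) - Bstar (yk (j + 1))⟫
          + (1 - τ⁻¹) / 2 * ⟪Astar (xk (j + 1)) + Bstar (yk (j + 1)) - c,
              Astar (xk (j + 1)) + Bstar (yk (j + 1)) - c⟫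
          = ((τ - 1) / (2 * τ)) *
            ⟪τ • (Bstar (yk (j + 1 + 1)) - Bstar (yk (j + 1)))
              + (Astar (xk (j + 1)) + Bstar (yk (j + 1)) - c),
             τ • (Bstar (yk (j + 1 + 1)) - Bstar (yk (j + 1)))
              + (Astar (xk (j + 1)) + Bstar (yk (j + 1)) - c)⟫ := by
        simp only [inner_add_left, inner_add_right, real_inner_smul_left,
          real_inner_smul_right, real_inner_comm]
        field_simp
        ring
      rw [hkey]
      exact mul_nonneg (mul_nonneg hα.le hσ.le)
        (mul_nonneg (div_nonneg (by linarith) (by linarith)) real_inner_self_nonneg)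
    simp only [hiter_z j, hWeq', hnX, hnY, hnZ, map_add, map_sub, map_smul,
      inner_add_left, inner_add_right, inner_sub_left, inner_sub_right,
      inner_neg_left, inner_neg_right, real_inner_smul_left, real_inner_smul_right,
      hA', hB'] at H1 H2 hC hA1 hA2 hA3 hB1 hB2 hB3 hP1 hP2 hP3 hM1 hM2 hM3 hcs ⊢
    simp only [hsymSf, hsymSfh, hsymS, hsymSg, hsymSgh, hsymT, hsymW]
      at H1 H2 hC hA1 hA2 hA3 hB1 hB2 hB3 hP1 hP2 hP3 hM1 hM2 hM3 hcs ⊢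
    simp only [real_inner_comm]
      at H1 H2 hC hA1 hA2 hA3 hB1 hB2 hB3 hP1 hP2 hP3 hM1 hM2 hM3 hcs ⊢
    linarith [H1, H2, hC, hA1, hA2, hA3, hB1, hB2, hB3, hP1, hP2, hP3, hM1, hM2, hM3, hcs]
end

section
/- Let (x̄, ȳ, z̄) be a KKT point. Then for every η ∈ (0, 1/2), with β := η(1−η)/(1−2η), and every k ≥ 0: (φ̄_k + βσ‖r^k‖²) − (φ̄_{k+1} + βσ‖r^{k+1}‖²) ≥ [(1/(τ²σ))‖z^{k+1} − z^k‖² + ‖x^{k+1} − x^k‖²_{Σ̂_f+S+ησAA*} + ‖y^{k+1} − y^k‖²_{Σ̂_g+T+ησBB*}] − [((τ+β)/(τ²σ))‖z^{k+1} − z^k‖² + ‖x^{k+1} − x^k‖²_{Σ̂_f−(1/2)Σ_f} + ‖y^{k+1} − y^k‖²_{Σ̂_g−(1/2)Σ_g+ησBB*}]. -/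
/-!
Adding the optimality condition of each subproblem to the matching KKT condition and using
monotonicity of `∂p` and `∂q` gives one inner-product inequality per block. The quadratic bounds on
`f` and `g` turn the gradient terms into `‖d‖²_{Σ/2 - Σ̂}` (three-point inequality), and symmetry of
`Σ̂_f + S`, `Σ̂_g + T` turns the cross terms into differences of the weighted distances in `φ̄_k`.
The multiplier update does the same for the `z`-terms. What is left is
`σ‖r^{k+1} - B*(y^{k+1} - y^k)‖² + βσ‖r^k‖²`, and since `r^k` differs from the first vector by
`A*(x^{k+1} - x^k)`, it dominates `ησ‖A*(x^{k+1} - x^k)‖²` as soon as `β(1 - η) ≥ η`.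
-/

open scoped RealInnerProductSpace

section

variable {E Z : Type*} [NormedAddCommGroup E] [InnerProductSpace ℝ E]
  [NormedAddCommGroup Z] [InnerProductSpace ℝ Z]

theorem inner_sub_sub_nonpos_of_forall_add_inner_le {p : E → EReal} {x₁ x₂ g₁ g₂ : E}
    (hx₁_top : p x₁ ≠ ⊤) (hx₁_bot : p x₁ ≠ ⊥) (hx₂_top : p x₂ ≠ ⊤) (hx₂_bot : p x₂ ≠ ⊥)
    (hg₁ : ∀ x, p x₁ + ((⟪x₁ - x, g₁⟫ : ℝ) : EReal) ≤ p x)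
    (hg₂ : ∀ x, p x₂ + ((⟪x₂ - x, g₂⟫ : ℝ) : EReal) ≤ p x) :
    ⟪x₁ - x₂, g₁ - g₂⟫ ≤ 0 := by
  have h₁ := hg₁ x₂
  have h₂ := hg₂ x₁
  rw [← EReal.coe_toReal hx₁_top hx₁_bot, ← EReal.coe_toReal hx₂_top hx₂_bot, ← EReal.coe_add,
    EReal.coe_le_coe_iff] at h₁ h₂
  have hswap : ⟪x₂ - x₁, g₂⟫ = -⟪x₁ - x₂, g₂⟫ := by rw [← inner_neg_left, neg_sub]
  rw [inner_sub_right]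
  linarith

theorem LinearMap.IsSymmetric.inner_sub_map_sub {Q : E →ₗ[ℝ] E} (hQ : Q.IsSymmetric) (a b : E) :
    ⟪a - b, Q (a - b)⟫ = ⟪a, Q a⟫ - 2 * ⟪a, Q b⟫ + ⟪b, Q b⟫ := by
  rw [map_sub, inner_sub_left, inner_sub_right, inner_sub_right, ← hQ b a, real_inner_comm (Q b)]
  ring

theorem LinearMap.IsSymmetric.inner_add_map_add_le {Q : E →ₗ[ℝ] E} (hQ : Q.IsSymmetric)
    (hpos : ∀ u, 0 ≤ ⟪u, Q u⟫) (a b : E) :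
    ⟪a + b, Q (a + b)⟫ ≤ 2 * ⟪a, Q a⟫ + 2 * ⟪b, Q b⟫ := by
  have hsub := hQ.inner_sub_map_sub a b
  have hadd := hQ.inner_sub_map_sub a (-b)
  rw [sub_neg_eq_add, map_neg, inner_neg_left, inner_neg_right, inner_neg_right, neg_neg] at hadd
  linarith [hpos (a - b)]

theorem quarter_sub_half_le_inner_sub_gradient_sub {f : E → ℝ} {f' : E → E} {Q Q' : E →ₗ[ℝ] E}
    (hQ : Q.IsSymmetric) (hQpos : ∀ u, 0 ≤ ⟪u, Q u⟫)
    (hlow : ∀ x x', f x' + ⟪x - x', f' x'⟫ + (1/2) * ⟪x - x', Q (x - x')⟫ ≤ f x)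
    (hup : ∀ x x', f x ≤ f x' + ⟪x - x', f' x'⟫ + (1/2) * ⟪x - x', Q' (x - x')⟫)
    (x x' x₀ : E) :
    (1/4) * ⟪x' - x, Q (x' - x)⟫ - (1/2) * ⟪x' - x, Q' (x' - x)⟫ ≤ ⟪x' - x₀, f' x - f' x₀⟫ := by
  have h₁ := hlow x₀ x
  have h₂ := hup x' x
  have h₃ := hlow x' x₀
  have hquad := hQ.inner_add_map_add_le hQpos (x' - x₀) (x₀ - x)
  rw [sub_add_sub_cancel] at hquad
  have hlin : ⟪x₀ - x, f' x⟫ - ⟪x' - x, f' x⟫ = -⟪x' - x₀, f' x⟫ := by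
    rw [← inner_sub_left, ← inner_neg_left, sub_sub_sub_cancel_right, neg_sub]
  rw [inner_sub_right]
  linarith

theorem mul_norm_sq_le_norm_sq_add_mul_norm_sub_sq {β η : ℝ} (hβ : 0 ≤ β)
    (hη : η ≤ β * (1 - η)) (s a : E) :
    η * ‖a‖ ^ 2 ≤ ‖s‖ ^ 2 + β * ‖s - a‖ ^ 2 := by
  have key : (1 + β) * (‖s‖ ^ 2 + β * ‖s - a‖ ^ 2 - η * ‖a‖ ^ 2)
      = ‖(1 + β) • s - β • a‖ ^ 2 + (β * (1 - η) - η) * ‖a‖ ^ 2 := by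
    rw [norm_sub_sq_real, norm_sub_sq_real, norm_smul, norm_smul, real_inner_smul_left,
      real_inner_smul_right, Real.norm_of_nonneg (by linarith), Real.norm_of_nonneg hβ]
    ring
  have hnonneg : 0 ≤ (1 + β) * (‖s‖ ^ 2 + β * ‖s - a‖ ^ 2 - η * ‖a‖ ^ 2) := by
    rw [key]
    exact add_nonneg (sq_nonneg _) (mul_nonneg (sub_nonneg.2 hη) (sq_nonneg _))
  linarith [(mul_nonneg_iff_of_pos_left (by linarith : (0 : ℝ) < 1 + β)).1 hnonneg]

theorem admm_block_estimate {p : E → EReal} {f : E → ℝ} {f' : E → E} {Q Q' S : E →ₗ[ℝ] E}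
    {L : Z →ₗ[ℝ] E} {Lstar : E →ₗ[ℝ] Z} (hL : ∀ z x, ⟪L z, x⟫ = ⟪z, Lstar x⟫)
    (hQ : Q.IsSymmetric) (hQpos : ∀ u, 0 ≤ ⟪u, Q u⟫) (hQ' : Q'.IsSymmetric) (hS : S.IsSymmetric)
    (hlow : ∀ x x', f x' + ⟪x - x', f' x'⟫ + (1/2) * ⟪x - x', Q (x - x')⟫ ≤ f x)
    (hup : ∀ x x', f x ≤ f x' + ⟪x - x', f' x'⟫ + (1/2) * ⟪x - x', Q' (x - x')⟫)
    {x x' x₀ : E} {ζ z₀ : Z} (hx'_top : p x' ≠ ⊤) (hx'_bot : p x' ≠ ⊥)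
    (hx₀_top : p x₀ ≠ ⊤) (hx₀_bot : p x₀ ≠ ⊥)
    (hstep : ∀ y, p x' + ((⟪x' - y, f' x + L ζ + (Q' (x' - x) + S (x' - x))⟫ : ℝ) : EReal) ≤ p y)
    (hkkt : ∀ y, p x₀ + ((⟪x₀ - y, f' x₀ + L z₀⟫ : ℝ) : EReal) ≤ p y) :
    ⟪x' - x₀, Q' (x' - x₀) + S (x' - x₀)⟫ - ⟪x - x₀, Q' (x - x₀) + S (x - x₀)⟫
      + ⟪x' - x, S (x' - x)⟫ + (1/2) * ⟪x' - x, Q (x' - x)⟫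
      + 2 * ⟪Lstar (x' - x₀), ζ - z₀⟫ ≤ 0 := by
  have hmono := inner_sub_sub_nonpos_of_forall_add_inner_le hx'_top hx'_bot hx₀_top hx₀_bot hstep hkkt
  have hgrad := quarter_sub_half_le_inner_sub_gradient_sub hQ hQpos hlow hup x x' x₀
  have hadj : ⟪x' - x₀, L ζ - L z₀⟫ = ⟪Lstar (x' - x₀), ζ - z₀⟫ := by
    rw [← map_sub, real_inner_comm, hL, real_inner_comm]
  rw [show f' x + L ζ + (Q' (x' - x) + S (x' - x)) - (f' x₀ + L z₀)
      = (f' x - f' x₀) + (L ζ - L z₀) + Q' (x' - x) + S (x' - x) by abel,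
    inner_add_right, inner_add_right, inner_add_right, hadj] at hmono
  rw [show x - x₀ = (x' - x₀) - (x' - x) by abel, inner_add_right, inner_add_right,
    hQ'.inner_sub_map_sub (x' - x₀) (x' - x), hS.inner_sub_map_sub (x' - x₀) (x' - x)]
  linarith

theorem inv_mul_norm_sub_sq_sub_of_eq_add_smul {t : ℝ} (ht : t ≠ 0) {z z' z₀ r : Z}
    (hz : z' = z + t • r) :
    t⁻¹ * ‖z - z₀‖ ^ 2 - t⁻¹ * ‖z' - z₀‖ ^ 2 = -2 * ⟪r, z - z₀⟫ - t * ‖r‖ ^ 2 := by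
  rw [hz, show z + t • r - z₀ = (z - z₀) + t • r by abel, norm_add_sq_real, norm_smul,
    real_inner_smul_right, real_inner_comm, Real.norm_eq_abs, mul_pow, sq_abs]
  field_simp
  ring

-- Read `u, v, w, a` as `A*(x^{k+1} - x̄)`, `B*(y^{k+1} - ȳ)`, `B*(y^{k+1} - y^k)`, `A*(x^{k+1} - x^k)`,
-- so that `u + v = r^{k+1}` and `u - a + (v - w) = r^k`.
theorem admm_multiplier_estimate {σ τ β η : ℝ} (hσ : 0 < σ) (hτ : 0 < τ) (hβ : 0 ≤ β)
    (hη : η ≤ β * (1 - η)) {z z' z₀ u v w a : Z} (hz : z' = z + (τ * σ) • (u + v)) :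
    1 / (τ ^ 2 * σ) * ‖z' - z‖ ^ 2 - (τ + β) / (τ ^ 2 * σ) * ‖z' - z‖ ^ 2 + η * σ * ‖a‖ ^ 2
      ≤ (τ * σ)⁻¹ * ‖z - z₀‖ ^ 2 - (τ * σ)⁻¹ * ‖z' - z₀‖ ^ 2 + σ * ‖v - w‖ ^ 2 - σ * ‖v‖ ^ 2
        + β * σ * ‖u - a + (v - w)‖ ^ 2 - β * σ * ‖u + v‖ ^ 2
        + 2 * ⟪u, z + σ • (u + (v - w)) - z₀⟫ + 2 * ⟪v, z + σ • (u + v) - z₀⟫ := by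
  have hdual := inv_mul_norm_sub_sq_sub_of_eq_add_smul (z₀ := z₀) (by positivity) hz
  have hdz : 1 / (τ ^ 2 * σ) * ‖z' - z‖ ^ 2 - (τ + β) / (τ ^ 2 * σ) * ‖z' - z‖ ^ 2
      = (1 - τ - β) * σ * ‖u + v‖ ^ 2 := by
    rw [hz, add_sub_cancel_left, norm_smul, mul_pow, Real.norm_of_nonneg (by positivity)]
    field_simp
    ring
  have hres := mul_le_mul_of_nonneg_left
    (mul_norm_sq_le_norm_sq_add_mul_norm_sub_sq hβ hη (u + v - w) a) hσ.le
  have hinner : ⟪u, z + σ • (u + (v - w)) - z₀⟫ + ⟪v, z + σ • (u + v) - z₀⟫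
      = ⟪u + v, z - z₀⟫ + σ * (‖u + v‖ ^ 2 - ⟪u + v, w⟫ + ⟪v, w⟫) := by
    rw [← real_inner_self_eq_norm_sq]
    simp only [inner_add_left, inner_add_right, inner_sub_right, real_inner_smul_right]
    ring
  rw [norm_sub_sq_real (u + v) w] at hres
  rw [show u - a + (v - w) = u + v - w - a by abel, norm_sub_sq_real v w]
  linarith

theorem inner_map_adjoint_self {L : Z →ₗ[ℝ] E} {Lstar : E →ₗ[ℝ] Z}
    (hL : ∀ z x, ⟪L z, x⟫ = ⟪z, Lstar x⟫) (x : E) :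
    ⟪x, L (Lstar x)⟫ = ‖Lstar x‖ ^ 2 := by
  rw [real_inner_comm, hL, real_inner_self_eq_norm_sq]

end

set_option maxHeartbeats 1000000 in
theorem stmt7_general
    {X Y Z : Type*}
    [NormedAddCommGroup X] [InnerProductSpace ℝ X]
    [NormedAddCommGroup Y] [InnerProductSpace ℝ Y]
    [NormedAddCommGroup Z] [InnerProductSpace ℝ Z]
    (A : Z →ₗ[ℝ] X) (Astar : X →ₗ[ℝ] Z)
    (B : Z →ₗ[ℝ] Y) (Bstar : Y →ₗ[ℝ] Z)
    (hA : ∀ (z : Z) (x : X), ⟪A z, x⟫ = ⟪z, Astar x⟫)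
    (hB : ∀ (z : Z) (y : Y), ⟪B z, y⟫ = ⟪z, Bstar y⟫)
    (c : Z) (σ τ : ℝ) (hσ : 0 < σ) (hτ : 0 < τ)
    (p : X → EReal) (q : Y → EReal)
    (hp_nebot : ∀ x, p x ≠ ⊥)
    (hq_nebot : ∀ y, q y ≠ ⊥)
    (f : X → ℝ) (g : Y → ℝ) (f' : X → X) (g' : Y → Y)
    (Sf Sfh S : X →ₗ[ℝ] X) (Sg Sgh T : Y →ₗ[ℝ] Y)
    (hSf_sym : ∀ u v : X, ⟪Sf u, v⟫ = ⟪u, Sf v⟫) (hSf_psd : ∀ u : X, 0 ≤ ⟪u, Sf u⟫)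
    (hSfh_sym : ∀ u v : X, ⟪Sfh u, v⟫ = ⟪u, Sfh v⟫)
    (hS_sym : ∀ u v : X, ⟪S u, v⟫ = ⟪u, S v⟫)
    (hSg_sym : ∀ u v : Y, ⟪Sg u, v⟫ = ⟪u, Sg v⟫) (hSg_psd : ∀ u : Y, 0 ≤ ⟪u, Sg u⟫)
    (hSgh_sym : ∀ u v : Y, ⟪Sgh u, v⟫ = ⟪u, Sgh v⟫)
    (hT_sym : ∀ u v : Y, ⟪T u, v⟫ = ⟪u, T v⟫)
    (hf_low : ∀ x x' : X, f x' + ⟪x - x', f' x'⟫ + (1/2) * ⟪x - x', Sf (x - x')⟫ ≤ f x)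
    (hf_up : ∀ x x' : X, f x ≤ f x' + ⟪x - x', f' x'⟫ + (1/2) * ⟪x - x', Sfh (x - x')⟫)
    (hg_low : ∀ y y' : Y, g y' + ⟪y - y', g' y'⟫ + (1/2) * ⟪y - y', Sg (y - y')⟫ ≤ g y)
    (hg_up : ∀ y y' : Y, g y ≤ g y' + ⟪y - y', g' y'⟫ + (1/2) * ⟪y - y', Sgh (y - y')⟫)
    (xk : ℕ → X) (yk : ℕ → Y) (zk : ℕ → Z)
    (hxdom : ∀ k, p (xk k) ≠ ⊤) (hydom : ∀ k, q (yk k) ≠ ⊤)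
    (hiter_x : ∀ (k : ℕ) (x : X),
      p (xk (k + 1)) + ((⟪xk (k + 1) - x, f' (xk k)
        + A (zk k + σ • (Astar (xk (k + 1)) + Bstar (yk k) - c))
        + (Sfh (xk (k + 1) - xk k) + S (xk (k + 1) - xk k))⟫ : ℝ) : EReal) ≤ p x)
    (hiter_y : ∀ (k : ℕ) (y : Y),
      q (yk (k + 1)) + ((⟪yk (k + 1) - y, g' (yk k)
        + B (zk k + σ • (Astar (xk (k + 1)) + Bstar (yk (k + 1)) - c))
        + (Sgh (yk (k + 1) - yk k) + T (yk (k + 1) - yk k))⟫ : ℝ) : EReal) ≤ q y)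
    (hiter_z : ∀ k : ℕ, zk (k + 1) = zk k + (τ * σ) • (Astar (xk (k + 1)) + Bstar (yk (k + 1)) - c))

    (xb : X) (yb : Y) (zb : Z)
    (hxb_dom : p xb ≠ ⊤) (hyb_dom : q yb ≠ ⊤)
    (hKKT_x : ∀ x : X, p xb + ((⟪xb - x, f' xb + A zb⟫ : ℝ) : EReal) ≤ p x)
    (hKKT_y : ∀ y : Y, q yb + ((⟪yb - y, g' yb + B zb⟫ : ℝ) : EReal) ≤ q y)
    (hKKT_c : Astar xb + Bstar yb = c)
 :
    ∀ η β : ℝ, 0 < η → η < 1/2 → β = η * (1 - η) / (1 - 2 * η) → ∀ k : ℕ,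
      ((1 / (τ ^ 2 * σ)) * ‖zk (k + 1) - zk k‖ ^ 2
          + ⟪(xk (k + 1) - xk k), Sfh (xk (k + 1) - xk k) + S (xk (k + 1) - xk k) + (η * σ) • A (Astar (xk (k + 1) - xk k))⟫
          + ⟪(yk (k + 1) - yk k), Sgh (yk (k + 1) - yk k) + T (yk (k + 1) - yk k) + (η * σ) • B (Bstar (yk (k + 1) - yk k))⟫)
        - (((τ + β) / (τ ^ 2 * σ)) * ‖zk (k + 1) - zk k‖ ^ 2
          + ⟪(xk (k + 1) - xk k), Sfh (xk (k + 1) - xk k) - (1/2 : ℝ) • Sf (xk (k + 1) - xk k)⟫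
          + ⟪(yk (k + 1) - yk k), Sgh (yk (k + 1) - yk k) - (1/2 : ℝ) • Sg (yk (k + 1) - yk k) + (η * σ) • B (Bstar (yk (k + 1) - yk k))⟫)
      ≤ (((τ * σ)⁻¹ * ‖zk k - zb‖ ^ 2 + ⟪xk k - xb, Sfh (xk k - xb) + S (xk k - xb)⟫ + ⟪yk k - yb, Sgh (yk k - yb) + T (yk k - yb) + σ • B (Bstar (yk k - yb))⟫) + β * σ * ‖Astar (xk k) + Bstar (yk k) - c‖ ^ 2)
        - (((τ * σ)⁻¹ * ‖zk (k + 1) - zb‖ ^ 2 + ⟪xk (k + 1) - xb, Sfh (xk (k + 1) - xb) + S (xk (k + 1) - xb)⟫ + ⟪yk (k + 1) - yb, Sgh (yk (k + 1) - yb) + T (yk (k + 1) - yb) + σ • B (Bstar (yk (k + 1) - yb))⟫) + β * σ * ‖Astar (xk (k + 1)) + Bstar (yk (k + 1)) - c‖ ^ 2) := by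
  intro η β hη hη' hβ k
  have hβ₀ : 0 ≤ β := by rw [hβ]; apply div_nonneg <;> nlinarith
  -- `β (1 - η) - η = η³ / (1 - 2η)`
  have hβη : η ≤ β * (1 - η) := by
    rw [hβ, div_mul_eq_mul_div, le_div_iff₀ (by linarith)]
    nlinarith [pow_pos hη 3]
  have hr : Astar (xk (k + 1)) + Bstar (yk (k + 1)) - c
      = Astar (xk (k + 1) - xb) + Bstar (yk (k + 1) - yb) := by
    rw [← hKKT_c]; simp only [map_sub]; abel
  have hr' : Astar (xk (k + 1)) + Bstar (yk k) - c
      = Astar (xk (k + 1) - xb) + (Bstar (yk (k + 1) - yb) - Bstar (yk (k + 1) - yk k)) := by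
    rw [← hKKT_c]; simp only [map_sub]; abel
  have hr₀ : Astar (xk k) + Bstar (yk k) - c = Astar (xk (k + 1) - xb) - Astar (xk (k + 1) - xk k)
      + (Bstar (yk (k + 1) - yb) - Bstar (yk (k + 1) - yk k)) := by
    rw [← hKKT_c]; simp only [map_sub]; abel
  have hy₀ : Bstar (yk k - yb) = Bstar (yk (k + 1) - yb) - Bstar (yk (k + 1) - yk k) := by
    simp only [map_sub]; abel
  have hx := admm_block_estimate hA hSf_sym hSf_psd hSfh_sym hS_sym hf_low hf_up
    (hxdom (k + 1)) (hp_nebot _) hxb_dom (hp_nebot _) (hiter_x k) hKKT_x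
  have hy := admm_block_estimate hB hSg_sym hSg_psd hSgh_sym hT_sym hg_low hg_up
    (hydom (k + 1)) (hq_nebot _) hyb_dom (hq_nebot _) (hiter_y k) hKKT_y
  have hz := admm_multiplier_estimate (z₀ := zb) (a := Astar (xk (k + 1) - xk k))
    (w := Bstar (yk (k + 1) - yk k)) hσ hτ hβ₀ hβη ((hiter_z k).trans (by rw [hr]))
  rw [hr'] at hx
  rw [hr] at hy
  rw [hr, hr₀]
  simp only [inner_add_right, inner_sub_right, real_inner_smul_right, inner_map_adjoint_self hA,
    inner_map_adjoint_self hB] at hx hy hz ⊢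
  rw [hy₀]
  linarith

set_option maxHeartbeats 1000000 in
theorem stmt7
    {X Y Z : Type*}
    [NormedAddCommGroup X] [InnerProductSpace ℝ X] [FiniteDimensional ℝ X]
    [NormedAddCommGroup Y] [InnerProductSpace ℝ Y] [FiniteDimensional ℝ Y]
    [NormedAddCommGroup Z] [InnerProductSpace ℝ Z] [FiniteDimensional ℝ Z]
    (A : Z →ₗ[ℝ] X) (Astar : X →ₗ[ℝ] Z)
    (B : Z →ₗ[ℝ] Y) (Bstar : Y →ₗ[ℝ] Z)
    (hA : ∀ (z : Z) (x : X), ⟪A z, x⟫ = ⟪z, Astar x⟫)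
    (hB : ∀ (z : Z) (y : Y), ⟪B z, y⟫ = ⟪z, Bstar y⟫)
    (c : Z) (σ τ : ℝ) (hσ : 0 < σ) (hτ : 0 < τ)
    (p : X → EReal) (q : Y → EReal)
    (hp_proper : ∃ x, p x ≠ ⊤) (hp_nebot : ∀ x, p x ≠ ⊥)
    (hq_proper : ∃ y, q y ≠ ⊤) (hq_nebot : ∀ y, q y ≠ ⊥)
    (hp_convex : ∀ (x x' : X) (t : ℝ), 0 ≤ t → t ≤ 1 →
      p (t • x + (1 - t) • x') ≤ ((t : ℝ) : EReal) * p x + (((1 - t : ℝ)) : EReal) * p x')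
    (hq_convex : ∀ (y y' : Y) (t : ℝ), 0 ≤ t → t ≤ 1 →
      q (t • y + (1 - t) • y') ≤ ((t : ℝ) : EReal) * q y + (((1 - t : ℝ)) : EReal) * q y')
    (f : X → ℝ) (g : Y → ℝ) (f' : X → X) (g' : Y → Y)
    (hf : ∀ x, HasGradientAt f (f' x) x) (hg : ∀ y, HasGradientAt g (g' y) y)
    (hfc : ConvexOn ℝ Set.univ f) (hgc : ConvexOn ℝ Set.univ g)
    (Sf Sfh S : X →ₗ[ℝ] X) (Sg Sgh T : Y →ₗ[ℝ] Y)
    (hSf_sym : ∀ u v : X, ⟪Sf u, v⟫ = ⟪u, Sf v⟫) (hSf_psd : ∀ u : X, 0 ≤ ⟪u, Sf u⟫)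
    (hSfh_sym : ∀ u v : X, ⟪Sfh u, v⟫ = ⟪u, Sfh v⟫) (hSfh_psd : ∀ u : X, 0 ≤ ⟪u, Sfh u⟫)
    (hSfh_ge : ∀ u : X, ⟪u, Sf u⟫ ≤ ⟪u, Sfh u⟫)
    (hS_sym : ∀ u v : X, ⟪S u, v⟫ = ⟪u, S v⟫)
    (hSg_sym : ∀ u v : Y, ⟪Sg u, v⟫ = ⟪u, Sg v⟫) (hSg_psd : ∀ u : Y, 0 ≤ ⟪u, Sg u⟫)
    (hSgh_sym : ∀ u v : Y, ⟪Sgh u, v⟫ = ⟪u, Sgh v⟫) (hSgh_psd : ∀ u : Y, 0 ≤ ⟪u, Sgh u⟫)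
    (hSgh_ge : ∀ u : Y, ⟪u, Sg u⟫ ≤ ⟪u, Sgh u⟫)
    (hT_sym : ∀ u v : Y, ⟪T u, v⟫ = ⟪u, T v⟫)
    (hf_low : ∀ x x' : X, f x' + ⟪x - x', f' x'⟫ + (1/2) * ⟪x - x', Sf (x - x')⟫ ≤ f x)
    (hf_up : ∀ x x' : X, f x ≤ f x' + ⟪x - x', f' x'⟫ + (1/2) * ⟪x - x', Sfh (x - x')⟫)
    (hg_low : ∀ y y' : Y, g y' + ⟪y - y', g' y'⟫ + (1/2) * ⟪y - y', Sg (y - y')⟫ ≤ g y)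
    (hg_up : ∀ y y' : Y, g y ≤ g y' + ⟪y - y', g' y'⟫ + (1/2) * ⟪y - y', Sgh (y - y')⟫)
    (xk : ℕ → X) (yk : ℕ → Y) (zk : ℕ → Z)
    (hxdom : ∀ k, p (xk k) ≠ ⊤) (hydom : ∀ k, q (yk k) ≠ ⊤)
    (hiter_x : ∀ (k : ℕ) (x : X),
      p (xk (k + 1)) + ((⟪xk (k + 1) - x, f' (xk k)
        + A (zk k + σ • (Astar (xk (k + 1)) + Bstar (yk k) - c))
        + (Sfh (xk (k + 1) - xk k) + S (xk (k + 1) - xk k))⟫ : ℝ) : EReal) ≤ p x)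
    (hiter_y : ∀ (k : ℕ) (y : Y),
      q (yk (k + 1)) + ((⟪yk (k + 1) - y, g' (yk k)
        + B (zk k + σ • (Astar (xk (k + 1)) + Bstar (yk (k + 1)) - c))
        + (Sgh (yk (k + 1) - yk k) + T (yk (k + 1) - yk k))⟫ : ℝ) : EReal) ≤ q y)
    (hiter_z : ∀ k : ℕ, zk (k + 1) = zk k + (τ * σ) • (Astar (xk (k + 1)) + Bstar (yk (k + 1)) - c))

    (xb : X) (yb : Y) (zb : Z)
    (hxb_dom : p xb ≠ ⊤) (hyb_dom : q yb ≠ ⊤)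
    (hKKT_x : ∀ x : X, p xb + ((⟪xb - x, f' xb + A zb⟫ : ℝ) : EReal) ≤ p x)
    (hKKT_y : ∀ y : Y, q yb + ((⟪yb - y, g' yb + B zb⟫ : ℝ) : EReal) ≤ q y)
    (hKKT_c : Astar xb + Bstar yb = c)
 :
    ∀ η β : ℝ, 0 < η → η < 1/2 → β = η * (1 - η) / (1 - 2 * η) → ∀ k : ℕ,
      ((1 / (τ ^ 2 * σ)) * ‖zk (k + 1) - zk k‖ ^ 2
          + ⟪(xk (k + 1) - xk k), Sfh (xk (k + 1) - xk k) + S (xk (k + 1) - xk k) + (η * σ) • A (Astar (xk (k + 1) - xk k))⟫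
          + ⟪(yk (k + 1) - yk k), Sgh (yk (k + 1) - yk k) + T (yk (k + 1) - yk k) + (η * σ) • B (Bstar (yk (k + 1) - yk k))⟫)
        - (((τ + β) / (τ ^ 2 * σ)) * ‖zk (k + 1) - zk k‖ ^ 2
          + ⟪(xk (k + 1) - xk k), Sfh (xk (k + 1) - xk k) - (1/2 : ℝ) • Sf (xk (k + 1) - xk k)⟫
          + ⟪(yk (k + 1) - yk k), Sgh (yk (k + 1) - yk k) - (1/2 : ℝ) • Sg (yk (k + 1) - yk k) + (η * σ) • B (Bstar (yk (k + 1) - yk k))⟫)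
      ≤ (((τ * σ)⁻¹ * ‖zk k - zb‖ ^ 2 + ⟪xk k - xb, Sfh (xk k - xb) + S (xk k - xb)⟫ + ⟪yk k - yb, Sgh (yk k - yb) + T (yk k - yb) + σ • B (Bstar (yk k - yb))⟫) + β * σ * ‖Astar (xk k) + Bstar (yk k) - c‖ ^ 2)
        - (((τ * σ)⁻¹ * ‖zk (k + 1) - zb‖ ^ 2 + ⟪xk (k + 1) - xb, Sfh (xk (k + 1) - xb) + S (xk (k + 1) - xb)⟫ + ⟪yk (k + 1) - yb, Sgh (yk (k + 1) - yb) + T (yk (k + 1) - yb) + σ • B (Bstar (yk (k + 1) - yb))⟫) + β * σ * ‖Astar (xk (k + 1)) + Bstar (yk (k + 1)) - c‖ ^ 2) :=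
  stmt7_general A Astar B Bstar hA hB c σ τ hσ hτ p q hp_nebot hq_nebot f g f' g' Sf Sfh S Sg Sgh T
    hSf_sym hSf_psd hSfh_sym hS_sym hSg_sym hSg_psd hSgh_sym hT_sym hf_low hf_up hg_low hg_up xk yk
    zk hxdom hydom hiter_x hiter_y hiter_z xb yb zb hxb_dom hyb_dom hKKT_x hKKT_y hKKT_c
end

section
/- Let (x̄, ȳ, z̄) be a KKT point, assume (1/2)Σ̂_g + T ⪰ 0 and the mean-value hypothesis. Then for every α ∈ (0, 1] and every k ≥ 1: [φ̄_k + (1 − α min(τ, τ⁻¹))σ‖r^k‖² + αξ_k] − [φ̄_{k+1} + (1 − α min(τ, τ⁻¹))σ‖r^{k+1}‖² + αξ_{k+1}] ≥ t_{k+1} + (−τ + α min(1+τ, 1+τ⁻¹))σ‖r^{k+1}‖². -/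
open scoped RealInnerProductSpace

lemma ereal_cancel {P Q : EReal} {c d : ℝ} (hPt : P ≠ ⊤) (hPb : P ≠ ⊥) (hQt : Q ≠ ⊤) (hQb : Q ≠ ⊥)
    (h1 : P + (c : EReal) ≤ Q) (h2 : Q + (d : EReal) ≤ P) : c + d ≤ 0 := by
  lift P to ℝ using ⟨hPt, hPb⟩ with pr
  lift Q to ℝ using ⟨hQt, hQb⟩ with qr
  rw [← EReal.coe_add, EReal.coe_le_coe_iff] at h1 h2
  linarith

section quad
variable {E : Type*} [NormedAddCommGroup E] [InnerProductSpace ℝ E]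

lemma quad_sub (L : E →ₗ[ℝ] E) (hL : ∀ u v : E, ⟪L u, v⟫ = ⟪u, L v⟫) (u v : E) :
    ⟪u - v, L (u - v)⟫ = ⟪u, L u⟫ - 2 * ⟪u, L v⟫ + ⟪v, L v⟫ := by
  have h : ⟪v, L u⟫ = ⟪u, L v⟫ := by rw [real_inner_comm]; exact hL u v
  rw [map_sub, inner_sub_right, inner_sub_left, inner_sub_left]; linarith

lemma quad_add (L : E →ₗ[ℝ] E) (hL : ∀ u v : E, ⟪L u, v⟫ = ⟪u, L v⟫) (u v : E) :
    ⟪u + v, L (u + v)⟫ = ⟪u, L u⟫ + 2 * ⟪u, L v⟫ + ⟪v, L v⟫ := by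
  have h : ⟪v, L u⟫ = ⟪u, L v⟫ := by rw [real_inner_comm]; exact hL u v
  rw [map_add, inner_add_right, inner_add_left, inner_add_left]; linarith

lemma quad3m (L : E →ₗ[ℝ] E) (hL : ∀ u v : E, ⟪L u, v⟫ = ⟪u, L v⟫) (u v w : E) :
    ⟪u - v - w, L (u - v - w)⟫ = ⟪u, L u⟫ - 2 * ⟪u, L v⟫ + ⟪v, L v⟫
      - 2 * ⟪u, L w⟫ + 2 * ⟪v, L w⟫ + ⟪w, L w⟫ := by
  rw [quad_sub L hL (u - v) w, quad_sub L hL u v, inner_sub_left]; ring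

lemma quad3p (L : E →ₗ[ℝ] E) (hL : ∀ u v : E, ⟪L u, v⟫ = ⟪u, L v⟫) (u v w : E) :
    ⟪u - v + w, L (u - v + w)⟫ = ⟪u, L u⟫ - 2 * ⟪u, L v⟫ + ⟪v, L v⟫
      + 2 * ⟪u, L w⟫ - 2 * ⟪v, L w⟫ + ⟪w, L w⟫ := by
  rw [quad_add L hL (u - v) w, quad_sub L hL u v, inner_sub_left]; ring

end quad


set_option maxHeartbeats 1000000 in
theorem stmt9
    {X Y Z : Type*}
    [NormedAddCommGroup X] [InnerProductSpace ℝ X] [FiniteDimensional ℝ X]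
    [NormedAddCommGroup Y] [InnerProductSpace ℝ Y] [FiniteDimensional ℝ Y]
    [NormedAddCommGroup Z] [InnerProductSpace ℝ Z] [FiniteDimensional ℝ Z]
    (A : Z →ₗ[ℝ] X) (Astar : X →ₗ[ℝ] Z)
    (B : Z →ₗ[ℝ] Y) (Bstar : Y →ₗ[ℝ] Z)
    (hA : ∀ (z : Z) (x : X), ⟪A z, x⟫ = ⟪z, Astar x⟫)
    (hB : ∀ (z : Z) (y : Y), ⟪B z, y⟫ = ⟪z, Bstar y⟫)
    (c : Z) (σ τ : ℝ) (hσ : 0 < σ) (hτ : 0 < τ)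
    (p : X → EReal) (q : Y → EReal)
    (hp_proper : ∃ x, p x ≠ ⊤) (hp_nebot : ∀ x, p x ≠ ⊥)
    (hq_proper : ∃ y, q y ≠ ⊤) (hq_nebot : ∀ y, q y ≠ ⊥)
    (hp_convex : ∀ (x x' : X) (t : ℝ), 0 ≤ t → t ≤ 1 →
      p (t • x + (1 - t) • x') ≤ ((t : ℝ) : EReal) * p x + (((1 - t : ℝ)) : EReal) * p x')
    (hq_convex : ∀ (y y' : Y) (t : ℝ), 0 ≤ t → t ≤ 1 →
      q (t • y + (1 - t) • y') ≤ ((t : ℝ) : EReal) * q y + (((1 - t : ℝ)) : EReal) * q y')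
    (f : X → ℝ) (g : Y → ℝ) (f' : X → X) (g' : Y → Y)
    (hf : ∀ x, HasGradientAt f (f' x) x) (hg : ∀ y, HasGradientAt g (g' y) y)
    (hfc : ConvexOn ℝ Set.univ f) (hgc : ConvexOn ℝ Set.univ g)
    (Sf Sfh S : X →ₗ[ℝ] X) (Sg Sgh T : Y →ₗ[ℝ] Y)
    (hSf_sym : ∀ u v : X, ⟪Sf u, v⟫ = ⟪u, Sf v⟫) (hSf_psd : ∀ u : X, 0 ≤ ⟪u, Sf u⟫)
    (hSfh_sym : ∀ u v : X, ⟪Sfh u, v⟫ = ⟪u, Sfh v⟫) (hSfh_psd : ∀ u : X, 0 ≤ ⟪u, Sfh u⟫)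
    (hSfh_ge : ∀ u : X, ⟪u, Sf u⟫ ≤ ⟪u, Sfh u⟫)
    (hS_sym : ∀ u v : X, ⟪S u, v⟫ = ⟪u, S v⟫)
    (hSg_sym : ∀ u v : Y, ⟪Sg u, v⟫ = ⟪u, Sg v⟫) (hSg_psd : ∀ u : Y, 0 ≤ ⟪u, Sg u⟫)
    (hSgh_sym : ∀ u v : Y, ⟪Sgh u, v⟫ = ⟪u, Sgh v⟫) (hSgh_psd : ∀ u : Y, 0 ≤ ⟪u, Sgh u⟫)
    (hSgh_ge : ∀ u : Y, ⟪u, Sg u⟫ ≤ ⟪u, Sgh u⟫)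
    (hT_sym : ∀ u v : Y, ⟪T u, v⟫ = ⟪u, T v⟫)
    (hf_low : ∀ x x' : X, f x' + ⟪x - x', f' x'⟫ + (1/2) * ⟪x - x', Sf (x - x')⟫ ≤ f x)
    (hf_up : ∀ x x' : X, f x ≤ f x' + ⟪x - x', f' x'⟫ + (1/2) * ⟪x - x', Sfh (x - x')⟫)
    (hg_low : ∀ y y' : Y, g y' + ⟪y - y', g' y'⟫ + (1/2) * ⟪y - y', Sg (y - y')⟫ ≤ g y)
    (hg_up : ∀ y y' : Y, g y ≤ g y' + ⟪y - y', g' y'⟫ + (1/2) * ⟪y - y', Sgh (y - y')⟫)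
    (xk : ℕ → X) (yk : ℕ → Y) (zk : ℕ → Z)
    (hxdom : ∀ k, p (xk k) ≠ ⊤) (hydom : ∀ k, q (yk k) ≠ ⊤)
    (hiter_x : ∀ (k : ℕ) (x : X),
      p (xk (k + 1)) + ((⟪xk (k + 1) - x, f' (xk k)
        + A (zk k + σ • (Astar (xk (k + 1)) + Bstar (yk k) - c))
        + (Sfh (xk (k + 1) - xk k) + S (xk (k + 1) - xk k))⟫ : ℝ) : EReal) ≤ p x)
    (hiter_y : ∀ (k : ℕ) (y : Y),
      q (yk (k + 1)) + ((⟪yk (k + 1) - y, g' (yk k)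
        + B (zk k + σ • (Astar (xk (k + 1)) + Bstar (yk (k + 1)) - c))
        + (Sgh (yk (k + 1) - yk k) + T (yk (k + 1) - yk k))⟫ : ℝ) : EReal) ≤ q y)
    (hiter_z : ∀ k : ℕ, zk (k + 1) = zk k + (τ * σ) • (Astar (xk (k + 1)) + Bstar (yk (k + 1)) - c))

    (xb : X) (yb : Y) (zb : Z)
    (hxb_dom : p xb ≠ ⊤) (hyb_dom : q yb ≠ ⊤)
    (hKKT_x : ∀ x : X, p xb + ((⟪xb - x, f' xb + A zb⟫ : ℝ) : EReal) ≤ p x)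
    (hKKT_y : ∀ y : Y, q yb + ((⟪yb - y, g' yb + B zb⟫ : ℝ) : EReal) ≤ q y)
    (hKKT_c : Astar xb + Bstar yb = c)

    (hhalf : ∀ u : Y, 0 ≤ ⟪u, (1/2 : ℝ) • Sgh u + T u⟫)

    (hMV : ∀ k : ℕ, 1 ≤ k → ∃ W : Y →ₗ[ℝ] Y,
      (∀ u v : Y, ⟪W u, v⟫ = ⟪u, W v⟫) ∧ (∀ u : Y, 0 ≤ ⟪u, W u⟫) ∧
      (∀ u : Y, 0 ≤ ⟪u, Sgh u - W u⟫) ∧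
      g' (yk k) - g' (yk (k - 1)) = W (yk k - yk (k - 1)))
 :
    ∀ α : ℝ, 0 < α → α ≤ 1 → ∀ k : ℕ, 1 ≤ k →
      (⟪(xk (k + 1) - xk k), (1/2 : ℝ) • Sf (xk (k + 1) - xk k) + S (xk (k + 1) - xk k) + ((1/2) * (1 - α) * σ) • A (Astar (xk (k + 1) - xk k))⟫ + ⟪(yk (k + 1) - yk k), (1/2 : ℝ) • Sg (yk (k + 1) - yk k) + T (yk (k + 1) - yk k) + (min τ (1 + τ - τ ^ 2) * α * σ) • B (Bstar (yk (k + 1) - yk k))⟫) + (-τ + α * min (1 + τ) (1 + τ⁻¹)) * σ * ‖Astar (xk (k + 1)) + Bstar (yk (k + 1)) - c‖ ^ 2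
      ≤ (((τ * σ)⁻¹ * ‖zk k - zb‖ ^ 2 + ⟪xk k - xb, Sfh (xk k - xb) + S (xk k - xb)⟫ + ⟪yk k - yb, Sgh (yk k - yb) + T (yk k - yb) + σ • B (Bstar (yk k - yb))⟫) + (1 - α * min τ τ⁻¹) * σ * ‖Astar (xk k) + Bstar (yk k) - c‖ ^ 2 + α * ⟪yk k - yk (k - 1), Sgh (yk k - yk (k - 1)) + T (yk k - yk (k - 1))⟫)
        - (((τ * σ)⁻¹ * ‖zk (k + 1) - zb‖ ^ 2 + ⟪xk (k + 1) - xb, Sfh (xk (k + 1) - xb) + S (xk (k + 1) - xb)⟫ + ⟪yk (k + 1) - yb, Sgh (yk (k + 1) - yb) + T (yk (k + 1) - yb) + σ • B (Bstar (yk (k + 1) - yb))⟫) + (1 - α * min τ τ⁻¹) * σ * ‖Astar (xk (k + 1)) + Bstar (yk (k + 1)) - c‖ ^ 2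
            + α * ⟪yk (k + 1) - yk k, Sgh (yk (k + 1) - yk k) + T (yk (k + 1) - yk k)⟫) := by
  intro α hα hα1 k hk
  obtain ⟨j, rfl⟩ : ∃ j, k = j + 1 := ⟨k - 1, (Nat.succ_pred_eq_of_pos hk).symm⟩
  simp only [Nat.add_sub_cancel]
  obtain ⟨Wk, hWk_sym, hWk_psd, hWk_le, hWk_mv⟩ := hMV (j + 1) hk
  simp only [Nat.add_sub_cancel] at hWk_mv
  set x1 := xk (j + 1 + 1) - xb with hx1
  set x2 := xk (j + 1) - xb with hx2
  set y1 := yk (j + 1 + 1) - yb with hy1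
  set y2 := yk (j + 1) - yb with hy2
  set y3 := yk (j + 1) - yk j with hy3
  set z0 := zk (j + 1) - zb with hz0
  set u1 := Astar x1 with hu1
  set u2 := Astar x2 with hu2
  set v1 := Bstar y1 with hv1
  set v2 := Bstar y2 with hv2
  have hdx : xk (j + 1 + 1) - xk (j + 1) = x1 - x2 := by rw [hx1, hx2]; abel
  have hdy : yk (j + 1 + 1) - yk (j + 1) = y1 - y2 := by rw [hy1, hy2]; abel
  have hxk1 : xk (j + 1 + 1) = x1 + xb := by rw [hx1]; abel
  have hxk2 : xk (j + 1) = x2 + xb := by rw [hx2]; abel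
  have hyk1 : yk (j + 1 + 1) = y1 + yb := by rw [hy1]; abel
  have hyk2 : yk (j + 1) = y2 + yb := by rw [hy2]; abel
  have hr1 : Astar (xk (j + 1 + 1)) + Bstar (yk (j + 1 + 1)) - c = u1 + v1 := by
    rw [hxk1, hyk1, map_add, map_add, ← hu1, ← hv1, ← hKKT_c]; abel
  have hr2 : Astar (xk (j + 1)) + Bstar (yk (j + 1)) - c = u2 + v2 := by
    rw [hxk2, hyk2, map_add, map_add, ← hu2, ← hv2, ← hKKT_c]; abel
  have hrm : Astar (xk (j + 1 + 1)) + Bstar (yk (j + 1)) - c = u1 + v2 := by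
    rw [hxk1, hyk2, map_add, map_add, ← hu1, ← hv2, ← hKKT_c]; abel
  have hz1 : zk (j + 1 + 1) - zb = z0 + (τ * σ) • (u1 + v1) := by
    rw [hiter_z (j + 1), hr1, hz0]; abel
  have hzkj : zk j = zk (j + 1) - (τ * σ) • (u2 + v2) := by
    rw [hiter_z j, hr2]; abel
  have hAx1 : ∀ z : Z, ⟪x1, A z⟫ = ⟪u1, z⟫ := fun z => by
    rw [real_inner_comm (A z) x1, hA, ← hu1]; exact real_inner_comm u1 z
  have hAx2 : ∀ z : Z, ⟪x2, A z⟫ = ⟪u2, z⟫ := fun z => by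
    rw [real_inner_comm (A z) x2, hA, ← hu2]; exact real_inner_comm u2 z
  have hBy1 : ∀ z : Z, ⟪y1, B z⟫ = ⟪v1, z⟫ := fun z => by
    rw [real_inner_comm (B z) y1, hB, ← hv1]; exact real_inner_comm v1 z
  have hBy2 : ∀ z : Z, ⟪y2, B z⟫ = ⟪v2, z⟫ := fun z => by
    rw [real_inner_comm (B z) y2, hB, ← hv2]; exact real_inner_comm v2 z
  have cu12 : ⟪u2, u1⟫ = ⟪u1, u2⟫ := real_inner_comm u1 u2
  have cu1v1 : ⟪v1, u1⟫ = ⟪u1, v1⟫ := real_inner_comm u1 v1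
  have cu1v2 : ⟪v2, u1⟫ = ⟪u1, v2⟫ := real_inner_comm u1 v2
  have cu2v1 : ⟪v1, u2⟫ = ⟪u2, v1⟫ := real_inner_comm u2 v1
  have cu2v2 : ⟪v2, u2⟫ = ⟪u2, v2⟫ := real_inner_comm u2 v2
  have cv12 : ⟪v2, v1⟫ = ⟪v1, v2⟫ := real_inner_comm v1 v2
  have cz0u1 : ⟪z0, u1⟫ = ⟪u1, z0⟫ := real_inner_comm u1 z0
  have cz0v1 : ⟪z0, v1⟫ = ⟪v1, z0⟫ := real_inner_comm v1 z0
  have cSf : ⟪x2, Sf x1⟫ = ⟪x1, Sf x2⟫ := by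
    rw [real_inner_comm (Sf x1) x2]; exact hSf_sym x1 x2
  have cS : ⟪x2, S x1⟫ = ⟪x1, S x2⟫ := by
    rw [real_inner_comm (S x1) x2]; exact hS_sym x1 x2
  have cSfh : ⟪x2, Sfh x1⟫ = ⟪x1, Sfh x2⟫ := by
    rw [real_inner_comm (Sfh x1) x2]; exact hSfh_sym x1 x2
  have cSg : ⟪y2, Sg y1⟫ = ⟪y1, Sg y2⟫ := by
    rw [real_inner_comm (Sg y1) y2]; exact hSg_sym y1 y2
  have cSgh : ⟪y2, Sgh y1⟫ = ⟪y1, Sgh y2⟫ := by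
    rw [real_inner_comm (Sgh y1) y2]; exact hSgh_sym y1 y2
  have cT : ⟪y2, T y1⟫ = ⟪y1, T y2⟫ := by
    rw [real_inner_comm (T y1) y2]; exact hT_sym y1 y2
  -- ================= Fact E1 =================
  have hE1 : ⟪u1, z0⟫ + σ * (⟪u1, u1⟫ + ⟪u1, v2⟫)
      + (⟪x1, Sfh x1⟫ - ⟪x1, Sfh x2⟫ + ⟪x1, S x1⟫ - ⟪x1, S x2⟫)
      + (⟪x1, f' (xk (j + 1))⟫ - ⟪x1, f' xb⟫) ≤ 0 := by
    have h3 := ereal_cancel (hxdom (j + 1 + 1)) (hp_nebot _) hxb_dom (hp_nebot _)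
      (hiter_x (j + 1) xb) (hKKT_x (xk (j + 1 + 1)))
    refine le_trans (le_of_eq ?_) h3
    rw [hrm, hdx, show xb - xk (j + 1 + 1) = -x1 by rw [hx1]; abel,
      show xk (j + 1 + 1) - xb = x1 from hx1.symm]
    simp only [map_sub, map_add, inner_add_right, inner_add_left, inner_sub_right, inner_sub_left,
      inner_neg_left, real_inner_smul_right, real_inner_smul_left, hAx1, hz0, cu12, cu1v1, cu1v2, cu2v1, cu2v2, cv12, cz0u1, cz0v1, cSf, cS, cSfh, cSg, cSgh, cT]
    ring
  -- ================= Fact E2 =================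
  have hE2 : ⟪v1, z0⟫ + σ * (⟪u1, v1⟫ + ⟪v1, v1⟫)
      + (⟪y1, Sgh y1⟫ - ⟪y1, Sgh y2⟫ + ⟪y1, T y1⟫ - ⟪y1, T y2⟫)
      + (⟪y1, g' (yk (j + 1))⟫ - ⟪y1, g' yb⟫) ≤ 0 := by
    have h3 := ereal_cancel (hydom (j + 1 + 1)) (hq_nebot _) hyb_dom (hq_nebot _)
      (hiter_y (j + 1) yb) (hKKT_y (yk (j + 1 + 1)))
    refine le_trans (le_of_eq ?_) h3
    rw [hr1, hdy, show yb - yk (j + 1 + 1) = -y1 by rw [hy1]; abel,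
      show yk (j + 1 + 1) - yb = y1 from hy1.symm]
    simp only [map_sub, map_add, inner_add_right, inner_add_left, inner_sub_right, inner_sub_left,
      inner_neg_left, real_inner_smul_right, real_inner_smul_left, hBy1, hz0, cu12, cu1v1, cu1v2, cu2v1, cu2v2, cv12, cz0u1, cz0v1, cSf, cS, cSfh, cSg, cSgh, cT]
    ring
  -- ================= Fact E3 =================
  have hgg' : g' (yk j) = g' (yk (j + 1)) - Wk y3 := by rw [← hWk_mv]; abel
  have hE3 : σ * (⟪u1, v1⟫ + ⟪v1, v1⟫ - ⟪u1, v2⟫ - ⟪v1, v2⟫)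
      + (τ * σ - σ) * (⟪u2, v1⟫ + ⟪v1, v2⟫ - ⟪u2, v2⟫ - ⟪v2, v2⟫)
      + (⟪y1, Sgh y1⟫ - 2 * ⟪y1, Sgh y2⟫ + ⟪y2, Sgh y2⟫
         + ⟪y1, T y1⟫ - 2 * ⟪y1, T y2⟫ + ⟪y2, T y2⟫)
      - (⟪y1, Sgh y3⟫ - ⟪y2, Sgh y3⟫ + ⟪y1, T y3⟫ - ⟪y2, T y3⟫)
      + (⟪y1, Wk y3⟫ - ⟪y2, Wk y3⟫) ≤ 0 := by
    have h3 := ereal_cancel (hydom (j + 1 + 1)) (hq_nebot _) (hydom (j + 1)) (hq_nebot _)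
      (hiter_y (j + 1) (yk (j + 1))) (hiter_y j (yk (j + 1 + 1)))
    refine le_trans (le_of_eq ?_) h3
    rw [hr1, hr2, hzkj, hdy, hgg',
      show yk (j + 1) - yk (j + 1 + 1) = -(y1 - y2) by rw [hy1, hy2]; abel, ← hy3]
    simp only [map_sub, map_add, inner_add_right, inner_add_left, inner_sub_right, inner_sub_left,
      inner_neg_left, real_inner_smul_right, real_inner_smul_left, hBy1, hBy2, cu12, cu1v1, cu1v2, cu2v1, cu2v2, cv12, cz0u1, cz0v1, cSf, cS, cSfh, cSg, cSgh, cT]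
    ring
  -- ================= Fact E4 =================
  have hE4 : (1/2) * ⟪x1, Sf x1⟫ + (1/2) * ⟪x2, Sf x2⟫
      - (1/2) * (⟪x1, Sfh x1⟫ - 2 * ⟪x1, Sfh x2⟫ + ⟪x2, Sfh x2⟫)
      ≤ ⟪x1, f' (xk (j + 1))⟫ - ⟪x1, f' xb⟫ := by
    have A1 := hf_low xb (xk (j + 1))
    have A2 := hf_up (xk (j + 1 + 1)) (xk (j + 1))
    have A3 := hf_low (xk (j + 1 + 1)) xb
    rw [show xb - xk (j + 1) = -x2 by rw [hx2]; abel] at A1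
    rw [hdx, quad_sub Sfh hSfh_sym] at A2
    rw [show xk (j + 1 + 1) - xb = x1 from hx1.symm] at A3
    simp only [inner_neg_left, inner_neg_right, map_neg, neg_neg, inner_sub_left] at A1 A2 A3
    linarith
  -- ================= Fact E5 =================
  have hE5 : (1/2) * ⟪y1, Sg y1⟫ + (1/2) * ⟪y2, Sg y2⟫
      - (1/2) * (⟪y1, Sgh y1⟫ - 2 * ⟪y1, Sgh y2⟫ + ⟪y2, Sgh y2⟫)
      ≤ ⟪y1, g' (yk (j + 1))⟫ - ⟪y1, g' yb⟫ := by
    have A1 := hg_low yb (yk (j + 1))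
    have A2 := hg_up (yk (j + 1 + 1)) (yk (j + 1))
    have A3 := hg_low (yk (j + 1 + 1)) yb
    rw [show yb - yk (j + 1) = -y2 by rw [hy2]; abel] at A1
    rw [hdy, quad_sub Sgh hSgh_sym] at A2
    rw [show yk (j + 1 + 1) - yb = y1 from hy1.symm] at A3
    simp only [inner_neg_left, inner_neg_right, map_neg, neg_neg, inner_sub_left] at A1 A2 A3
    linarith
  -- ================= PSD facts =================
  have hSfP : (0:ℝ) ≤ ⟪x1, Sf x1⟫ + 2 * ⟪x1, Sf x2⟫ + ⟪x2, Sf x2⟫ := by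
    have h := hSf_psd (x1 + x2); rwa [quad_add Sf hSf_sym] at h
  have hSgP : (0:ℝ) ≤ ⟪y1, Sg y1⟫ + 2 * ⟪y1, Sg y2⟫ + ⟪y2, Sg y2⟫ := by
    have h := hSg_psd (y1 + y2); rwa [quad_add Sg hSg_sym] at h
  have hP1 : (0:ℝ) ≤ ⟪y1, Wk y1⟫ - 2 * ⟪y1, Wk y2⟫ + ⟪y2, Wk y2⟫
      + 2 * ⟪y1, Wk y3⟫ - 2 * ⟪y2, Wk y3⟫ + ⟪y3, Wk y3⟫ := by
    have h := hWk_psd (y1 - y2 + y3); rwa [quad3p Wk hWk_sym] at h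
  have hP2 : (0:ℝ) ≤ (⟪y1, Sgh y1⟫ - 2 * ⟪y1, Sgh y2⟫ + ⟪y2, Sgh y2⟫
      - 2 * ⟪y1, Sgh y3⟫ + 2 * ⟪y2, Sgh y3⟫ + ⟪y3, Sgh y3⟫)
      - (⟪y1, Wk y1⟫ - 2 * ⟪y1, Wk y2⟫ + ⟪y2, Wk y2⟫
      - 2 * ⟪y1, Wk y3⟫ + 2 * ⟪y2, Wk y3⟫ + ⟪y3, Wk y3⟫) := by
    have h := hWk_le (y1 - y2 - y3)
    rwa [inner_sub_right, quad3m Sgh hSgh_sym, quad3m Wk hWk_sym] at h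
  have hP3 : (0:ℝ) ≤ (1/2) * (⟪y1, Sgh y1⟫ - 2 * ⟪y1, Sgh y2⟫ + ⟪y2, Sgh y2⟫
      - 2 * ⟪y1, Sgh y3⟫ + 2 * ⟪y2, Sgh y3⟫ + ⟪y3, Sgh y3⟫)
      + (⟪y1, T y1⟫ - 2 * ⟪y1, T y2⟫ + ⟪y2, T y2⟫
      - 2 * ⟪y1, T y3⟫ + 2 * ⟪y2, T y3⟫ + ⟪y3, T y3⟫) := by
    have h := hhalf (y1 - y2 - y3)
    rw [inner_add_right, real_inner_smul_right, quad3m Sgh hSgh_sym, quad3m T hT_sym] at h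
    linarith
  have hQ1 : (0:ℝ) ≤ ⟪u1, u1⟫ + ⟪u2, u2⟫ + 4 * ⟪v2, v2⟫
      + 2 * ⟪u1, u2⟫ + 4 * ⟪u1, v2⟫ + 4 * ⟪u2, v2⟫ := by
    have h : (0:ℝ) ≤ ⟪u1 + u2 + (2:ℝ) • v2, u1 + u2 + (2:ℝ) • v2⟫ := real_inner_self_nonneg
    simp only [map_sub, map_add, inner_add_right, inner_add_left, inner_sub_right, inner_sub_left,
      inner_neg_left, real_inner_smul_right, real_inner_smul_left, cu12, cu1v1, cu1v2, cu2v1, cu2v2, cv12, cz0u1, cz0v1, cSf, cS, cSfh, cSg, cSgh, cT] at h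
    linarith
  -- scaled facts
  have hE3s := mul_le_mul_of_nonneg_left hE3 hα.le
  rw [mul_zero] at hE3s
  have hP1s := mul_nonneg hα.le hP1
  have hP2s := mul_nonneg hα.le hP2
  have hP3s := mul_nonneg hα.le hP3
  have hQ1s := mul_nonneg (mul_nonneg hσ.le (by clear * - hα1; linarith : (0:ℝ) ≤ 1 - α)) hQ1
  have hτv : τ⁻¹ * τ = 1 := inv_mul_cancel₀ hτ.ne'
  have hts : (τ * σ)⁻¹ * (τ * σ) = 1 := inv_mul_cancel₀ (mul_pos hτ hσ).ne'
  have hc1 : (τ * σ)⁻¹ * (τ * σ * (⟪u1, z0⟫ + ⟪v1, z0⟫)) = ⟪u1, z0⟫ + ⟪v1, z0⟫ := by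
    clear * - hts; linear_combination (⟪u1, z0⟫ + ⟪v1, z0⟫) * hts
  have hc2 : (τ * σ)⁻¹ * (τ * σ * (τ * σ * (⟪u1, u1⟫ + ⟪u1, v1⟫)
      + τ * σ * (⟪u1, v1⟫ + ⟪v1, v1⟫)))
      = τ * σ * (⟪u1, u1⟫ + 2 * ⟪u1, v1⟫ + ⟪v1, v1⟫) := by
    clear * - hts
    linear_combination (τ * σ * (⟪u1, u1⟫ + 2 * ⟪u1, v1⟫ + ⟪v1, v1⟫)) * hts
  rcases le_total τ 1 with hcase | hcase
  · -- τ ≤ 1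
    have hti : τ ≤ τ⁻¹ := by clear * - hτ hτv hcase; nlinarith [hτv]
    rw [min_eq_left (by clear * - hτ hcase; nlinarith : τ ≤ 1 + τ - τ ^ 2),
        min_eq_left (by clear * - hti; linarith : 1 + τ ≤ 1 + τ⁻¹),
        min_eq_left hti]
    have hQ2 : (0:ℝ) ≤ ⟪u2, u2⟫ + ⟪v1, v1⟫ + 4 * ⟪v2, v2⟫
        - 2 * ⟪u2, v1⟫ + 4 * ⟪u2, v2⟫ - 4 * ⟪v1, v2⟫ := by
      have h : (0:ℝ) ≤ ⟪u2 - v1 + (2:ℝ) • v2, u2 - v1 + (2:ℝ) • v2⟫ := real_inner_self_nonneg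
      simp only [map_sub, map_add, inner_add_right, inner_add_left, inner_sub_right, inner_sub_left,
      inner_neg_left, real_inner_smul_right, real_inner_smul_left, cu12, cu1v1, cu1v2, cu2v1, cu2v2, cv12, cz0u1, cz0v1, cSf, cS, cSfh, cSg, cSgh, cT] at h
      linarith
    have hQ2s := mul_nonneg (mul_nonneg (mul_nonneg hσ.le hα.le)
      (by clear * - hcase; linarith : (0:ℝ) ≤ 1 - τ)) hQ2
    rw [hdx, hdy]
    simp only [← real_inner_self_eq_norm_sq]
    rw [hz1, hr1, hr2]
    simp only [map_sub, map_add, inner_add_right, inner_add_left, inner_sub_right, inner_sub_left,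
      inner_neg_left, real_inner_smul_right, real_inner_smul_left, ← hu1, ← hu2, ← hv1, ← hv2, hAx1, hAx2, hBy1, hBy2, cu12, cu1v1, cu1v2, cu2v1, cu2v2, cv12, cz0u1, cz0v1, cSf, cS, cSfh, cSg, cSgh, cT]
    linarith [hE1, hE2, hE3s, hE4, hE5, hSfP, hSgP, hP1s, hP2s, hP3s, hQ1s, hQ2s, hc1, hc2]
  · -- 1 ≤ τ
    have hti : τ⁻¹ ≤ τ := by clear * - hτ hτv hcase; nlinarith [hτv, inv_nonneg.mpr hτ.le]
    rw [min_eq_right (by clear * - hτ hcase; nlinarith : 1 + τ - τ ^ 2 ≤ τ),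
        min_eq_right (by clear * - hti; linarith : 1 + τ⁻¹ ≤ 1 + τ),
        min_eq_right hti]
    have hQ2 : (0:ℝ) ≤ τ⁻¹ * τ⁻¹ * (⟪u2, u2⟫ + 2 * ⟪u2, v2⟫ + ⟪v2, v2⟫)
        + 2 * τ⁻¹ * (⟪u2, v1⟫ - ⟪u2, v2⟫ + ⟪v1, v2⟫ - ⟪v2, v2⟫)
        + (⟪v1, v1⟫ - 2 * ⟪v1, v2⟫ + ⟪v2, v2⟫) := by
      have h : (0:ℝ) ≤ ⟪τ⁻¹ • (u2 + v2) + (v1 - v2), τ⁻¹ • (u2 + v2) + (v1 - v2)⟫ :=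
        real_inner_self_nonneg
      simp only [map_sub, map_add, inner_add_right, inner_add_left, inner_sub_right, inner_sub_left,
      inner_neg_left, real_inner_smul_right, real_inner_smul_left, cu12, cu1v1, cu1v2, cu2v1, cu2v2, cv12, cz0u1, cz0v1, cSf, cS, cSfh, cSg, cSgh, cT] at h
      linarith
    have hQ2s := mul_nonneg (mul_nonneg (mul_nonneg (mul_nonneg hσ.le hτ.le)
      (by clear * - hcase; linarith : (0:ℝ) ≤ τ - 1)) hα.le) hQ2
    have hcorr : (τ⁻¹ * τ) * (σ * (α * ((τ - 1) * (τ⁻¹ * (⟪u2, u2⟫ + 2 * ⟪u2, v2⟫ + ⟪v2, v2⟫))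
          + (⟪u2, u2⟫ + 2 * ⟪u2, v2⟫ + ⟪v2, v2⟫)
          + 2 * ((τ - 1) * (⟪u2, v1⟫ + ⟪v1, v2⟫ - ⟪u2, v2⟫ - ⟪v2, v2⟫)))))
        = σ * (α * ((τ - 1) * (τ⁻¹ * (⟪u2, u2⟫ + 2 * ⟪u2, v2⟫ + ⟪v2, v2⟫))
          + (⟪u2, u2⟫ + 2 * ⟪u2, v2⟫ + ⟪v2, v2⟫)
          + 2 * ((τ - 1) * (⟪u2, v1⟫ + ⟪v1, v2⟫ - ⟪u2, v2⟫ - ⟪v2, v2⟫)))) := by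
      rw [hτv, one_mul]
    rw [hdx, hdy]
    simp only [← real_inner_self_eq_norm_sq]
    rw [hz1, hr1, hr2]
    simp only [map_sub, map_add, inner_add_right, inner_add_left, inner_sub_right, inner_sub_left,
      inner_neg_left, real_inner_smul_right, real_inner_smul_left, ← hu1, ← hu2, ← hv1, ← hv2, hAx1, hAx2, hBy1, hBy2, cu12, cu1v1, cu1v2, cu2v1, cu2v2, cv12, cz0u1, cz0v1, cSf, cS, cSfh, cSg, cSgh, cT]
    linarith [hE1, hE2, hE3s, hE4, hE5, hSfP, hSgP, hP1s, hP2s, hP3s, hQ1s, hQ2s, hc1, hc2, hcorr]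
end

section
/- (Proximal augmented Lagrangian method, i.e., the case with no y-block.) Let (x̄, z̄) satisfy: for all x ∈ X, p(x) ≥ p(x̄) + ⟨x̄ − x, ∇f(x̄) + A z̄⟩, and A*x̄ = c. Then for every α ∈ (0, 1] and every k ≥ 0: [(τσ)⁻¹‖z^k − z̄‖² + ‖x^k − x̄‖²_{Σ̂_f+S} + (1−α)σ‖r^k‖²] − [(τσ)⁻¹‖z^{k+1} − z̄‖² + ‖x^{k+1} − x̄‖²_{Σ̂_f+S} + (1−α)σ‖r^{k+1}‖²] ≥ ‖x^{k+1} − x^k‖²_{H_f} + (2α − τ)σ‖r^{k+1}‖², where H_f := (1/2)Σ_f + S + (1/2)(1−α)σAA*. -/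
open scoped RealInnerProductSpace

set_option maxHeartbeats 1000000 in
theorem stmt11
    {X Z : Type*}
    [NormedAddCommGroup X] [InnerProductSpace ℝ X] [FiniteDimensional ℝ X]
    [NormedAddCommGroup Z] [InnerProductSpace ℝ Z] [FiniteDimensional ℝ Z]
    (A : Z →ₗ[ℝ] X) (Astar : X →ₗ[ℝ] Z)
    (hA : ∀ (z : Z) (x : X), ⟪A z, x⟫ = ⟪z, Astar x⟫)
    (c : Z) (σ τ : ℝ) (hσ : 0 < σ) (hτ : 0 < τ)
    (p : X → EReal) (hp_proper : ∃ x, p x ≠ ⊤) (hp_nebot : ∀ x, p x ≠ ⊥)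
    (hp_convex : ∀ (x x' : X) (t : ℝ), 0 ≤ t → t ≤ 1 →
      p (t • x + (1 - t) • x') ≤ ((t : ℝ) : EReal) * p x + (((1 - t : ℝ)) : EReal) * p x')
    (f : X → ℝ) (f' : X → X) (hf : ∀ x, HasGradientAt f (f' x) x)
    (hfc : ConvexOn ℝ Set.univ f)
    (Sf Sfh S : X →ₗ[ℝ] X)
    (hSf_sym : ∀ u v : X, ⟪Sf u, v⟫ = ⟪u, Sf v⟫) (hSf_psd : ∀ u : X, 0 ≤ ⟪u, Sf u⟫)
    (hSfh_sym : ∀ u v : X, ⟪Sfh u, v⟫ = ⟪u, Sfh v⟫) (hSfh_psd : ∀ u : X, 0 ≤ ⟪u, Sfh u⟫)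
    (hSfh_ge : ∀ u : X, ⟪u, Sf u⟫ ≤ ⟪u, Sfh u⟫)
    (hS_sym : ∀ u v : X, ⟪S u, v⟫ = ⟪u, S v⟫)
    (hf_low : ∀ x x' : X, f x' + ⟪x - x', f' x'⟫ + (1/2) * ⟪x - x', Sf (x - x')⟫ ≤ f x)
    (hf_up : ∀ x x' : X, f x ≤ f x' + ⟪x - x', f' x'⟫ + (1/2) * ⟪x - x', Sfh (x - x')⟫)
    (xk : ℕ → X) (zk : ℕ → Z) (hxdom : ∀ k, p (xk k) ≠ ⊤)
    (hiter_x : ∀ (k : ℕ) (x : X),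
      p (xk (k + 1)) + ((⟪xk (k + 1) - x, f' (xk k)
        + A (zk k + σ • (Astar (xk (k + 1)) - c))
        + (Sfh (xk (k + 1) - xk k) + S (xk (k + 1) - xk k))⟫ : ℝ) : EReal) ≤ p x)
    (hiter_z : ∀ k : ℕ, zk (k + 1) = zk k + (τ * σ) • (Astar (xk (k + 1)) - c))

    (xb : X) (zb : Z) (hxb_dom : p xb ≠ ⊤)
    (hKKT_x : ∀ x : X, p xb + ((⟪xb - x, f' xb + A zb⟫ : ℝ) : EReal) ≤ p x)
    (hKKT_c : Astar xb = c) :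
    ∀ α : ℝ, 0 < α → α ≤ 1 → ∀ k : ℕ,
      ⟪(xk (k + 1) - xk k), (1/2 : ℝ) • Sf (xk (k + 1) - xk k) + S (xk (k + 1) - xk k) + ((1/2) * (1 - α) * σ) • A (Astar (xk (k + 1) - xk k))⟫
        + (2 * α - τ) * σ * ‖Astar (xk (k + 1)) - c‖ ^ 2
      ≤ (((τ * σ)⁻¹ * ‖zk k - zb‖ ^ 2
            + ⟪xk k - xb, Sfh (xk k - xb) + S (xk k - xb)⟫
            + (1 - α) * σ * ‖Astar (xk k) - c‖ ^ 2)
        - ((τ * σ)⁻¹ * ‖zk (k + 1) - zb‖ ^ 2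
            + ⟪xk (k + 1) - xb, Sfh (xk (k + 1) - xb) + S (xk (k + 1) - xb)⟫
            + (1 - α) * σ * ‖Astar (xk (k + 1)) - c‖ ^ 2)) := by
  intro α hα0 hα1 k
  have hτσ : (0:ℝ) < τ * σ := mul_pos hτ hσ
  have h1α : (0:ℝ) ≤ 1 - α := by linarith
  -- abbreviations
  set x0 : X := xk k with hx0def
  set x1 : X := xk (k+1) with hx1def
  set z0 : Z := zk k with hz0def
  set z1 : Z := zk (k+1) with hz1def
  set dd : X := x1 - xb with hdd
  set ee : X := x0 - xb with hee
  set dl : X := x1 - x0 with hdl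
  set r1 : Z := Astar x1 - c with hr1
  set r0 : Z := Astar x0 - c with hr0
  have hdde : dl = dd - ee := by rw [hdd, hee, hdl]; abel
  have hAstard : Astar dd = r1 := by rw [hdd, map_sub, hKKT_c, hr1]
  have hAstare : Astar ee = r0 := by rw [hee, map_sub, hKKT_c, hr0]
  have hAstardl : Astar dl = r1 - r0 := by rw [hdde, map_sub, hAstard, hAstare]
  have hkey : ∀ w : Z, ⟪dd, A w⟫ = ⟪w, r1⟫ := by
    intro w
    rw [real_inner_comm, hA, hAstard]
  have symmSfh : ∀ u v : X, (⟪u, Sfh v⟫:ℝ) = ⟪v, Sfh u⟫ := by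
    intro u v; rw [← hSfh_sym u v, real_inner_comm]
  have symmSf : ∀ u v : X, (⟪u, Sf v⟫:ℝ) = ⟪v, Sf u⟫ := by
    intro u v; rw [← hSf_sym u v, real_inner_comm]
  have symmS : ∀ u v : X, (⟪u, S v⟫:ℝ) = ⟪v, S u⟫ := by
    intro u v; rw [← hS_sym u v, real_inner_comm]
  -- Step 1: combine the two variational inequalities over EReal
  have hab : ⟪x1 - xb, f' x0 + A (z0 + σ • (Astar x1 - c)) + (Sfh dl + S dl)⟫
      + ⟪xb - x1, f' xb + A zb⟫ ≤ 0 := by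
    have h1 := hiter_x k xb
    have h2 := hKKT_x x1
    rw [← hx0def, ← hx1def, ← hz0def, ← hdl] at h1
    have hu : ((p x1).toReal : EReal) = p x1 := EReal.coe_toReal (hxdom (k+1)) (hp_nebot _)
    have hv : ((p xb).toReal : EReal) = p xb := EReal.coe_toReal hxb_dom (hp_nebot _)
    rw [← hu, ← hv, ← EReal.coe_add, EReal.coe_le_coe_iff] at h1 h2
    linarith
  -- Step 2: rewrite as real inequality F1
  have F1 : ⟪dd, f' x0⟫ - ⟪dd, f' xb⟫ + ⟪z0 - zb, r1⟫ + σ * ‖r1‖^2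
      + ⟪dd, Sfh dl + S dl⟫ ≤ 0 := by
    have e1 : ⟪x1 - xb, f' x0 + A (z0 + σ • (Astar x1 - c)) + (Sfh dl + S dl)⟫
        = ⟪dd, f' x0⟫ + ⟪dd, A z0⟫ + σ * ‖r1‖^2 + ⟪dd, Sfh dl + S dl⟫ := by
      rw [← hdd]
      simp only [map_add, map_smul, inner_add_right, real_inner_smul_right]
      rw [hkey z0, hkey (Astar x1 - c), ← hr1, real_inner_self_eq_norm_sq]
      ring
    have e2 : ⟪xb - x1, f' xb + A zb⟫ = -⟪dd, f' xb⟫ - ⟪dd, A zb⟫ := by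
      have : xb - x1 = -dd := by rw [hdd]; abel
      rw [this, inner_neg_left, inner_add_right]; ring
    have e3 : ⟪dd, A z0⟫ - ⟪dd, A zb⟫ = ⟪z0 - zb, r1⟫ := by
      rw [hkey z0, hkey zb, ← inner_sub_left]
    rw [e1, e2] at hab
    linarith [e3]
  -- Step 3: gradient inequality F2
  have F2 : (1/2) * ⟪dd, Sf dd⟫ + (1/2) * ⟪ee, Sf ee⟫ - (1/2) * ⟪dl, Sfh dl⟫
      ≤ ⟪dd, f' x0⟫ - ⟪dd, f' xb⟫ := by
    have h_up := hf_up x1 x0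
    have h_low1 := hf_low xb x0
    have h_low2 := hf_low x1 xb
    rw [← hdl] at h_up
    rw [← hdd] at h_low2
    have hneg : xb - x0 = -ee := by rw [hee]; abel
    rw [hneg, inner_neg_left, map_neg, inner_neg_neg] at h_low1
    have hsplit : ⟪dd, f' x0⟫ = ⟪dl, f' x0⟫ + ⟪ee, f' x0⟫ := by
      rw [show dd = dl + ee from by rw [hdd, hdl, hee]; abel, inner_add_left]
    linarith
  -- Step 4: z identity F3
  have F3 : (τ*σ)⁻¹ * ‖z0 - zb‖^2 - (τ*σ)⁻¹ * ‖z1 - zb‖^2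
      = -2 * ⟪z0 - zb, r1⟫ - (τ*σ) * ‖r1‖^2 := by
    have hz : z1 - zb = (z0 - zb) + (τ*σ) • r1 := by
      rw [hz1def, hz0def, hiter_z k, ← hx1def, ← hr1]; abel
    rw [hz]
    rw [@norm_add_sq_real, real_inner_smul_right, norm_smul,
      Real.norm_eq_abs, abs_of_pos hτσ]
    field_simp
    ring
  -- Step 5: x identity F4
  have F4 : ⟪ee, Sfh ee + S ee⟫ - ⟪dd, Sfh dd + S dd⟫
      = ⟪dl, Sfh dl + S dl⟫ - 2 * ⟪dd, Sfh dl + S dl⟫ := by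
    rw [hdde]
    simp only [map_sub, inner_sub_left, inner_sub_right, inner_add_right]
    linarith [symmSfh dd ee, symmS dd ee]
  -- Step 6: expansion of goal LHS inner product
  have F6 : ⟪dl, (1/2 : ℝ) • Sf dl + S dl + ((1/2) * (1 - α) * σ) • A (Astar dl)⟫
      = (1/2) * ⟪dl, Sf dl⟫ + ⟪dl, S dl⟫ + (1/2) * (1 - α) * σ * ‖r1 - r0‖^2 := by
    have hkey2 : (⟪dl, A (Astar dl)⟫:ℝ) = ‖r1 - r0‖^2 := by
      rw [real_inner_comm, hA, hAstardl, real_inner_self_eq_norm_sq]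
    simp only [inner_add_right, real_inner_smul_right, hkey2]
  -- Step 7: norm bounds
  have F5a : ‖r1 - r0‖^2 ≤ 2 * ‖r1‖^2 + 2 * ‖r0‖^2 := by
    nlinarith [norm_add_sq_real r1 r0, norm_sub_sq_real r1 r0, sq_nonneg ‖r1 + r0‖]
  have F5b : ⟪dl, Sf dl⟫ ≤ 2 * ⟪dd, Sf dd⟫ + 2 * ⟪ee, Sf ee⟫ := by
    have hpos := hSf_psd (dd + ee)
    rw [hdde]
    simp only [map_sub, inner_sub_left, inner_sub_right]
    simp only [map_add, inner_add_left, inner_add_right] at hpos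
    linarith [symmSf dd ee]
  -- Final combination
  rw [F6]
  have hgoal : (⟪dl, Sfh dl⟫:ℝ) + ⟪dl, S dl⟫ = ⟪dl, Sfh dl + S dl⟫ := by
    rw [inner_add_right]
  nlinarith [mul_nonneg (mul_nonneg h1α hσ.le) (by linarith [F5a] : (0:ℝ) ≤ 2*‖r1‖^2 + 2*‖r0‖^2 - ‖r1 - r0‖^2), F1, F2, F3, F4, F5b, hgoal, hσ.le]
end

section
/- (Ergodic bound.) Assume the mean-value hypothesis, τ ∈ (0, (1+√5)/2), and that for some α ∈ (τ/min(1+τ, 1+τ⁻¹), 1]: Σ̂_f + S ⪰ 0, H_f ⪰ 0, (1/2)Σ̂_g + T ⪰ 0 and M_g ≻ 0. Define the ergodic averages x̂^k := (1/k)∑_{i=1}^k x^{i+1}, ŷ^k := (1/k)∑_{i=1}^k y^{i+1}, ẑ^k := (1/k)∑_{i=1}^k z̃^{i+1}. Then for every k ≥ 1 and every (x, y, z) ∈ X × Y × Z: (p(x̂^k) + q(ŷ^k)) − (p(x) + q(y)) + ⟨x̂^k − x, ∇f(x) + A z⟩ + ⟨ŷ^k − y, ∇g(y) + B z⟩ +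 ⟨ẑ^k − z, −(A*x + B*y − c)⟩ ≤ (φ_1(x,y,z) + (1 − α min(τ, τ⁻¹))σ‖r^1‖² + αξ_1)/(2k), where when p(x) = +∞ or q(y) = +∞ the inequality is understood in the extended reals (it holds trivially). -/
/-!
Each iteration satisfies a descent inequality: the gap at `(x^{k+1}, y^{k+1}, z̃^{k+1})` is at most
half the decrease of the Lyapunov function `φ_k + (1 - α min(τ, τ⁻¹)) σ ‖r^k‖² + α ξ_k`. It comes
from the optimality conditions of the two subproblems and the quadratic bounds on `f` and `g`,
together with a bound on `⟪r^{k+1}, B*(y^{k+1} - y^k)⟫` obtained by comparing two consecutive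
`y`-steps through the mean-value operator `W^k`; the lower bound on `α` is what absorbs the
remaining cross terms. Summing telescopes, and Jensen's inequality for `p` and `q` (the other terms
being affine) passes to the ergodic averages.
-/

open scoped RealInnerProductSpace
open Finset

section InnerProduct

variable {V : Type*} [NormedAddCommGroup V] [InnerProductSpace ℝ V]

lemma LinearMap.IsSymmetric.inner_map_sub_self {G : V →ₗ[ℝ] V} (hG : G.IsSymmetric) (a b : V) :
    ⟪a - b, G (a - b)⟫ = ⟪a, G a⟫ - 2 * ⟪a, G b⟫ + ⟪b, G b⟫ := by
  have hswap : ⟪b, G a⟫ = ⟪a, G b⟫ := by rw [← hG, real_inner_comm]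
  simp only [map_sub, inner_sub_left, inner_sub_right, hswap]
  ring

lemma LinearMap.IsSymmetric.inner_map_add_self {G : V →ₗ[ℝ] V} (hG : G.IsSymmetric) (a b : V) :
    ⟪a + b, G (a + b)⟫ = ⟪a, G a⟫ + 2 * ⟪a, G b⟫ + ⟪b, G b⟫ := by
  have hswap : ⟪b, G a⟫ = ⟪a, G b⟫ := by rw [← hG, real_inner_comm]
  simp only [map_add, inner_add_left, inner_add_right, hswap]
  ring

lemma LinearMap.IsSymmetric.inner_sub_map_sub_s15 {G : V →ₗ[ℝ] V} (hG : G.IsSymmetric)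
    (u w x : V) :
    ⟪u - x, G (u - w)⟫ = (⟪u - x, G (u - x)⟫ + ⟪u - w, G (u - w)⟫ - ⟪w - x, G (w - x)⟫) / 2 := by
  have hwx : w - x = (u - x) - (u - w) := by abel
  rw [hwx, hG.inner_map_sub_self (u - x) (u - w)]
  ring

lemma LinearMap.IsSymmetric.inner_map_sub_le {G : V →ₗ[ℝ] V} (hG : G.IsSymmetric)
    (hG₀ : ∀ u, 0 ≤ ⟪u, G u⟫) (u w x : V) :
    ⟪u - w, G (u - w)⟫ ≤ 2 * ⟪u - x, G (u - x)⟫ + 2 * ⟪w - x, G (w - x)⟫ := by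
  have huw : u - w = (u - x) - (w - x) := by abel
  rw [huw, hG.inner_map_sub_self (u - x) (w - x)]
  linarith [hG₀ ((u - x) + (w - x)), hG.inner_map_add_self (u - x) (w - x)]

lemma LinearMap.IsSymmetric.inner_map_le_of_abs_le {M N : V →ₗ[ℝ] V} (hM : M.IsSymmetric)
    (hN : N.IsSymmetric) (hle : ∀ u, ⟪u, M u⟫ ≤ ⟪u, N u⟫) (hge : ∀ u, -⟪u, N u⟫ ≤ ⟪u, M u⟫)
    (a b : V) : ⟪a, M b⟫ ≤ (⟪a, N a⟫ + ⟪b, N b⟫) / 2 := by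
  linarith [hM.inner_map_add_self a b, hM.inner_map_sub_self a b, hN.inner_map_add_self a b,
    hN.inner_map_sub_self a b, hle (a + b), hge (a - b)]

lemma inner_sub_grad_le_of_quadratic_bounds {f : V → ℝ} {f' : V → V} {G Gh : V →ₗ[ℝ] V}
    (hlow : ∀ a b, f b + ⟪a - b, f' b⟫ + 1 / 2 * ⟪a - b, G (a - b)⟫ ≤ f a)
    (hup : ∀ a b, f a ≤ f b + ⟪a - b, f' b⟫ + 1 / 2 * ⟪a - b, Gh (a - b)⟫) (u w x : V) :
    ⟪u - x, f' x⟫ ≤ ⟪u - x, f' w⟫ + ⟪u - w, Gh (u - w)⟫ / 2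
      - ⟪w - x, G (w - x)⟫ / 2 - ⟪u - x, G (u - x)⟫ / 2 := by
  have hxw : x - w = -(w - x) := (neg_sub w x).symm
  have hsplit : ⟪u - x, f' w⟫ = ⟪u - w, f' w⟫ + ⟪w - x, f' w⟫ := by
    rw [← inner_add_left, sub_add_sub_cancel]
  have h₂ := hlow x w
  rw [hxw, map_neg, inner_neg_neg, inner_neg_left] at h₂
  linarith [hup u w, hlow u x]

lemma inner_sub_smul_eq_of_eq_add_smul {σ τ : ℝ} (hτσ : τ * σ ≠ 0) {z₀ z₁ r : V}
    (hz : z₁ = z₀ + (τ * σ) • r) (z : V) :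
    ⟪z - (z₀ + σ • r), r⟫
      = (τ * σ)⁻¹ * (‖z₀ - z‖ ^ 2 - ‖z₁ - z‖ ^ 2) / 2 + (τ / 2 - 1) * σ * ‖r‖ ^ 2 := by
  have hz₁ : ‖z₁ - z‖ ^ 2 = ‖z₀ - z‖ ^ 2 + 2 * (τ * σ) * ⟪z₀ - z, r⟫ + (τ * σ) ^ 2 * ‖r‖ ^ 2 := by
    rw [hz, show z₀ + (τ * σ) • r - z = (z₀ - z) + (τ * σ) • r by abel, norm_add_sq_real,
      real_inner_smul_right, norm_smul, mul_pow, Real.norm_eq_abs, sq_abs]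
    ring
  have hlhs : z - (z₀ + σ • r) = -(z₀ - z) - σ • r := by abel
  rw [hz₁, hlhs, inner_sub_left, inner_neg_left, real_inner_smul_left,
    real_inner_self_eq_norm_sq]
  have hτ : τ ≠ 0 := left_ne_zero_of_mul hτσ
  have hσ : σ ≠ 0 := right_ne_zero_of_mul hτσ
  field_simp
  ring

lemma inner_sub_sub_eq (a e₁ e₀ : V) :
    ⟪a - e₁, e₁ - e₀⟫ = ⟪a, e₁ - e₀⟫ + (‖e₀‖ ^ 2 - ‖e₁‖ ^ 2 - ‖e₁ - e₀‖ ^ 2) / 2 := by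
  rw [inner_sub_left, inner_sub_right e₁, real_inner_self_eq_norm_sq, norm_sub_sq_real]
  ring

/-- Young's inequality with weight `1` (for `τ ≤ 1`) or `τ` (for `τ ≥ 1`); this is where
`min(τ, τ⁻¹)` and `min(τ, 1 + τ - τ²)` come from. -/
lemma one_sub_mul_inner_le {τ : ℝ} (hτ : 0 < τ) (r b : V) :
    (1 - τ) * ⟪r, b⟫ ≤
      (1 - min τ τ⁻¹) / 2 * ‖r‖ ^ 2 + (1 - min τ (1 + τ - τ ^ 2)) / 2 * ‖b‖ ^ 2 := by
  have hinv : τ * τ⁻¹ = 1 := mul_inv_cancel₀ hτ.ne'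
  rcases le_total τ 1 with h | h
  · rw [min_eq_left (by nlinarith), min_eq_left (by nlinarith)]
    have := norm_sub_sq_real r b
    nlinarith [sq_nonneg ‖r - b‖]
  · rw [min_eq_right (by nlinarith), min_eq_right (by nlinarith)]
    have hsq : ‖r + τ • b‖ ^ 2 = ‖r‖ ^ 2 + 2 * τ * ⟪r, b⟫ + τ ^ 2 * ‖b‖ ^ 2 := by
      rw [norm_add_sq_real, real_inner_smul_right, norm_smul, Real.norm_of_nonneg hτ.le]; ring
    have key : 0 ≤ (τ - 1) / (2 * τ) * ‖r + τ • b‖ ^ 2 := by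
      have : 0 ≤ τ - 1 := by linarith
      positivity
    rw [hsq] at key
    field_simp at key ⊢
    nlinarith

lemma inner_add_norm_sub_sub_sq_le (r₁ b r₀ : V) :
    ⟪r₁, b⟫ + ‖r₁ - b - r₀‖ ^ 2 / 4 ≤ (‖r₁‖ ^ 2 + ‖b‖ ^ 2 + ‖r₀‖ ^ 2) / 2 := by
  have h₁ := norm_sub_sq_real r₁ b
  have h₂ := norm_sub_sq_real (r₁ - b) r₀
  have h₃ := norm_add_sq_real (r₁ - b) r₀
  nlinarith [sq_nonneg ‖r₁ - b + r₀‖]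

end InnerProduct

lemma toReal_add_le_toReal_of_add_coe_le {a b : EReal} {t : ℝ} (ha : a ≠ ⊤) (ha' : a ≠ ⊥)
    (hb : b ≠ ⊤) (h : a + t ≤ b) : a.toReal + t ≤ b.toReal := by
  rw [← EReal.coe_toReal ha ha', ← EReal.coe_add] at h
  have h' := EReal.toReal_le_toReal h (EReal.coe_ne_bot _) hb
  rwa [EReal.toReal_coe] at h'

section Jensen

variable {V : Type*} [AddCommGroup V] [Module ℝ V] {p : V → EReal}

lemma convexOn_toReal_of_ereal
    (hconv : ∀ (a b : V) (t : ℝ), 0 ≤ t → t ≤ 1 →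
      p (t • a + (1 - t) • b) ≤ ((t : ℝ) : EReal) * p a + (((1 - t : ℝ)) : EReal) * p b)
    (hbot : ∀ v, p v ≠ ⊥) :
    ConvexOn ℝ {v | p v ≠ ⊤} (fun v => (p v).toReal) := by
  have key : ∀ a ∈ {v | p v ≠ ⊤}, ∀ b ∈ {v | p v ≠ ⊤}, ∀ t : ℝ, 0 ≤ t → t ≤ 1 →
      p (t • a + (1 - t) • b) ≤ ((t * (p a).toReal + (1 - t) * (p b).toReal : ℝ) : EReal) := by
    intro a ha b hb t ht₀ ht₁
    refine (hconv a b t ht₀ ht₁).trans_eq ?_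
    rw [← EReal.coe_toReal ha (hbot a), ← EReal.coe_toReal hb (hbot b)]
    norm_cast
  refine ⟨fun a ha b hb s t hs ht hst => ?_, fun a ha b hb s t hs ht hst => ?_⟩
  · obtain rfl : t = 1 - s := by linarith
    exact ne_top_of_le_ne_top (EReal.coe_ne_top _) (key a ha b hb s hs (by linarith))
  · obtain rfl : t = 1 - s := by linarith
    have h := EReal.toReal_le_toReal (key a ha b hb s hs (by linarith)) (hbot _)
      (EReal.coe_ne_top _)
    rwa [EReal.toReal_coe] at h

lemma ereal_jensen_average
    (hconv : ∀ (a b : V) (t : ℝ), 0 ≤ t → t ≤ 1 →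
      p (t • a + (1 - t) • b) ≤ ((t : ℝ) : EReal) * p a + (((1 - t : ℝ)) : EReal) * p b)
    (hbot : ∀ v, p v ≠ ⊥) {ι : Type*} {s : Finset ι} {n : ℕ} (hs : #s = n) (hn : n ≠ 0)
    {v : ι → V} (hv : ∀ i ∈ s, p (v i) ≠ ⊤) :
    p ((n : ℝ)⁻¹ • ∑ i ∈ s, v i) ≤ (((n : ℝ)⁻¹ * ∑ i ∈ s, (p (v i)).toReal : ℝ) : EReal) := by
  have hconvex := convexOn_toReal_of_ereal hconv hbot
  have hw₀ : ∀ i ∈ s, (0 : ℝ) ≤ (n : ℝ)⁻¹ := fun _ _ => by positivity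
  have hw₁ : ∑ _i ∈ s, (n : ℝ)⁻¹ = 1 := by
    rw [sum_const, hs, nsmul_eq_mul, mul_inv_cancel₀ (Nat.cast_ne_zero.2 hn)]
  have hmem : p ((n : ℝ)⁻¹ • ∑ i ∈ s, v i) ≠ ⊤ := by
    rw [smul_sum]; exact hconvex.1.sum_mem hw₀ hw₁ hv
  have hle := hconvex.map_sum_le hw₀ hw₁ hv
  simp only [← smul_sum, smul_eq_mul, ← mul_sum] at hle
  rw [← EReal.coe_toReal hmem (hbot _)]
  exact EReal.coe_le_coe_iff.2 hle

end Jensen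

lemma inner_average_sub {ι V : Type*} [NormedAddCommGroup V] [InnerProductSpace ℝ V]
    {s : Finset ι} {n : ℕ} (hs : #s = n) (hn : n ≠ 0) (v : ι → V) (x u : V) :
    ⟪(n : ℝ)⁻¹ • ∑ i ∈ s, v i - x, u⟫ = (n : ℝ)⁻¹ * ∑ i ∈ s, ⟪v i - x, u⟫ := by
  have hn' : (n : ℝ) ≠ 0 := Nat.cast_ne_zero.2 hn
  simp only [inner_sub_left, real_inner_smul_left, sum_sub_distrib, ← sum_inner, sum_const, hs]
  rw [← Nat.cast_smul_eq_nsmul ℝ, real_inner_smul_left]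
  field_simp

lemma sum_Icc_le_sub_of_le_sub {a Ψ : ℕ → ℝ} (h : ∀ j, a (j + 1) ≤ Ψ j - Ψ (j + 1)) (k : ℕ) :
    ∑ i ∈ Icc 1 k, a i ≤ Ψ 0 - Ψ k := by
  induction k with
  | zero => simp
  | succ k ih => rw [sum_Icc_succ_top (by omega)]; linarith [h k]

lemma ergodic_average_le {ι X Y Z : Type*}
    [NormedAddCommGroup X] [InnerProductSpace ℝ X]
    [NormedAddCommGroup Y] [InnerProductSpace ℝ Y]
    [NormedAddCommGroup Z] [InnerProductSpace ℝ Z] {p : X → EReal} {q : Y → EReal}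
    (hp_convex : ∀ (x x' : X) (t : ℝ), 0 ≤ t → t ≤ 1 →
      p (t • x + (1 - t) • x') ≤ ((t : ℝ) : EReal) * p x + (((1 - t : ℝ)) : EReal) * p x')
    (hp_nebot : ∀ x, p x ≠ ⊥)
    (hq_convex : ∀ (y y' : Y) (t : ℝ), 0 ≤ t → t ≤ 1 →
      q (t • y + (1 - t) • y') ≤ ((t : ℝ) : EReal) * q y + (((1 - t : ℝ)) : EReal) * q y')
    (hq_nebot : ∀ y, q y ≠ ⊥) {s : Finset ι} {n : ℕ} (hs : #s = n) (hn : n ≠ 0)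
    {xs : ι → X} {ys : ι → Y} {zs : ι → Z} (hxs : ∀ i ∈ s, p (xs i) ≠ ⊤)
    (hys : ∀ i ∈ s, q (ys i) ≠ ⊤) {x : X} {y : Y} {z : Z} {u : X} {v : Y} {w : Z} {C : ℝ}
    (h : p x ≠ ⊤ → q y ≠ ⊤ → ∑ i ∈ s, ((p (xs i)).toReal + (q (ys i)).toReal
      - ((p x).toReal + (q y).toReal) + (⟪xs i - x, u⟫ + ⟪ys i - y, v⟫ + ⟪zs i - z, w⟫)) ≤ C) :
    (p ((n : ℝ)⁻¹ • ∑ i ∈ s, xs i) + q ((n : ℝ)⁻¹ • ∑ i ∈ s, ys i)) - (p x + q y)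
      + ((⟪(n : ℝ)⁻¹ • ∑ i ∈ s, xs i - x, u⟫ + ⟪(n : ℝ)⁻¹ • ∑ i ∈ s, ys i - y, v⟫
        + ⟪(n : ℝ)⁻¹ • ∑ i ∈ s, zs i - z, w⟫ : ℝ) : EReal)
      ≤ ((C / n : ℝ) : EReal) := by
  obtain hx | hx := eq_or_ne (p x) ⊤
  · simp [hx, EReal.top_add_of_ne_bot (hq_nebot y)]
  obtain hy | hy := eq_or_ne (q y) ⊤
  · simp [hy, EReal.add_top_of_ne_bot (hp_nebot x)]
  have hn' : (0 : ℝ) < n := Nat.cast_pos.2 (Nat.pos_of_ne_zero hn)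
  have hJx := ereal_jensen_average hp_convex hp_nebot hs hn hxs
  have hJy := ereal_jensen_average hq_convex hq_nebot hs hn hys
  rw [inner_average_sub hs hn, inner_average_sub hs hn, inner_average_sub hs hn,
    ← EReal.coe_toReal hx (hp_nebot x), ← EReal.coe_toReal hy (hq_nebot y)]
  refine le_trans (add_le_add_left (EReal.sub_le_sub (add_le_add hJx hJy) le_rfl) _) ?_
  norm_cast
  rw [le_div_iff₀ hn']
  refine Eq.trans_le ?_ (h hx hy)
  simp only [sum_add_distrib, sum_sub_distrib, sum_const, hs, nsmul_eq_mul]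
  field_simp

lemma admm_alpha_bounds {τ α : ℝ} (hτ : 0 < τ) (hα : τ / min (1 + τ) (1 + τ⁻¹) < α)
    (hα₁ : α ≤ 1) : 0 ≤ α ∧ τ ≤ α * (1 + min τ τ⁻¹) ∧ α * min τ τ⁻¹ ≤ 1 := by
  have hm₀ : 0 < min τ τ⁻¹ := lt_min hτ (inv_pos.2 hτ)
  have hm₁ : min τ τ⁻¹ ≤ 1 := by
    rcases le_total τ 1 with h | h
    · exact min_le_of_left_le h
    · exact min_le_of_right_le (inv_le_one_of_one_le₀ h)
  rw [min_add_add_left, div_lt_iff₀ (by linarith)] at hα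
  exact ⟨by nlinarith, hα.le, mul_le_one₀ hα₁ hm₀.le hm₁⟩

section Lyapunov

variable {X Y Z : Type*}
  [NormedAddCommGroup X] [InnerProductSpace ℝ X]
  [NormedAddCommGroup Y] [InnerProductSpace ℝ Y]
  [NormedAddCommGroup Z] [InnerProductSpace ℝ Z]

/-- `φ_k(x, y, z) + (1 - α min(τ, τ⁻¹)) σ ‖r^k‖² + α ξ_k` at the iterate `(xk, yk, zk)`, where
`ykprev` is the previous `y`-iterate entering `ξ_k`. -/
noncomputable def admmLyapunov (Astar : X →ₗ[ℝ] Z) (Bstar : Y →ₗ[ℝ] Z) (c : Z) (σ τ α : ℝ)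
    (Sfh S : X →ₗ[ℝ] X) (Sgh T : Y →ₗ[ℝ] Y) (x : X) (y : Y) (z : Z)
    (xk : X) (yk : Y) (zk : Z) (ykprev : Y) : ℝ :=
  (τ * σ)⁻¹ * ‖zk - z‖ ^ 2 + ⟪xk - x, Sfh (xk - x) + S (xk - x)⟫
    + ⟪yk - y, Sgh (yk - y) + T (yk - y)⟫ + σ * ‖Astar x + Bstar yk - c‖ ^ 2
    + (1 - α * min τ τ⁻¹) * σ * ‖Astar xk + Bstar yk - c‖ ^ 2
    + α * ⟪yk - ykprev, Sgh (yk - ykprev) + T (yk - ykprev)⟫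

lemma admmLyapunov_nonneg {Astar : X →ₗ[ℝ] Z} {Bstar : Y →ₗ[ℝ] Z} {c : Z} {σ τ α : ℝ}
    {Sfh S : X →ₗ[ℝ] X} {Sgh T : Y →ₗ[ℝ] Y} (hσ : 0 < σ) (hτ : 0 < τ) (hα₀ : 0 ≤ α)
    (hαm : α * min τ τ⁻¹ ≤ 1) (hSfhS : ∀ u, 0 ≤ ⟪u, Sfh u + S u⟫)
    (hSghT : ∀ u, 0 ≤ ⟪u, Sgh u + T u⟫) (x : X) (y : Y) (z : Z) (xk : X) (yk : Y) (zk : Z)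
    (ykprev : Y) : 0 ≤ admmLyapunov Astar Bstar c σ τ α Sfh S Sgh T x y z xk yk zk ykprev := by
  have hz : 0 ≤ (τ * σ)⁻¹ * ‖zk - z‖ ^ 2 := by positivity
  have hres : 0 ≤ σ * ‖Astar x + Bstar yk - c‖ ^ 2 := by positivity
  have hresk : 0 ≤ (1 - α * min τ τ⁻¹) * σ * ‖Astar xk + Bstar yk - c‖ ^ 2 :=
    mul_nonneg (mul_nonneg (sub_nonneg.2 hαm) hσ.le) (sq_nonneg _)
  have hξ := mul_nonneg hα₀ (hSghT (yk - ykprev))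
  unfold admmLyapunov
  linarith [hSfhS (xk - x), hSghT (yk - y)]

end Lyapunov

section ADMM

variable {X Y Z : Type*}
  [NormedAddCommGroup X] [InnerProductSpace ℝ X]
  [NormedAddCommGroup Y] [InnerProductSpace ℝ Y]
  [NormedAddCommGroup Z] [InnerProductSpace ℝ Z]
  {A : Z →ₗ[ℝ] X} {Astar : X →ₗ[ℝ] Z} {B : Z →ₗ[ℝ] Y} {Bstar : Y →ₗ[ℝ] Z} {c : Z} {σ τ : ℝ}
  {f : X → ℝ} {g : Y → ℝ} {f' : X → X} {g' : Y → Y}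
  {Sf Sfh S : X →ₗ[ℝ] X} {Sg Sgh T : Y →ₗ[ℝ] Y}

lemma admm_gap_le_phi_sub_add
    (hA : ∀ (z : Z) (x : X), ⟪A z, x⟫ = ⟪z, Astar x⟫)
    (hB : ∀ (z : Z) (y : Y), ⟪B z, y⟫ = ⟪z, Bstar y⟫) (hτσ : τ * σ ≠ 0)
    (hSfh : Sfh.IsSymmetric) (hS : S.IsSymmetric) (hSgh : Sgh.IsSymmetric) (hT : T.IsSymmetric)
    (hf_low : ∀ x x' : X, f x' + ⟪x - x', f' x'⟫ + (1/2) * ⟪x - x', Sf (x - x')⟫ ≤ f x)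
    (hf_up : ∀ x x' : X, f x ≤ f x' + ⟪x - x', f' x'⟫ + (1/2) * ⟪x - x', Sfh (x - x')⟫)
    (hg_low : ∀ y y' : Y, g y' + ⟪y - y', g' y'⟫ + (1/2) * ⟪y - y', Sg (y - y')⟫ ≤ g y)
    (hg_up : ∀ y y' : Y, g y ≤ g y' + ⟪y - y', g' y'⟫ + (1/2) * ⟪y - y', Sgh (y - y')⟫)
    {x₀ x₁ x : X} {y₀ y₁ y : Y} {z₀ z₁ z : Z} {P₁ Q₁ P Q : ℝ}
    (hx : P₁ + ⟪x₁ - x, f' x₀ + A (z₀ + σ • (Astar x₁ + Bstar y₀ - c))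
      + (Sfh (x₁ - x₀) + S (x₁ - x₀))⟫ ≤ P)
    (hy : Q₁ + ⟪y₁ - y, g' y₀ + B (z₀ + σ • (Astar x₁ + Bstar y₁ - c))
      + (Sgh (y₁ - y₀) + T (y₁ - y₀))⟫ ≤ Q)
    (hz : z₁ = z₀ + (τ * σ) • (Astar x₁ + Bstar y₁ - c)) :
    P₁ + Q₁ - (P + Q) + (⟪x₁ - x, f' x + A z⟫ + ⟪y₁ - y, g' y + B z⟫
      + ⟪z₀ + σ • (Astar x₁ + Bstar y₁ - c) - z, -(Astar x + Bstar y - c)⟫)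
    ≤ ((τ * σ)⁻¹ * (‖z₀ - z‖ ^ 2 - ‖z₁ - z‖ ^ 2)
        + (⟪x₀ - x, Sfh (x₀ - x)⟫ + ⟪x₀ - x, S (x₀ - x)⟫
          - ⟪x₁ - x, Sfh (x₁ - x)⟫ - ⟪x₁ - x, S (x₁ - x)⟫)
        + (⟪y₀ - y, Sgh (y₀ - y)⟫ + ⟪y₀ - y, T (y₀ - y)⟫
          - ⟪y₁ - y, Sgh (y₁ - y)⟫ - ⟪y₁ - y, T (y₁ - y)⟫)
        + σ * (‖Astar x + Bstar y₀ - c‖ ^ 2 - ‖Astar x + Bstar y₁ - c‖ ^ 2)) / 2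
      - (⟪x₁ - x₀, S (x₁ - x₀)⟫ + ⟪x₁ - x, Sf (x₁ - x)⟫ + ⟪x₀ - x, Sf (x₀ - x)⟫
        + ⟪y₁ - y₀, T (y₁ - y₀)⟫ + ⟪y₁ - y, Sg (y₁ - y)⟫ + ⟪y₀ - y, Sg (y₀ - y)⟫) / 2
      - (1 - τ / 2) * σ * ‖Astar x₁ + Bstar y₁ - c‖ ^ 2
      + σ * ⟪Astar x₁ + Bstar y₁ - c, Bstar (y₁ - y₀)⟫ - σ / 2 * ‖Bstar (y₁ - y₀)‖ ^ 2 := by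
  set r := Astar x₁ + Bstar y₁ - c with hr
  set zt := z₀ + σ • r with hzt
  have hA' : ∀ w u, ⟪u, A w⟫ = ⟪w, Astar u⟫ := fun w u => by rw [real_inner_comm, hA]
  have hB' : ∀ w u, ⟪u, B w⟫ = ⟪w, Bstar u⟫ := fun w u => by rw [real_inner_comm, hB]
  have hxarg : z₀ + σ • (Astar x₁ + Bstar y₀ - c) = zt - σ • Bstar (y₁ - y₀) := by
    rw [hzt, hr, map_sub]; module
  rw [hxarg, inner_add_right, inner_add_right, inner_add_right, hA', inner_sub_left zt,
    real_inner_smul_left] at hx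
  rw [inner_add_right, inner_add_right, inner_add_right, hB'] at hy
  have hlin : ⟪x₁ - x, A z⟫ + ⟪y₁ - y, B z⟫ + ⟪zt - z, -(Astar x + Bstar y - c)⟫
      = ⟪zt, Astar (x₁ - x)⟫ + ⟪zt, Bstar (y₁ - y)⟫ + ⟪z - zt, r⟫ := by
    have hsplit : r = Astar (x₁ - x) + Bstar (y₁ - y) + (Astar x + Bstar y - c) := by
      rw [hr, map_sub, map_sub]; abel
    rw [hA', hB', hsplit, inner_add_right, inner_add_right, inner_neg_right, ← inner_neg_left,
      neg_sub, inner_sub_left, inner_sub_left, inner_sub_left]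
    ring
  have hcross : σ * ⟪Bstar (y₁ - y₀), Astar (x₁ - x)⟫ = σ * (⟪r, Bstar (y₁ - y₀)⟫
      + (‖Astar x + Bstar y₀ - c‖ ^ 2 - ‖Astar x + Bstar y₁ - c‖ ^ 2
        - ‖Bstar (y₁ - y₀)‖ ^ 2) / 2) := by
    have hAx : Astar (x₁ - x) = r - (Astar x + Bstar y₁ - c) := by rw [hr, map_sub]; abel
    have hBy : Bstar (y₁ - y₀) = (Astar x + Bstar y₁ - c) - (Astar x + Bstar y₀ - c) := by
      rw [map_sub]; abel
    rw [real_inner_comm, hAx, hBy, inner_sub_sub_eq]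
  have hmult : ⟪z - zt, r⟫ = (τ * σ)⁻¹ * (‖z₀ - z‖ ^ 2 - ‖z₁ - z‖ ^ 2) / 2
      + (τ / 2 - 1) * σ * ‖r‖ ^ 2 := inner_sub_smul_eq_of_eq_add_smul hτσ hz z
  rw [inner_add_right, inner_add_right]
  linarith [hlin, hcross, hmult, inner_sub_grad_le_of_quadratic_bounds hf_low hf_up x₁ x₀ x,
    inner_sub_grad_le_of_quadratic_bounds hg_low hg_up y₁ y₀ y,
    hSfh.inner_sub_map_sub_s15 x₁ x₀ x, hS.inner_sub_map_sub_s15 x₁ x₀ x,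
    hSgh.inner_sub_map_sub_s15 y₁ y₀ y, hT.inner_sub_map_sub_s15 y₁ y₀ y]

lemma admm_residual_inner_le
    (hB : ∀ (z : Z) (y : Y), ⟪B z, y⟫ = ⟪z, Bstar y⟫)
    (hSgh : Sgh.IsSymmetric) (hT : T.IsSymmetric)
    (hhalf : ∀ u : Y, 0 ≤ ⟪u, (1/2 : ℝ) • Sgh u + T u⟫) {W : Y →ₗ[ℝ] Y} (hW : W.IsSymmetric)
    (hW₀ : ∀ u, 0 ≤ ⟪u, W u⟫) (hWle : ∀ u, 0 ≤ ⟪u, Sgh u - W u⟫)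
    {x₁ x₂ : X} {y₀ y₁ y₂ : Y} {z₀ z₁ : Z} {Q₁ Q₂ : ℝ}
    (hy₁ : Q₁ + ⟪y₁ - y₂, g' y₀ + B (z₀ + σ • (Astar x₁ + Bstar y₁ - c))
      + (Sgh (y₁ - y₀) + T (y₁ - y₀))⟫ ≤ Q₂)
    (hy₂ : Q₂ + ⟪y₂ - y₁, g' y₁ + B (z₁ + σ • (Astar x₂ + Bstar y₂ - c))
      + (Sgh (y₂ - y₁) + T (y₂ - y₁))⟫ ≤ Q₁)
    (hz : z₁ = z₀ + (τ * σ) • (Astar x₁ + Bstar y₁ - c))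
    (hgW : g' y₁ - g' y₀ = W (y₁ - y₀)) :
    σ * ⟪Astar x₂ + Bstar y₂ - c, Bstar (y₂ - y₁)⟫
      ≤ (1 - τ) * σ * ⟪Astar x₁ + Bstar y₁ - c, Bstar (y₂ - y₁)⟫
        - (⟪y₂ - y₁, Sgh (y₂ - y₁)⟫ + ⟪y₂ - y₁, T (y₂ - y₁)⟫) / 2
        + (⟪y₁ - y₀, Sgh (y₁ - y₀)⟫ + ⟪y₁ - y₀, T (y₁ - y₀)⟫) / 2 := by
  set r₁ := Astar x₁ + Bstar y₁ - c
  set r₂ := Astar x₂ + Bstar y₂ - c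
  have hB' : ∀ w u, ⟪u, B w⟫ = ⟪w, Bstar u⟫ := fun w u => by rw [real_inner_comm, hB]
  -- adding the two optimality conditions eliminates `Q₁, Q₂` (monotonicity of `∂q`)
  rw [← neg_sub y₂ y₁, inner_neg_left] at hy₁
  simp only [inner_add_right, hB'] at hy₁ hy₂
  have hmult : ⟪z₁ + σ • r₂, Bstar (y₂ - y₁)⟫ - ⟪z₀ + σ • r₁, Bstar (y₂ - y₁)⟫
      = σ * ⟪r₂, Bstar (y₂ - y₁)⟫ - (1 - τ) * σ * ⟪r₁, Bstar (y₂ - y₁)⟫ := by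
    rw [← inner_sub_left, hz, show z₀ + (τ * σ) • r₁ + σ • r₂ - (z₀ + σ • r₁)
      = σ • r₂ - ((1 - τ) * σ) • r₁ by module, inner_sub_left, real_inner_smul_left,
      real_inner_smul_left]
  have hgrad : ⟪y₂ - y₁, g' y₁⟫ - ⟪y₂ - y₁, g' y₀⟫ = ⟪y₂ - y₁, W (y₁ - y₀)⟫ := by
    rw [← inner_sub_right, hgW]
  have hN := hSgh.add hT
  have hsandwich := (hN.sub hW).inner_map_le_of_abs_le hN
    (fun u => by
      simp only [LinearMap.sub_apply, inner_sub_right]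
      linarith [hW₀ u])
    (fun u => by
      have h₁ := hhalf u
      have h₂ := hWle u
      simp only [LinearMap.add_apply, LinearMap.sub_apply, inner_add_right, inner_sub_right,
        real_inner_smul_right] at h₁ h₂ ⊢
      linarith)
    (y₂ - y₁) (y₁ - y₀)
  simp only [LinearMap.add_apply, LinearMap.sub_apply, inner_add_right, inner_sub_right]
    at hsandwich
  linarith

lemma admm_gap_le_lyapunov_sub
    (hA : ∀ (z : Z) (x : X), ⟪A z, x⟫ = ⟪z, Astar x⟫)
    (hB : ∀ (z : Z) (y : Y), ⟪B z, y⟫ = ⟪z, Bstar y⟫) (hσ : 0 < σ) (hτ : 0 < τ)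
    {α : ℝ} (hα₀ : 0 ≤ α) (hα₁ : α ≤ 1) (hτα : τ ≤ α * (1 + min τ τ⁻¹))
    (hSf : Sf.IsSymmetric) (hSf₀ : ∀ u, 0 ≤ ⟪u, Sf u⟫) (hSfh : Sfh.IsSymmetric)
    (hS : S.IsSymmetric) (hSg : Sg.IsSymmetric) (hSg₀ : ∀ u, 0 ≤ ⟪u, Sg u⟫)
    (hSgh : Sgh.IsSymmetric) (hT : T.IsSymmetric)
    (hf_low : ∀ x x' : X, f x' + ⟪x - x', f' x'⟫ + (1/2) * ⟪x - x', Sf (x - x')⟫ ≤ f x)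
    (hf_up : ∀ x x' : X, f x ≤ f x' + ⟪x - x', f' x'⟫ + (1/2) * ⟪x - x', Sfh (x - x')⟫)
    (hg_low : ∀ y y' : Y, g y' + ⟪y - y', g' y'⟫ + (1/2) * ⟪y - y', Sg (y - y')⟫ ≤ g y)
    (hg_up : ∀ y y' : Y, g y ≤ g y' + ⟪y - y', g' y'⟫ + (1/2) * ⟪y - y', Sgh (y - y')⟫)
    (hHf : ∀ u : X, 0 ≤ ⟪u, (1/2 : ℝ) • Sf u + S u + ((1/2) * (1 - α) * σ) • A (Astar u)⟫)
    (hhalf : ∀ u : Y, 0 ≤ ⟪u, (1/2 : ℝ) • Sgh u + T u⟫)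
    (hMg : ∀ u : Y,
      0 ≤ ⟪u, (1/2 : ℝ) • Sg u + T u + (min τ (1 + τ - τ ^ 2) * α * σ) • B (Bstar u)⟫)
    {W : Y →ₗ[ℝ] Y} (hW : W.IsSymmetric) (hW₀ : ∀ u, 0 ≤ ⟪u, W u⟫)
    (hWle : ∀ u, 0 ≤ ⟪u, Sgh u - W u⟫)
    {x₁ x₂ x : X} {y₀ y₁ y₂ y : Y} {z₀ z₁ z₂ z : Z} {P₂ Q₁ Q₂ P Q : ℝ}
    (hx : P₂ + ⟪x₂ - x, f' x₁ + A (z₁ + σ • (Astar x₂ + Bstar y₁ - c))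
      + (Sfh (x₂ - x₁) + S (x₂ - x₁))⟫ ≤ P)
    (hy : Q₂ + ⟪y₂ - y, g' y₁ + B (z₁ + σ • (Astar x₂ + Bstar y₂ - c))
      + (Sgh (y₂ - y₁) + T (y₂ - y₁))⟫ ≤ Q)
    (hy₂ : Q₂ + ⟪y₂ - y₁, g' y₁ + B (z₁ + σ • (Astar x₂ + Bstar y₂ - c))
      + (Sgh (y₂ - y₁) + T (y₂ - y₁))⟫ ≤ Q₁)
    (hy₁ : Q₁ + ⟪y₁ - y₂, g' y₀ + B (z₀ + σ • (Astar x₁ + Bstar y₁ - c))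
      + (Sgh (y₁ - y₀) + T (y₁ - y₀))⟫ ≤ Q₂)
    (hz₁ : z₁ = z₀ + (τ * σ) • (Astar x₁ + Bstar y₁ - c))
    (hz₂ : z₂ = z₁ + (τ * σ) • (Astar x₂ + Bstar y₂ - c))
    (hgW : g' y₁ - g' y₀ = W (y₁ - y₀)) :
    P₂ + Q₂ - (P + Q) + (⟪x₂ - x, f' x + A z⟫ + ⟪y₂ - y, g' y + B z⟫
      + ⟪z₁ + σ • (Astar x₂ + Bstar y₂ - c) - z, -(Astar x + Bstar y - c)⟫)
    ≤ (admmLyapunov Astar Bstar c σ τ α Sfh S Sgh T x y z x₁ y₁ z₁ y₀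
      - admmLyapunov Astar Bstar c σ τ α Sfh S Sgh T x y z x₂ y₂ z₂ y₁) / 2 := by
  have hbasic := admm_gap_le_phi_sub_add (z := z) hA hB (mul_pos hτ hσ).ne' hSfh hS hSgh hT hf_low hf_up
    hg_low hg_up hx hy hz₂
  have hres := mul_le_mul_of_nonneg_left
    (admm_residual_inner_le hB hSgh hT hhalf hW hW₀ hWle hy₁ hy₂ hz₁ hgW) hα₀
  have hAA : ∀ u, ⟪u, A (Astar u)⟫ = ‖Astar u‖ ^ 2 := fun u => by
    rw [real_inner_comm, hA, real_inner_self_eq_norm_sq]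
  have hBB : ∀ u, ⟪u, B (Bstar u)⟫ = ‖Bstar u‖ ^ 2 := fun u => by
    rw [real_inner_comm, hB, real_inner_self_eq_norm_sq]
  have hHfΔ := hHf (x₂ - x₁)
  have hMgΔ := hMg (y₂ - y₁)
  simp only [inner_add_right, real_inner_smul_right, hAA, hBB] at hHfΔ hMgΔ
  have hAΔ : Astar (x₂ - x₁)
      = (Astar x₂ + Bstar y₂ - c) - Bstar (y₂ - y₁) - (Astar x₁ + Bstar y₁ - c) := by
    simp only [map_sub]; abel
  have hsplit := mul_le_mul_of_nonneg_left (inner_add_norm_sub_sub_sq_le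
    (Astar x₂ + Bstar y₂ - c) (Bstar (y₂ - y₁)) (Astar x₁ + Bstar y₁ - c))
    (mul_nonneg (sub_nonneg.2 hα₁) hσ.le)
  rw [← hAΔ] at hsplit
  have hyoung := mul_le_mul_of_nonneg_left
    (one_sub_mul_inner_le hτ (Astar x₁ + Bstar y₁ - c) (Bstar (y₂ - y₁))) (mul_nonneg hα₀ hσ.le)
  have hdrop : 0 ≤ (α * (1 + min τ τ⁻¹) - τ) * σ * ‖Astar x₂ + Bstar y₂ - c‖ ^ 2 :=
    mul_nonneg (mul_nonneg (sub_nonneg.2 hτα) hσ.le) (sq_nonneg _)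
  have hSfΔ := hSf.inner_map_sub_le hSf₀ x₂ x₁ x
  have hSgΔ := hSg.inner_map_sub_le hSg₀ y₂ y₁ y
  simp only [admmLyapunov, inner_add_right] at hbasic ⊢
  linarith

end ADMM

set_option maxHeartbeats 1000000 in
theorem stmt15_general
    {X Y Z : Type*}
    [NormedAddCommGroup X] [InnerProductSpace ℝ X]
    [NormedAddCommGroup Y] [InnerProductSpace ℝ Y]
    [NormedAddCommGroup Z] [InnerProductSpace ℝ Z]
    (A : Z →ₗ[ℝ] X) (Astar : X →ₗ[ℝ] Z)
    (B : Z →ₗ[ℝ] Y) (Bstar : Y →ₗ[ℝ] Z)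
    (hA : ∀ (z : Z) (x : X), ⟪A z, x⟫ = ⟪z, Astar x⟫)
    (hB : ∀ (z : Z) (y : Y), ⟪B z, y⟫ = ⟪z, Bstar y⟫)
    (c : Z) (σ τ : ℝ) (hσ : 0 < σ) (hτ : 0 < τ)
    (p : X → EReal) (q : Y → EReal)
    (hp_nebot : ∀ x, p x ≠ ⊥)
    (hq_nebot : ∀ y, q y ≠ ⊥)
    (hp_convex : ∀ (x x' : X) (t : ℝ), 0 ≤ t → t ≤ 1 →
      p (t • x + (1 - t) • x') ≤ ((t : ℝ) : EReal) * p x + (((1 - t : ℝ)) : EReal) * p x')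
    (hq_convex : ∀ (y y' : Y) (t : ℝ), 0 ≤ t → t ≤ 1 →
      q (t • y + (1 - t) • y') ≤ ((t : ℝ) : EReal) * q y + (((1 - t : ℝ)) : EReal) * q y')
    (f : X → ℝ) (g : Y → ℝ) (f' : X → X) (g' : Y → Y)
    (Sf Sfh S : X →ₗ[ℝ] X) (Sg Sgh T : Y →ₗ[ℝ] Y)
    (hSf_sym : ∀ u v : X, ⟪Sf u, v⟫ = ⟪u, Sf v⟫) (hSf_psd : ∀ u : X, 0 ≤ ⟪u, Sf u⟫)
    (hSfh_sym : ∀ u v : X, ⟪Sfh u, v⟫ = ⟪u, Sfh v⟫)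
    (hS_sym : ∀ u v : X, ⟪S u, v⟫ = ⟪u, S v⟫)
    (hSg_sym : ∀ u v : Y, ⟪Sg u, v⟫ = ⟪u, Sg v⟫) (hSg_psd : ∀ u : Y, 0 ≤ ⟪u, Sg u⟫)
    (hSgh_sym : ∀ u v : Y, ⟪Sgh u, v⟫ = ⟪u, Sgh v⟫) (hSgh_psd : ∀ u : Y, 0 ≤ ⟪u, Sgh u⟫)
    (hT_sym : ∀ u v : Y, ⟪T u, v⟫ = ⟪u, T v⟫)
    (hf_low : ∀ x x' : X, f x' + ⟪x - x', f' x'⟫ + (1/2) * ⟪x - x', Sf (x - x')⟫ ≤ f x)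
    (hf_up : ∀ x x' : X, f x ≤ f x' + ⟪x - x', f' x'⟫ + (1/2) * ⟪x - x', Sfh (x - x')⟫)
    (hg_low : ∀ y y' : Y, g y' + ⟪y - y', g' y'⟫ + (1/2) * ⟪y - y', Sg (y - y')⟫ ≤ g y)
    (hg_up : ∀ y y' : Y, g y ≤ g y' + ⟪y - y', g' y'⟫ + (1/2) * ⟪y - y', Sgh (y - y')⟫)
    (xk : ℕ → X) (yk : ℕ → Y) (zk : ℕ → Z)
    (hxdom : ∀ k, p (xk k) ≠ ⊤) (hydom : ∀ k, q (yk k) ≠ ⊤)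
    (hiter_x : ∀ (k : ℕ) (x : X),
      p (xk (k + 1)) + ((⟪xk (k + 1) - x, f' (xk k)
        + A (zk k + σ • (Astar (xk (k + 1)) + Bstar (yk k) - c))
        + (Sfh (xk (k + 1) - xk k) + S (xk (k + 1) - xk k))⟫ : ℝ) : EReal) ≤ p x)
    (hiter_y : ∀ (k : ℕ) (y : Y),
      q (yk (k + 1)) + ((⟪yk (k + 1) - y, g' (yk k)
        + B (zk k + σ • (Astar (xk (k + 1)) + Bstar (yk (k + 1)) - c))
        + (Sgh (yk (k + 1) - yk k) + T (yk (k + 1) - yk k))⟫ : ℝ) : EReal) ≤ q y)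
    (hiter_z : ∀ k : ℕ, zk (k + 1) = zk k + (τ * σ) • (Astar (xk (k + 1)) + Bstar (yk (k + 1)) - c))

    (hMV : ∀ k : ℕ, 1 ≤ k → ∃ W : Y →ₗ[ℝ] Y,
      (∀ u v : Y, ⟪W u, v⟫ = ⟪u, W v⟫) ∧ (∀ u : Y, 0 ≤ ⟪u, W u⟫) ∧
      (∀ u : Y, 0 ≤ ⟪u, Sgh u - W u⟫) ∧
      g' (yk k) - g' (yk (k - 1)) = W (yk k - yk (k - 1)))

    (α : ℝ) (hα1 : τ / min (1 + τ) (1 + τ⁻¹) < α) (hα2 : α ≤ 1)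

    (hfsS : ∀ u : X, 0 ≤ ⟪u, Sfh u + S u⟫)
    (hHf : ∀ u : X, 0 ≤ ⟪u, (1/2 : ℝ) • Sf u + S u + ((1/2) * (1 - α) * σ) • A (Astar u)⟫)
    (hhalf : ∀ u : Y, 0 ≤ ⟪u, (1/2 : ℝ) • Sgh u + T u⟫)
    (hMg : ∀ u : Y, u ≠ 0 →
      0 < ⟪u, (1/2 : ℝ) • Sg u + T u + (min τ (1 + τ - τ ^ 2) * α * σ) • B (Bstar u)⟫) :
    ∀ k : ℕ, 1 ≤ k → ∀ (x : X) (y : Y) (z : Z),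
      (p ((k : ℝ)⁻¹ • ∑ i ∈ Finset.Icc 1 k, xk (i + 1)) + q ((k : ℝ)⁻¹ • ∑ i ∈ Finset.Icc 1 k, yk (i + 1))) - (p x + q y)
        + ((⟪((k : ℝ)⁻¹ • ∑ i ∈ Finset.Icc 1 k, xk (i + 1)) - x, f' x + A z⟫ + ⟪((k : ℝ)⁻¹ • ∑ i ∈ Finset.Icc 1 k, yk (i + 1)) - y, g' y + B z⟫
            + ⟪((k : ℝ)⁻¹ • ∑ i ∈ Finset.Icc 1 k, (zk i + σ • (Astar (xk (i + 1)) + Bstar (yk (i + 1)) - c))) - z, -(Astar x + Bstar y - c)⟫ : ℝ) : EReal)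
      ≤ (((((τ * σ)⁻¹ * ‖zk 1 - z‖ ^ 2 + ⟪xk 1 - x, Sfh (xk 1 - x) + S (xk 1 - x)⟫ + ⟪yk 1 - y, Sgh (yk 1 - y) + T (yk 1 - y)⟫ + σ * ‖Astar x + Bstar (yk 1) - c‖ ^ 2) + (1 - α * min τ τ⁻¹) * σ * ‖Astar (xk 1) + Bstar (yk 1) - c‖ ^ 2 + α * ⟪yk 1 - yk 0, Sgh (yk 1 - yk 0) + T (yk 1 - yk 0)⟫) / (2 * (k : ℝ)) : ℝ) : EReal) := by
  intro k hk x y z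
  obtain ⟨hα₀, hτα, hαm⟩ := admm_alpha_bounds hτ hα1 hα2
  have hMg' : ∀ u : Y, 0 ≤ ⟪u, (1/2 : ℝ) • Sg u + T u
      + (min τ (1 + τ - τ ^ 2) * α * σ) • B (Bstar u)⟫ := fun u =>
    (eq_or_ne u 0).elim (fun h => by simp [h]) fun h => (hMg u h).le
  have hSghT : ∀ u : Y, 0 ≤ ⟪u, Sgh u + T u⟫ := fun u => by
    have := hhalf u
    simp only [inner_add_right, real_inner_smul_right] at this ⊢
    linarith [hSgh_psd u]
  set Ψ : ℕ → ℝ := fun j => admmLyapunov Astar Bstar c σ τ α Sfh S Sgh T x y z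
    (xk (j + 1)) (yk (j + 1)) (zk (j + 1)) (yk j) / 2
  have hΨ : 0 ≤ Ψ k :=
    div_nonneg (admmLyapunov_nonneg hσ hτ hα₀ hαm hfsS hSghT _ _ _ _ _ _ _) zero_le_two
  refine (ergodic_average_le hp_convex hp_nebot hq_convex hq_nebot (s := Icc 1 k) (by simp)
    (by omega) (fun i _ => hxdom (i + 1)) (fun i _ => hydom (i + 1)) (C := Ψ 0)
    fun hx hy => ?_).trans_eq ?_
  · refine (sum_Icc_le_sub_of_le_sub (Ψ := Ψ) (fun j => ?_) k).trans (by linarith)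
    obtain ⟨W, hW, hW₀, hWle, hgW⟩ := hMV (j + 1) (by omega)
    rw [Nat.add_sub_cancel] at hgW
    exact (admm_gap_le_lyapunov_sub hA hB hσ hτ hα₀ hα2 hτα hSf_sym hSf_psd hSfh_sym hS_sym
      hSg_sym hSg_psd hSgh_sym hT_sym hf_low hf_up hg_low hg_up hHf hhalf hMg' hW hW₀ hWle
      (toReal_add_le_toReal_of_add_coe_le (hxdom _) (hp_nebot _) hx (hiter_x (j + 1) x))
      (toReal_add_le_toReal_of_add_coe_le (hydom _) (hq_nebot _) hy (hiter_y (j + 1) y))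
      (toReal_add_le_toReal_of_add_coe_le (hydom _) (hq_nebot _) (hydom _)
        (hiter_y (j + 1) (yk (j + 1))))
      (toReal_add_le_toReal_of_add_coe_le (hydom _) (hq_nebot _) (hydom _)
        (hiter_y j (yk (j + 1 + 1))))
      (hiter_z j) (hiter_z (j + 1)) hgW).trans_eq (sub_div _ _ _)
  · simp only [Ψ, admmLyapunov, div_div, zero_add]

set_option maxHeartbeats 1000000 in
theorem stmt15
    {X Y Z : Type*}
    [NormedAddCommGroup X] [InnerProductSpace ℝ X] [FiniteDimensional ℝ X]
    [NormedAddCommGroup Y] [InnerProductSpace ℝ Y] [FiniteDimensional ℝ Y]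
    [NormedAddCommGroup Z] [InnerProductSpace ℝ Z] [FiniteDimensional ℝ Z]
    (A : Z →ₗ[ℝ] X) (Astar : X →ₗ[ℝ] Z)
    (B : Z →ₗ[ℝ] Y) (Bstar : Y →ₗ[ℝ] Z)
    (hA : ∀ (z : Z) (x : X), ⟪A z, x⟫ = ⟪z, Astar x⟫)
    (hB : ∀ (z : Z) (y : Y), ⟪B z, y⟫ = ⟪z, Bstar y⟫)
    (c : Z) (σ τ : ℝ) (hσ : 0 < σ) (hτ : 0 < τ)
    (p : X → EReal) (q : Y → EReal)
    (hp_proper : ∃ x, p x ≠ ⊤) (hp_nebot : ∀ x, p x ≠ ⊥)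
    (hq_proper : ∃ y, q y ≠ ⊤) (hq_nebot : ∀ y, q y ≠ ⊥)
    (hp_convex : ∀ (x x' : X) (t : ℝ), 0 ≤ t → t ≤ 1 →
      p (t • x + (1 - t) • x') ≤ ((t : ℝ) : EReal) * p x + (((1 - t : ℝ)) : EReal) * p x')
    (hq_convex : ∀ (y y' : Y) (t : ℝ), 0 ≤ t → t ≤ 1 →
      q (t • y + (1 - t) • y') ≤ ((t : ℝ) : EReal) * q y + (((1 - t : ℝ)) : EReal) * q y')
    (f : X → ℝ) (g : Y → ℝ) (f' : X → X) (g' : Y → Y)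
    (hf : ∀ x, HasGradientAt f (f' x) x) (hg : ∀ y, HasGradientAt g (g' y) y)
    (hfc : ConvexOn ℝ Set.univ f) (hgc : ConvexOn ℝ Set.univ g)
    (Sf Sfh S : X →ₗ[ℝ] X) (Sg Sgh T : Y →ₗ[ℝ] Y)
    (hSf_sym : ∀ u v : X, ⟪Sf u, v⟫ = ⟪u, Sf v⟫) (hSf_psd : ∀ u : X, 0 ≤ ⟪u, Sf u⟫)
    (hSfh_sym : ∀ u v : X, ⟪Sfh u, v⟫ = ⟪u, Sfh v⟫) (hSfh_psd : ∀ u : X, 0 ≤ ⟪u, Sfh u⟫)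
    (hSfh_ge : ∀ u : X, ⟪u, Sf u⟫ ≤ ⟪u, Sfh u⟫)
    (hS_sym : ∀ u v : X, ⟪S u, v⟫ = ⟪u, S v⟫)
    (hSg_sym : ∀ u v : Y, ⟪Sg u, v⟫ = ⟪u, Sg v⟫) (hSg_psd : ∀ u : Y, 0 ≤ ⟪u, Sg u⟫)
    (hSgh_sym : ∀ u v : Y, ⟪Sgh u, v⟫ = ⟪u, Sgh v⟫) (hSgh_psd : ∀ u : Y, 0 ≤ ⟪u, Sgh u⟫)
    (hSgh_ge : ∀ u : Y, ⟪u, Sg u⟫ ≤ ⟪u, Sgh u⟫)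
    (hT_sym : ∀ u v : Y, ⟪T u, v⟫ = ⟪u, T v⟫)
    (hf_low : ∀ x x' : X, f x' + ⟪x - x', f' x'⟫ + (1/2) * ⟪x - x', Sf (x - x')⟫ ≤ f x)
    (hf_up : ∀ x x' : X, f x ≤ f x' + ⟪x - x', f' x'⟫ + (1/2) * ⟪x - x', Sfh (x - x')⟫)
    (hg_low : ∀ y y' : Y, g y' + ⟪y - y', g' y'⟫ + (1/2) * ⟪y - y', Sg (y - y')⟫ ≤ g y)
    (hg_up : ∀ y y' : Y, g y ≤ g y' + ⟪y - y', g' y'⟫ + (1/2) * ⟪y - y', Sgh (y - y')⟫)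
    (xk : ℕ → X) (yk : ℕ → Y) (zk : ℕ → Z)
    (hxdom : ∀ k, p (xk k) ≠ ⊤) (hydom : ∀ k, q (yk k) ≠ ⊤)
    (hiter_x : ∀ (k : ℕ) (x : X),
      p (xk (k + 1)) + ((⟪xk (k + 1) - x, f' (xk k)
        + A (zk k + σ • (Astar (xk (k + 1)) + Bstar (yk k) - c))
        + (Sfh (xk (k + 1) - xk k) + S (xk (k + 1) - xk k))⟫ : ℝ) : EReal) ≤ p x)
    (hiter_y : ∀ (k : ℕ) (y : Y),
      q (yk (k + 1)) + ((⟪yk (k + 1) - y, g' (yk k)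
        + B (zk k + σ • (Astar (xk (k + 1)) + Bstar (yk (k + 1)) - c))
        + (Sgh (yk (k + 1) - yk k) + T (yk (k + 1) - yk k))⟫ : ℝ) : EReal) ≤ q y)
    (hiter_z : ∀ k : ℕ, zk (k + 1) = zk k + (τ * σ) • (Astar (xk (k + 1)) + Bstar (yk (k + 1)) - c))

    (hMV : ∀ k : ℕ, 1 ≤ k → ∃ W : Y →ₗ[ℝ] Y,
      (∀ u v : Y, ⟪W u, v⟫ = ⟪u, W v⟫) ∧ (∀ u : Y, 0 ≤ ⟪u, W u⟫) ∧
      (∀ u : Y, 0 ≤ ⟪u, Sgh u - W u⟫) ∧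
      g' (yk k) - g' (yk (k - 1)) = W (yk k - yk (k - 1)))

    (hτub : τ < (1 + Real.sqrt 5) / 2)
    (α : ℝ) (hα1 : τ / min (1 + τ) (1 + τ⁻¹) < α) (hα2 : α ≤ 1)

    (hfsS : ∀ u : X, 0 ≤ ⟪u, Sfh u + S u⟫)
    (hHf : ∀ u : X, 0 ≤ ⟪u, (1/2 : ℝ) • Sf u + S u + ((1/2) * (1 - α) * σ) • A (Astar u)⟫)
    (hhalf : ∀ u : Y, 0 ≤ ⟪u, (1/2 : ℝ) • Sgh u + T u⟫)
    (hMg : ∀ u : Y, u ≠ 0 →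
      0 < ⟪u, (1/2 : ℝ) • Sg u + T u + (min τ (1 + τ - τ ^ 2) * α * σ) • B (Bstar u)⟫) :
    ∀ k : ℕ, 1 ≤ k → ∀ (x : X) (y : Y) (z : Z),
      (p ((k : ℝ)⁻¹ • ∑ i ∈ Finset.Icc 1 k, xk (i + 1)) + q ((k : ℝ)⁻¹ • ∑ i ∈ Finset.Icc 1 k, yk (i + 1))) - (p x + q y)
        + ((⟪((k : ℝ)⁻¹ • ∑ i ∈ Finset.Icc 1 k, xk (i + 1)) - x, f' x + A z⟫ + ⟪((k : ℝ)⁻¹ • ∑ i ∈ Finset.Icc 1 k, yk (i + 1)) - y, g' y + B z⟫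
            + ⟪((k : ℝ)⁻¹ • ∑ i ∈ Finset.Icc 1 k, (zk i + σ • (Astar (xk (i + 1)) + Bstar (yk (i + 1)) - c))) - z, -(Astar x + Bstar y - c)⟫ : ℝ) : EReal)
      ≤ (((((τ * σ)⁻¹ * ‖zk 1 - z‖ ^ 2 + ⟪xk 1 - x, Sfh (xk 1 - x) + S (xk 1 - x)⟫ + ⟪yk 1 - y, Sgh (yk 1 - y) + T (yk 1 - y)⟫ + σ * ‖Astar x + Bstar (yk 1) - c‖ ^ 2) + (1 - α * min τ τ⁻¹) * σ * ‖Astar (xk 1) + Bstar (yk 1) - c‖ ^ 2 + α * ⟪yk 1 - yk 0, Sgh (yk 1 - yk 0) + T (yk 1 - yk 0)⟫) / (2 * (k : ℝ)) : ℝ) : EReal) :=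
  stmt15_general A Astar B Bstar hA hB c σ τ hσ hτ p q hp_nebot hq_nebot hp_convex hq_convex f g f'
    g' Sf Sfh S Sg Sgh T hSf_sym hSf_psd hSfh_sym hS_sym hSg_sym hSg_psd hSgh_sym hSgh_psd hT_sym
    hf_low hf_up hg_low hg_up xk yk zk hxdom hydom hiter_x hiter_y hiter_z hMV α hα1 hα2 hfsS hHf
    hhalf hMg
end
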